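/- arXiv:1910.00852 — 2 statements merged into one kernel-verified Lean document; each statement's English description precedes it below -/
import Mathlib

section
/- Let n ≥ 2 and k ≥ 4 be integers and let F be a set of vertices of the augmented k-ary n-cube AQ_{n,k} with |F| ≤ 8n−11. Then AQ_{n,k} − F has a connected component C with |V(C)| ≥ k^n − |F| − 1. -/
open SimpleGraph

/-- The augmented `k`-ary `n`-cube.  Vertices are `n`-tuples over `ZMod k`;
the `Fin n` index `j` corresponds to the coordinate `a_{j+1}` of the paper. -/
def AQ (n k : ℕ) : SimpleGraph (Fin n → ZMod k) where
  Adj u v := u ≠ v ∧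
    ((∃ i : Fin n, (v i = u i + 1 ∨ v i = u i - 1) ∧ ∀ j, j ≠ i → v j = u j) ∨
     (∃ i : Fin n, 1 ≤ i.val ∧
       ((∀ j, j ≤ i → v j = u j + 1) ∨ (∀ j, j ≤ i → v j = u j - 1)) ∧
       (∀ j, i < j → v j = u j)))
  symm := by
    constructor
    rintro u v ⟨hne, h⟩
    refine ⟨hne.symm, ?_⟩
    rcases h with ⟨i, hi, hj⟩ | ⟨i, hi1, hpm, hj⟩
    · left
      refine ⟨i, ?_, fun j hj' => (hj j hj').symm⟩
      rcases hi with h | h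
      · right; rw [h]; ring
      · left; rw [h]; ring
    · right
      refine ⟨i, hi1, ?_, fun j hj' => (hj j hj').symm⟩
      rcases hpm with h | h
      · right; intro j hj'; rw [h j hj']; ring
      · left; intro j hj'; rw [h j hj']; ring
  loopless := ⟨fun u h => h.1 rfl⟩

/-- Degree of a vertex, as the cardinality of its neighbour set. -/
noncomputable def deg {V : Type*} (G : SimpleGraph V) (x : V) : ℕ :=
  (G.neighborSet x).ncard

/-- `G` is strongly Menger connected: any two distinct vertices `x, y` are joined by
`min (deg x) (deg y)` pairwise distinct, pairwise internally vertex-disjoint paths. -/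
def StronglyMengerConnected {V : Type*} (G : SimpleGraph V) : Prop :=
  ∀ x y : V, x ≠ y →
    ∃ P : Fin (min (deg G x) (deg G y)) → G.Walk x y,
      (∀ i, (P i).IsPath) ∧
      (∀ i j, i ≠ j → P i ≠ P j) ∧
      (∀ i j, i ≠ j → ∀ w, w ∈ (P i).support → w ∈ (P j).support → w = x ∨ w = y)

/-- `G` is strongly Menger edge connected: any two distinct vertices `x, y` are joined
by `min (deg x) (deg y)` pairwise edge-disjoint paths. -/
def StronglyMengerEdgeConnected {V : Type*} (G : SimpleGraph V) : Prop :=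
  ∀ x y : V, x ≠ y →
    ∃ P : Fin (min (deg G x) (deg G y)) → G.Walk x y,
      (∀ i, (P i).IsPath) ∧
      (∀ i j, i ≠ j → ∀ e, e ∈ (P i).edges → e ∉ (P j).edges)

namespace AQProof

abbrev V (n k : ℕ) := Fin n → ZMod k

/-- unit vector `e_i` -/
def ev (n k : ℕ) (i : Fin n) : V n k := fun j => if j = i then 1 else 0

/-- prefix all-ones vector on coordinates `< t` -/
def pre (n k : ℕ) (t : ℕ) : V n k := fun j => if (j : ℕ) < t then 1 else 0

/-- The move set of the `m`-dimensional augmented cube structure on `V n k`. -/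
def Mv (n k m : ℕ) : Set (V n k) :=
  {x | (∃ i : Fin n, (i : ℕ) < m ∧ (x = ev n k i ∨ x = - ev n k i)) ∨
       (∃ t : ℕ, 2 ≤ t ∧ t ≤ m ∧ (x = pre n k t ∨ x = - pre n k t))}

lemma Mv_neg {n k m : ℕ} {x : V n k} (h : x ∈ Mv n k m) : -x ∈ Mv n k m := by
  rcases h with ⟨i, him, hx | hx⟩ | ⟨t, ht2, htm, hx | hx⟩
  · exact Or.inl ⟨i, him, Or.inr (by rw [hx])⟩
  · exact Or.inl ⟨i, him, Or.inl (by rw [hx, neg_neg])⟩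
  · exact Or.inr ⟨t, ht2, htm, Or.inr (by rw [hx])⟩
  · exact Or.inr ⟨t, ht2, htm, Or.inl (by rw [hx, neg_neg])⟩

/-- the graph with moves `Mv n k m` -/
def Gr (n k m : ℕ) : SimpleGraph (V n k) where
  Adj u v := (v - u) ∈ Mv n k m ∧ u ≠ v
  symm := by
    constructor
    rintro u v ⟨h1, h2⟩
    exact ⟨by simpa [neg_sub] using Mv_neg h1, h2.symm⟩
  loopless := ⟨fun u h => h.2 rfl⟩

lemma gr_adj {n k m : ℕ} {u v : V n k} :
    (Gr n k m).Adj u v ↔ (v - u) ∈ Mv n k m ∧ u ≠ v := Iff.rfl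

lemma AQ_eq {n k : ℕ} : AQ n k = Gr n k n := by
  ext u v
  constructor
  · rintro ⟨hne, ⟨i, hv, hj⟩ | ⟨i, hi1, hpm, hj⟩⟩
    · refine ⟨Or.inl ⟨i, i.isLt, ?_⟩, hne⟩
      rcases hv with h1 | h1
      · refine Or.inl (funext fun j => ?_)
        by_cases hji : j = i
        · subst hji; simp [ev, h1]
        · simp [ev, hji, hj j hji]
      · refine Or.inr (funext fun j => ?_)
        by_cases hji : j = i
        · subst hji; simp [ev, h1]
        · simp [ev, hji, hj j hji]
    · refine ⟨Or.inr ⟨(i : ℕ) + 1, by omega, by have := i.isLt; omega, ?_⟩, hne⟩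
      rcases hpm with h2 | h2
      · refine Or.inl (funext fun j => ?_)
        by_cases hji : (j : ℕ) < (i : ℕ) + 1
        · have : j ≤ i := by rwa [Fin.le_def, ← Nat.lt_succ_iff]
          simp [pre, hji, h2 j this]
        · have : i < j := by rw [Fin.lt_def]; omega
          simp [pre, hji, hj j this]
      · refine Or.inr (funext fun j => ?_)
        by_cases hji : (j : ℕ) < (i : ℕ) + 1
        · have : j ≤ i := by rwa [Fin.le_def, ← Nat.lt_succ_iff]
          simp [pre, hji, h2 j this]
        · have : i < j := by rw [Fin.lt_def]; omega
          simp [pre, hji, hj j this]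
  · rintro ⟨⟨i, _, hx | hx⟩ | ⟨t, ht2, htn, hx | hx⟩, hne⟩ <;> refine ⟨hne, ?_⟩
    · refine Or.inl ⟨i, Or.inl ?_, fun j hj => ?_⟩
      · have := congrFun hx i; simp [ev] at this; linear_combination this
      · have := congrFun hx j; simp [ev, hj] at this; linear_combination this
    · refine Or.inl ⟨i, Or.inr ?_, fun j hj => ?_⟩
      · have := congrFun hx i; simp [ev] at this; linear_combination this
      · have := congrFun hx j; simp [ev, hj] at this; linear_combination this
    · refine Or.inr ⟨⟨t - 1, by omega⟩, by simp; omega, Or.inl fun j hj => ?_, fun j hj => ?_⟩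
      · rw [Fin.le_def] at hj; simp at hj
        have hjt : (j : ℕ) < t := by omega
        have := congrFun hx j; simp [pre, hjt] at this; linear_combination this
      · rw [Fin.lt_def] at hj; simp at hj
        have hjt : ¬ (j : ℕ) < t := by omega
        have := congrFun hx j; simp [pre, hjt] at this; linear_combination this
    · refine Or.inr ⟨⟨t - 1, by omega⟩, by simp; omega, Or.inr fun j hj => ?_, fun j hj => ?_⟩
      · rw [Fin.le_def] at hj; simp at hj
        have hjt : (j : ℕ) < t := by omega
        have := congrFun hx j; simp [pre, hjt] at this; linear_combination this
      · rw [Fin.lt_def] at hj; simp at hj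
        have hjt : ¬ (j : ℕ) < t := by omega
        have := congrFun hx j; simp [pre, hjt] at this; linear_combination this

/-- the `m`-block of a vertex: all vertices agreeing with it on coordinates `≥ m`. -/
def blk (n k m : ℕ) (u : V n k) : Set (V n k) := {w | ∀ j : Fin n, m ≤ (j : ℕ) → w j = u j}

lemma blk_univ {n k : ℕ} (u : V n k) : blk n k n u = Set.univ := by
  ext w
  simp only [blk, Set.mem_setOf_eq, Set.mem_univ, iff_true]
  exact fun j hj => absurd j.isLt (by omega)

section Zmod

lemma zmod_intCast_ne {k : ℕ} (hk : 4 ≤ k) {a b : ℤ} (h1 : a ≠ b) (h2 : (a - b).natAbs < 4) :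
    (a : ZMod k) ≠ (b : ZMod k) := by
  intro h
  have h0 : ((a - b : ℤ) : ZMod k) = 0 := by push_cast; rw [h]; ring
  have hd : ((k : ℤ)) ∣ a - b := (ZMod.intCast_zmod_eq_zero_iff_dvd _ _).mp h0
  have hd2 : ((k : ℤ)).natAbs ∣ (a - b).natAbs := Int.natAbs_dvd_natAbs.mpr hd
  rw [Int.natAbs_natCast] at hd2
  have hba : (a - b).natAbs ≠ 0 := by
    intro hz; exact h1 (by omega)
  have := Nat.le_of_dvd (by omega) hd2
  omega

variable {k : ℕ}

lemma z10 (hk : 4 ≤ k) : (1 : ZMod k) ≠ 0 := by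
  have := zmod_intCast_ne hk (a := 1) (b := 0) (by norm_num) (by norm_num)
  push_cast at this; exact this

lemma zn10 (hk : 4 ≤ k) : (-1 : ZMod k) ≠ 0 := by
  have := zmod_intCast_ne hk (a := -1) (b := 0) (by norm_num) (by norm_num)
  push_cast at this; exact this

lemma z1n1 (hk : 4 ≤ k) : (1 : ZMod k) ≠ -1 := by
  have := zmod_intCast_ne hk (a := 1) (b := -1) (by norm_num) (by norm_num)
  push_cast at this; exact this

lemma z20 (hk : 4 ≤ k) : (1 + 1 : ZMod k) ≠ 0 := by
  have := zmod_intCast_ne hk (a := 2) (b := 0) (by norm_num) (by norm_num)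
  push_cast at this; convert this using 2; norm_num

lemma z21 (hk : 4 ≤ k) : (1 + 1 : ZMod k) ≠ 1 := by
  intro h; exact z10 hk (by linear_combination h)

lemma z2n1 (hk : 4 ≤ k) : (1 + 1 : ZMod k) ≠ -1 := by
  have := zmod_intCast_ne hk (a := 2) (b := -1) (by norm_num) (by norm_num)
  push_cast at this
  intro h; exact this (by linear_combination h)

lemma zn20 (hk : 4 ≤ k) : (-1 - 1 : ZMod k) ≠ 0 := by
  intro h; exact z20 hk (by linear_combination -h)

lemma zn21 (hk : 4 ≤ k) : (-1 - 1 : ZMod k) ≠ 1 := by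
  intro h; exact z2n1 hk (by linear_combination -h)

lemma zn2n1 (hk : 4 ≤ k) : (-1 - 1 : ZMod k) ≠ -1 := by
  intro h; exact zn10 hk (by linear_combination h + 1)

end Zmod

section Vec

variable {n k : ℕ}

lemma ev_self (i : Fin n) : ev n k i i = 1 := if_pos rfl

lemma ev_ne {i j : Fin n} (h : j ≠ i) : ev n k i j = 0 := if_neg h

lemma pre_lt {t : ℕ} {j : Fin n} (h : (j : ℕ) < t) : pre n k t j = 1 := if_pos h

lemma pre_ge {t : ℕ} {j : Fin n} (h : ¬ (j : ℕ) < t) : pre n k t j = 0 := if_neg h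

lemma mv_coord_zero {m : ℕ} {x : V n k} (h : x ∈ Mv n k m) {j : Fin n} (hj : m ≤ (j : ℕ)) :
    x j = 0 := by
  rcases h with ⟨i, him, hx | hx⟩ | ⟨t, ht2, htm, hx | hx⟩ <;> subst hx
  · exact ev_ne (by intro h; subst h; omega)
  · rw [Pi.neg_apply, ev_ne (by intro h; subst h; omega), neg_zero]
  · exact pre_ge (by omega)
  · rw [Pi.neg_apply, pre_ge (by omega), neg_zero]

lemma zero_not_mem_Mv (hk : 4 ≤ k) {m : ℕ} (hm : m ≤ n) : (0 : V n k) ∉ Mv n k m := by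
  rintro (⟨i, him, hx | hx⟩ | ⟨t, ht2, htm, hx | hx⟩)
  · exact z10 hk (by simpa [ev_self] using (congrFun hx i).symm)
  · exact zn10 hk (by simpa [Pi.neg_apply, ev_self] using (congrFun hx i).symm)
  · have h0 : (0 : ℕ) < n := by omega
    have := congrFun hx ⟨0, h0⟩
    rw [pre_lt (by simp; omega)] at this
    exact z10 hk this.symm
  · have h0 : (0 : ℕ) < n := by omega
    have := congrFun hx ⟨0, h0⟩
    rw [Pi.neg_apply, pre_lt (by simp; omega)] at this
    exact zn10 hk this.symm

lemma Mv_mono {m m' : ℕ} (h : m ≤ m') : Mv n k m ⊆ Mv n k m' := by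
  rintro x (⟨i, him, hx⟩ | ⟨t, ht2, htm, hx⟩)
  · exact Or.inl ⟨i, by omega, hx⟩
  · exact Or.inr ⟨t, ht2, by omega, hx⟩

lemma Mv_one (hn : 0 < n) : Mv n k 1 = {ev n k ⟨0, hn⟩, - ev n k ⟨0, hn⟩} := by
  ext x
  constructor
  · rintro (⟨i, him, hx⟩ | ⟨t, ht2, htm, hx⟩)
    · have : i = ⟨0, hn⟩ := Fin.ext (show (i : ℕ) = 0 by omega)
      subst this
      rcases hx with hx | hx
      · exact Or.inl hx
      · exact Or.inr hx
    · omega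
  · rintro (hx | hx)
    · exact Or.inl ⟨⟨0, hn⟩, show (0:ℕ) < 1 by omega, Or.inl hx⟩
    · exact Or.inl ⟨⟨0, hn⟩, show (0:ℕ) < 1 by omega, Or.inr hx⟩

lemma Mv_succ (m : ℕ) (hm : 1 ≤ m) (hmn : m < n) :
    Mv n k (m + 1) = Mv n k m ∪
      {ev n k ⟨m, hmn⟩, - ev n k ⟨m, hmn⟩, pre n k (m + 1), - pre n k (m + 1)} := by
  ext x
  constructor
  · rintro (⟨i, him, hx⟩ | ⟨t, ht2, htm, hx⟩)
    · rcases Nat.lt_or_ge (i : ℕ) m with h | h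
      · exact Or.inl (Or.inl ⟨i, h, hx⟩)
      · have : i = ⟨m, hmn⟩ := Fin.ext (show (i : ℕ) = m by omega)
        subst this
        rcases hx with hx | hx
        · exact Or.inr (Or.inl hx)
        · exact Or.inr (Or.inr (Or.inl hx))
    · rcases Nat.lt_or_ge t (m + 1) with h | h
      · exact Or.inl (Or.inr ⟨t, ht2, by omega, hx⟩)
      · have : t = m + 1 := by omega
        subst this
        rcases hx with hx | hx
        · exact Or.inr (Or.inr (Or.inr (Or.inl hx)))
        · exact Or.inr (Or.inr (Or.inr (Or.inr hx)))
  · rintro (h | h)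
    · exact Mv_mono (by omega) h
    · rcases h with hx | hx | hx | hx
      · exact Or.inl ⟨⟨m, hmn⟩, show m < m + 1 by omega, Or.inl hx⟩
      · exact Or.inl ⟨⟨m, hmn⟩, show m < m + 1 by omega, Or.inr hx⟩
      · exact Or.inr ⟨m + 1, by omega, by omega, Or.inl hx⟩
      · exact Or.inr ⟨m + 1, by omega, by omega, Or.inr hx⟩

end Vec
section Sol

variable {n k : ℕ}

/-- directions x such that both x and x - γ are moves: counts common neighbours. -/
def Sol (n k m : ℕ) (γ : V n k) : Set (V n k) := {x | x ∈ Mv n k m ∧ x - γ ∈ Mv n k m}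

lemma ncard_pair_le {α : Type*} (a b : α) : ({a, b} : Set α).ncard ≤ 2 := by
  have h1 := Set.ncard_insert_le a ({b} : Set α)
  simp [Set.ncard_singleton] at h1 ⊢
  omega

lemma ncard_quad_le {α : Type*} (a b c d : α) : ({a, b, c, d} : Set α).ncard ≤ 4 := by
  have h1 := Set.ncard_insert_le a ({b, c, d} : Set α)
  have h2 := Set.ncard_insert_le b ({c, d} : Set α)
  have h3 := ncard_pair_le c d
  omega

lemma sol_neg {m : ℕ} (γ : V n k) : (Sol n k m (-γ)).ncard = (Sol n k m γ).ncard := by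
  have himg : Sol n k m (-γ) = (fun x => x - γ) '' Sol n k m γ := by
    ext z
    constructor
    · rintro ⟨hz1, hz2⟩
      refine ⟨z + γ, ⟨by simpa using hz2, by simpa using hz1⟩, by ring⟩
    · rintro ⟨x, ⟨hx1, hx2⟩, rfl⟩
      exact ⟨hx2, by simpa using hx1⟩
  rw [himg, Set.ncard_image_of_injective _ (fun a b h => by simpa using h)]

lemma pre_succ_eq {m : ℕ} (hmn : m < n) :
    pre n k (m + 1) = pre n k m + ev n k ⟨m, hmn⟩ := by
  funext j
  rcases Nat.lt_trichotomy (j : ℕ) m with h | h | h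
  · rw [Pi.add_apply, pre_lt (by omega), pre_lt h, ev_ne (by intro hh; subst hh; simp at h)]
    ring
  · have : j = ⟨m, hmn⟩ := Fin.ext h
    subst this
    rw [Pi.add_apply, pre_lt (by omega), pre_ge (by omega), ev_self]
    ring
  · rw [Pi.add_apply, pre_ge (by omega), pre_ge (by omega), ev_ne (by intro hh; subst hh; simp at h)]
    ring

lemma sol_sub_top_one (hk : 4 ≤ k) {m : ℕ} (hm : 1 ≤ m) (hmn : m < n) {γ : V n k}
    (hg : γ ⟨m, hmn⟩ = 1) :
    Sol n k (m + 1) γ ⊆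
      {ev n k ⟨m, hmn⟩, pre n k (m + 1), γ - ev n k ⟨m, hmn⟩, γ - pre n k (m + 1)} := by
  rintro x ⟨hxm, hym⟩
  rw [Mv_succ m hm hmn] at hxm hym
  simp only [Set.mem_union, Set.mem_insert_iff, Set.mem_singleton_iff] at hxm hym ⊢
  have hytop : (x - γ) ⟨m, hmn⟩ = x ⟨m, hmn⟩ - 1 := by rw [Pi.sub_apply, hg]
  rcases hxm with hxm | hxm | hxm | hxm | hxm
  · -- x is a low move, so x - γ has top coordinate -1
    have hx0 : x ⟨m, hmn⟩ = 0 := mv_coord_zero hxm le_rfl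
    rcases hym with hym | hym | hym | hym | hym
    · have := mv_coord_zero hym (le_refl m) (j := ⟨m, hmn⟩)
      rw [hytop, hx0] at this
      exact absurd (by linear_combination -this) (z10 hk)
    · have := congrFun hym ⟨m, hmn⟩
      rw [hytop, hx0, ev_self] at this
      exact absurd (by linear_combination -this) (z20 hk)
    · -- x - γ = -e : x = γ - e
      exact Or.inr (Or.inr (Or.inl (by linear_combination hym)))
    · have := congrFun hym ⟨m, hmn⟩
      rw [hytop, hx0, pre_lt (show m < m + 1 by omega)] at this
      exact absurd (by linear_combination -this) (z20 hk)
    · exact Or.inr (Or.inr (Or.inr (by linear_combination hym)))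
  · exact Or.inl hxm
  · -- x = -e: top coordinate of x - γ is -2, impossible
    exfalso
    have hx0 : x ⟨m, hmn⟩ = -1 := by rw [hxm, Pi.neg_apply, ev_self]
    rcases hym with hym | hym | hym | hym | hym
    · have := mv_coord_zero hym (le_refl m) (j := ⟨m, hmn⟩)
      rw [hytop, hx0] at this
      exact absurd (by linear_combination this) (zn20 hk)
    · have := congrFun hym ⟨m, hmn⟩
      rw [hytop, hx0, ev_self] at this
      exact absurd (by linear_combination this) (zn21 hk)
    · have := congrFun hym ⟨m, hmn⟩
      rw [hytop, hx0, Pi.neg_apply, ev_self] at this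
      exact absurd (by linear_combination this) (zn2n1 hk)
    · have := congrFun hym ⟨m, hmn⟩
      rw [hytop, hx0, pre_lt (show m < m + 1 by omega)] at this
      exact absurd (by linear_combination this) (zn21 hk)
    · have := congrFun hym ⟨m, hmn⟩
      rw [hytop, hx0, Pi.neg_apply, pre_lt (show m < m + 1 by omega)] at this
      exact absurd (by linear_combination this) (zn2n1 hk)
  · exact Or.inr (Or.inl hxm)
  · -- x = -p: same as -e
    exfalso
    have hx0 : x ⟨m, hmn⟩ = -1 := by rw [hxm, Pi.neg_apply, pre_lt (show m < m + 1 by omega)]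
    rcases hym with hym | hym | hym | hym | hym
    · have := mv_coord_zero hym (le_refl m) (j := ⟨m, hmn⟩)
      rw [hytop, hx0] at this
      exact absurd (by linear_combination this) (zn20 hk)
    · have := congrFun hym ⟨m, hmn⟩
      rw [hytop, hx0, ev_self] at this
      exact absurd (by linear_combination this) (zn21 hk)
    · have := congrFun hym ⟨m, hmn⟩
      rw [hytop, hx0, Pi.neg_apply, ev_self] at this
      exact absurd (by linear_combination this) (zn2n1 hk)
    · have := congrFun hym ⟨m, hmn⟩
      rw [hytop, hx0, pre_lt (show m < m + 1 by omega)] at this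
      exact absurd (by linear_combination this) (zn21 hk)
    · have := congrFun hym ⟨m, hmn⟩
      rw [hytop, hx0, Pi.neg_apply, pre_lt (show m < m + 1 by omega)] at this
      exact absurd (by linear_combination this) (zn2n1 hk)

lemma sol_sub_top_pre (hk : 4 ≤ k) {m : ℕ} (hm : 1 ≤ m) (hmn : m < n) (hm1n : m + 1 ≤ n) :
    Sol n k (m + 1) (pre n k (m + 1)) ⊆
      {ev n k ⟨m, hmn⟩, pre n k (m + 1) - ev n k ⟨m, hmn⟩} := by
  rintro x hx
  have hg : pre n k (m + 1) ⟨m, hmn⟩ = 1 := pre_lt (show m < m + 1 by omega)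
  have h4 := sol_sub_top_one hk hm hmn hg hx
  simp only [Set.mem_insert_iff, Set.mem_singleton_iff] at h4 ⊢
  obtain ⟨hxm, hym⟩ := hx
  rcases h4 with h | h | h | h
  · exact Or.inl h
  · -- x = p : then x - γ = 0, not a move
    exfalso
    rw [h] at hym
    simp only [sub_self] at hym
    exact zero_not_mem_Mv hk hm1n hym
  · exact Or.inr h
  · -- x = γ - p = 0, not a move
    exfalso
    rw [h] at hxm
    simp only [sub_self] at hxm
    exact zero_not_mem_Mv hk hm1n hxm

lemma sol_sub_top_other (hk : 4 ≤ k) {m : ℕ} (hm : 1 ≤ m) (hmn : m < n) {γ : V n k}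
    (h0 : γ ⟨m, hmn⟩ ≠ 0) (h1 : γ ⟨m, hmn⟩ ≠ 1) (hm1 : γ ⟨m, hmn⟩ ≠ -1) :
    Sol n k (m + 1) γ ⊆
      {ev n k ⟨m, hmn⟩, - ev n k ⟨m, hmn⟩, pre n k (m + 1), - pre n k (m + 1)} := by
  rintro x ⟨hxm, hym⟩
  rw [Mv_succ m hm hmn] at hxm hym
  simp only [Set.mem_union, Set.mem_insert_iff, Set.mem_singleton_iff] at hxm hym ⊢
  rcases hxm with hxm | hxm
  · exfalso
    have hx0 : x ⟨m, hmn⟩ = 0 := mv_coord_zero hxm le_rfl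
    have hytop : (x - γ) ⟨m, hmn⟩ = - γ ⟨m, hmn⟩ := by rw [Pi.sub_apply, hx0]; ring
    rcases hym with hym | hym | hym | hym | hym
    · have := mv_coord_zero hym (le_refl m) (j := ⟨m, hmn⟩)
      rw [hytop] at this
      exact h0 (by linear_combination -this)
    · have := congrFun hym ⟨m, hmn⟩
      rw [hytop, ev_self] at this
      exact hm1 (by linear_combination -this)
    · have := congrFun hym ⟨m, hmn⟩
      rw [hytop, Pi.neg_apply, ev_self] at this
      exact h1 (by linear_combination -this)
    · have := congrFun hym ⟨m, hmn⟩
      rw [hytop, pre_lt (show m < m + 1 by omega)] at this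
      exact hm1 (by linear_combination -this)
    · have := congrFun hym ⟨m, hmn⟩
      rw [hytop, Pi.neg_apply, pre_lt (show m < m + 1 by omega)] at this
      exact h1 (by linear_combination -this)
  · exact hxm

end Sol
section Sol2

variable {n k : ℕ}

lemma pre_ne_neg (hk : 4 ≤ k) {m : ℕ} (h0n : 0 < n) (hm : 1 ≤ m) :
    pre n k m ≠ - pre n k m := by
  intro h
  have := congrFun h ⟨0, h0n⟩
  rw [Pi.neg_apply, pre_lt (show ((⟨0, h0n⟩ : Fin n) : ℕ) < m by simp; omega)] at this
  exact z1n1 hk this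

lemma sol_top_zero_cases (hk : 4 ≤ k) {m : ℕ} (hm : 1 ≤ m) (hmn : m < n) {γ : V n k}
    (hγ : γ ≠ 0) (hg : γ ⟨m, hmn⟩ = 0) :
    Sol n k (m + 1) γ ⊆ Sol n k m γ ∪
      {x | (γ = pre n k m ∧ (x = pre n k (m + 1) ∨ x = - ev n k ⟨m, hmn⟩)) ∨
           (γ = - pre n k m ∧ (x = ev n k ⟨m, hmn⟩ ∨ x = - pre n k (m + 1)))} := by
  rintro x ⟨hxm, hym⟩
  rw [Mv_succ m hm hmn] at hxm hym
  simp only [Set.mem_union, Set.mem_insert_iff, Set.mem_singleton_iff] at hxm hym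
  have hytop : (x - γ) ⟨m, hmn⟩ = x ⟨m, hmn⟩ := by rw [Pi.sub_apply, hg, sub_zero]
  have hps := pre_succ_eq (k := k) hmn
  rcases hxm with hxm | hxm | hxm | hxm | hxm
  · -- x low
    have hx0 : x ⟨m, hmn⟩ = 0 := mv_coord_zero hxm le_rfl
    rcases hym with hym | hym | hym | hym | hym
    · exact Or.inl ⟨hxm, hym⟩
    · exfalso
      have := congrFun hym ⟨m, hmn⟩
      rw [hytop, hx0, ev_self] at this
      exact z10 hk this.symm
    · exfalso
      have := congrFun hym ⟨m, hmn⟩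
      rw [hytop, hx0, Pi.neg_apply, ev_self] at this
      exact zn10 hk (by linear_combination -this)
    · exfalso
      have := congrFun hym ⟨m, hmn⟩
      rw [hytop, hx0, pre_lt (show m < m + 1 by omega)] at this
      exact z10 hk this.symm
    · exfalso
      have := congrFun hym ⟨m, hmn⟩
      rw [hytop, hx0, Pi.neg_apply, pre_lt (show m < m + 1 by omega)] at this
      exact zn10 hk (by linear_combination -this)
  · -- x = e
    have hx1 : x ⟨m, hmn⟩ = 1 := by rw [hxm]; exact ev_self _
    rcases hym with hym | hym | hym | hym | hym
    · exfalso
      have := mv_coord_zero hym (le_refl m) (j := ⟨m, hmn⟩)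
      rw [hytop, hx1] at this
      exact z10 hk this
    · exact absurd (by linear_combination hxm - hym) hγ
    · exfalso
      have := congrFun hym ⟨m, hmn⟩
      rw [hytop, hx1, Pi.neg_apply, ev_self] at this
      exact z1n1 hk this
    · -- x = e, x - γ = p : γ = -pre m
      refine Or.inr (Or.inr ⟨?_, Or.inl hxm⟩)
      rw [hps] at hym
      linear_combination hxm - hym
    · exfalso
      have := congrFun hym ⟨m, hmn⟩
      rw [hytop, hx1, Pi.neg_apply, pre_lt (show m < m + 1 by omega)] at this
      exact z1n1 hk this
  · -- x = -e
    have hx1 : x ⟨m, hmn⟩ = -1 := by rw [hxm, Pi.neg_apply, ev_self]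
    rcases hym with hym | hym | hym | hym | hym
    · exfalso
      have := mv_coord_zero hym (le_refl m) (j := ⟨m, hmn⟩)
      rw [hytop, hx1] at this
      exact zn10 hk this
    · exfalso
      have := congrFun hym ⟨m, hmn⟩
      rw [hytop, hx1, ev_self] at this
      exact z1n1 hk this.symm
    · exact absurd (by linear_combination hxm - hym) hγ
    · exfalso
      have := congrFun hym ⟨m, hmn⟩
      rw [hytop, hx1, pre_lt (show m < m + 1 by omega)] at this
      exact z1n1 hk this.symm
    · -- x = -e, x - γ = -p : γ = pre m
      refine Or.inr (Or.inl ⟨?_, Or.inr hxm⟩)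
      rw [hps] at hym
      linear_combination hxm - hym
  · -- x = p
    have hx1 : x ⟨m, hmn⟩ = 1 := by rw [hxm]; exact pre_lt (show m < m + 1 by omega)
    rcases hym with hym | hym | hym | hym | hym
    · exfalso
      have := mv_coord_zero hym (le_refl m) (j := ⟨m, hmn⟩)
      rw [hytop, hx1] at this
      exact z10 hk this
    · -- x = p, x - γ = e : γ = pre m
      refine Or.inr (Or.inl ⟨?_, Or.inl hxm⟩)
      rw [hps] at hxm
      linear_combination hxm - hym
    · exfalso
      have := congrFun hym ⟨m, hmn⟩
      rw [hytop, hx1, Pi.neg_apply, ev_self] at this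
      exact z1n1 hk this
    · exact absurd (by linear_combination hxm - hym) hγ
    · exfalso
      have := congrFun hym ⟨m, hmn⟩
      rw [hytop, hx1, Pi.neg_apply, pre_lt (show m < m + 1 by omega)] at this
      exact z1n1 hk this
  · -- x = -p
    have hx1 : x ⟨m, hmn⟩ = -1 := by
      rw [hxm, Pi.neg_apply, pre_lt (show m < m + 1 by omega)]
    rcases hym with hym | hym | hym | hym | hym
    · exfalso
      have := mv_coord_zero hym (le_refl m) (j := ⟨m, hmn⟩)
      rw [hytop, hx1] at this
      exact zn10 hk this
    · exfalso
      have := congrFun hym ⟨m, hmn⟩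
      rw [hytop, hx1, ev_self] at this
      exact z1n1 hk this.symm
    · -- x = -p, x - γ = -e : γ = -pre m
      refine Or.inr (Or.inr ⟨?_, Or.inr hxm⟩)
      rw [hps] at hxm
      linear_combination hxm - hym
    · exfalso
      have := congrFun hym ⟨m, hmn⟩
      rw [hytop, hx1, pre_lt (show m < m + 1 by omega)] at this
      exact z1n1 hk this.symm
    · exact absurd (by linear_combination hxm - hym) hγ

lemma sol_card (hk : 4 ≤ k) :
    ∀ m, 1 ≤ m → m ≤ n → ∀ γ : V n k, γ ≠ 0 →
      (Sol n k m γ).ncard ≤ 4 ∧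
      ((γ = pre n k m ∨ γ = - pre n k m) → (Sol n k m γ).ncard ≤ 2) := by
  intro m
  induction m with
  | zero => omega
  | succ m' ih =>
    intro hm1 hmn γ hγ
    haveI : NeZero k := ⟨by omega⟩
    rcases Nat.eq_zero_or_pos m' with rfl | hm'
    · have h0n : 0 < n := by omega
      rw [show (0 : ℕ) + 1 = 1 from rfl]
      have hsub : Sol n k 1 γ ⊆ {ev n k ⟨0, h0n⟩, - ev n k ⟨0, h0n⟩} := by
        rw [← Mv_one h0n]; exact fun x hx => hx.1
      have hb := le_trans (Set.ncard_le_ncard hsub (Set.toFinite _)) (ncard_pair_le _ _)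
      exact ⟨by omega, fun _ => hb⟩
    · have hmn' : m' < n := by omega
      by_cases hg0 : γ ⟨m', hmn'⟩ = 0
      · have hkey := sol_top_zero_cases hk hm' hmn' hγ hg0
        have hIH := ih hm' (by omega) γ hγ
        have hvac : ¬ (γ = pre n k (m' + 1) ∨ γ = - pre n k (m' + 1)) := by
          rintro (h | h)
          · rw [h, pre_lt (show m' < m' + 1 by omega)] at hg0
            exact z10 hk hg0
          · rw [h, Pi.neg_apply, pre_lt (show m' < m' + 1 by omega)] at hg0
            exact zn10 hk hg0
        refine ⟨?_, fun h => absurd h hvac⟩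
        by_cases hq : γ = pre n k m'
        · have hq' : γ ≠ - pre n k m' := by
            rw [hq]; exact pre_ne_neg hk (by omega) hm'
          have hsub2 : Sol n k (m' + 1) γ ⊆
              Sol n k m' γ ∪ {pre n k (m' + 1), - ev n k ⟨m', hmn'⟩} := by
            intro x hx
            rcases hkey hx with h | h
            · exact Or.inl h
            · rcases h with ⟨_, h2 | h2⟩ | ⟨hc, _⟩
              · exact Or.inr (Or.inl h2)
              · exact Or.inr (Or.inr h2)
              · exact absurd hc hq'
          have h1 := Set.ncard_le_ncard hsub2 (Set.toFinite _)
          have h2 := Set.ncard_union_le (Sol n k m' γ)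
            ({pre n k (m' + 1), - ev n k ⟨m', hmn'⟩} : Set (V n k))
          have h3 := ncard_pair_le (pre n k (m' + 1)) (- ev n k ⟨m', hmn'⟩)
          have h4 := hIH.2 (Or.inl hq)
          omega
        · by_cases hq' : γ = - pre n k m'
          · have hsub2 : Sol n k (m' + 1) γ ⊆
                Sol n k m' γ ∪ {ev n k ⟨m', hmn'⟩, - pre n k (m' + 1)} := by
              intro x hx
              rcases hkey hx with h | h
              · exact Or.inl h
              · rcases h with ⟨hc, _⟩ | ⟨_, h2 | h2⟩
                · exact absurd hc hq
                · exact Or.inr (Or.inl h2)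
                · exact Or.inr (Or.inr h2)
            have h1 := Set.ncard_le_ncard hsub2 (Set.toFinite _)
            have h2 := Set.ncard_union_le (Sol n k m' γ)
              ({ev n k ⟨m', hmn'⟩, - pre n k (m' + 1)} : Set (V n k))
            have h3 := ncard_pair_le (ev n k ⟨m', hmn'⟩) (- pre n k (m' + 1))
            have h4 := hIH.2 (Or.inr hq')
            omega
          · have hsub2 : Sol n k (m' + 1) γ ⊆ Sol n k m' γ := by
              intro x hx
              rcases hkey hx with h | h
              · exact h
              · rcases h with ⟨hc, _⟩ | ⟨hc, _⟩
                · exact absurd hc hq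
                · exact absurd hc hq'
            have h1 := Set.ncard_le_ncard hsub2 (Set.toFinite _)
            omega
      · by_cases hg1 : γ ⟨m', hmn'⟩ = 1
        · refine ⟨le_trans (Set.ncard_le_ncard (sol_sub_top_one hk hm' hmn' hg1)
            (Set.toFinite _)) (ncard_quad_le _ _ _ _), ?_⟩
          rintro (h | h)
          · subst h
            exact le_trans (Set.ncard_le_ncard (sol_sub_top_pre hk hm' hmn' hmn)
              (Set.toFinite _)) (ncard_pair_le _ _)
          · exfalso
            rw [h, Pi.neg_apply, pre_lt (show m' < m' + 1 by omega)] at hg1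
            exact z1n1 hk (by linear_combination -hg1)
        · by_cases hgm : γ ⟨m', hmn'⟩ = -1
          · have hneg := sol_neg (m := m' + 1) γ
            have hγ' : -γ ≠ 0 := fun h => hγ (by linear_combination -h)
            have hgtop : (-γ) ⟨m', hmn'⟩ = 1 := by rw [Pi.neg_apply, hgm]; ring
            constructor
            · rw [← hneg]
              exact le_trans (Set.ncard_le_ncard (sol_sub_top_one hk hm' hmn' hgtop)
                (Set.toFinite _)) (ncard_quad_le _ _ _ _)
            · rintro (h | h)
              · exfalso
                rw [h, pre_lt (show m' < m' + 1 by omega)] at hgm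
                exact z1n1 hk hgm
              · have hng : -γ = pre n k (m' + 1) := by rw [h]; ring
                rw [← hneg, hng]
                exact le_trans (Set.ncard_le_ncard (sol_sub_top_pre hk hm' hmn' hmn)
                  (Set.toFinite _)) (ncard_pair_le _ _)
          · refine ⟨le_trans (Set.ncard_le_ncard
              (sol_sub_top_other hk hm' hmn' hg0 hg1 hgm) (Set.toFinite _))
              (ncard_quad_le _ _ _ _), ?_⟩
            rintro (h | h)
            · exfalso
              rw [h, pre_lt (show m' < m' + 1 by omega)] at hg1
              exact hg1 rfl
            · exfalso
              rw [h, Pi.neg_apply, pre_lt (show m' < m' + 1 by omega)] at hgm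
              exact hgm rfl

end Sol2
section Card

variable {n k : ℕ}

lemma ncard_quad {α : Type*} {a b c d : α} (hab : a ≠ b) (hac : a ≠ c) (had : a ≠ d)
    (hbc : b ≠ c) (hbd : b ≠ d) (hcd : c ≠ d) : ({a, b, c, d} : Set α).ncard = 4 := by
  rw [Set.ncard_insert_of_notMem (by simp [hab, hac, had]) (Set.toFinite _),
      Set.ncard_insert_of_notMem (by simp [hbc, hbd]) (Set.toFinite _),
      Set.ncard_pair hcd]

lemma Mv_card (hk : 4 ≤ k) : ∀ m, 1 ≤ m → m ≤ n → (Mv n k m).ncard = 4 * m - 2 := by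
  haveI : NeZero k := ⟨by omega⟩
  intro m
  induction m with
  | zero => omega
  | succ m' ih =>
    intro hm1 hmn
    rcases Nat.eq_zero_or_pos m' with rfl | hm'
    · rw [show (0 : ℕ) + 1 = 1 from rfl]
      have h0n : 0 < n := by omega
      rw [Mv_one h0n, Set.ncard_pair]
      · intro h
        have := congrFun h ⟨0, h0n⟩
        rw [Pi.neg_apply, ev_self] at this
        exact z1n1 hk this
    · have hmn' : m' < n := by omega
      have hps : (⟨m', hmn'⟩ : Fin n) = ⟨m', hmn'⟩ := rfl
      set e := ev n k ⟨m', hmn'⟩ with he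
      set p := pre n k (m' + 1) with hp
      have he_top : e ⟨m', hmn'⟩ = 1 := ev_self _
      have hp_top : p ⟨m', hmn'⟩ = 1 := pre_lt (show m' < m' + 1 by omega)
      have he_bot : e ⟨0, by omega⟩ = 0 := ev_ne (by
        intro h; have := congrArg Fin.val h; simp at this; omega)
      have hp_bot : p ⟨0, by omega⟩ = 1 := pre_lt (by simp)
      have hab : e ≠ -e := by
        intro h; have := congrFun h ⟨m', hmn'⟩
        rw [Pi.neg_apply, he_top] at this; exact z1n1 hk this
      have hac : e ≠ p := by
        intro h; have := congrFun h ⟨0, by omega⟩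
        rw [he_bot, hp_bot] at this; exact z10 hk this.symm
      have had : e ≠ -p := by
        intro h; have := congrFun h ⟨0, by omega⟩
        rw [he_bot, Pi.neg_apply, hp_bot] at this; exact zn10 hk this.symm
      have hbc : -e ≠ p := by
        intro h; have := congrFun h ⟨m', hmn'⟩
        rw [Pi.neg_apply, he_top, hp_top] at this
        exact z1n1 hk this.symm
      have hbd : -e ≠ -p := by
        intro h; have := congrFun h ⟨0, by omega⟩
        rw [Pi.neg_apply, Pi.neg_apply, he_bot, hp_bot] at this
        exact zn10 hk (by linear_combination -this)
      have hcd : p ≠ -p := pre_ne_neg hk (by omega) (by omega)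
      have hdisj : Disjoint (Mv n k m') ({e, -e, p, -p} : Set (V n k)) := by
        rw [Set.disjoint_right]
        intro x hx hxm
        have h0 : x ⟨m', hmn'⟩ = 0 := mv_coord_zero hxm le_rfl
        simp only [Set.mem_insert_iff, Set.mem_singleton_iff] at hx
        rcases hx with rfl | rfl | rfl | rfl
        · rw [he_top] at h0; exact z10 hk h0
        · rw [Pi.neg_apply, he_top] at h0; exact zn10 hk h0
        · rw [hp_top] at h0; exact z10 hk h0
        · rw [Pi.neg_apply, hp_top] at h0; exact zn10 hk h0
      rw [Mv_succ m' hm' hmn', Set.ncard_union_eq hdisj (Set.toFinite _) (Set.toFinite _),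
          ih hm' (by omega), ncard_quad hab hac had hbc hbd hcd]
      omega

/-- neighbours of a vertex -/
def nbr (n k m : ℕ) (u : V n k) : Set (V n k) := {w | (Gr n k m).Adj u w}

lemma nbr_eq (hk : 4 ≤ k) {m : ℕ} (hmn : m ≤ n) (u : V n k) :
    nbr n k m u = (u + ·) '' Mv n k m := by
  ext w
  constructor
  · rintro ⟨h1, _⟩
    exact ⟨w - u, h1, by ring⟩
  · rintro ⟨x, hx, rfl⟩
    refine ⟨by simpa using hx, ?_⟩
    intro h
    have : x = 0 := by linear_combination -h
    rw [this] at hx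
    exact zero_not_mem_Mv hk hmn hx

lemma nbr_card (hk : 4 ≤ k) {m : ℕ} (hm : 1 ≤ m) (hmn : m ≤ n) (u : V n k) :
    (nbr n k m u).ncard = 4 * m - 2 := by
  rw [nbr_eq hk hmn, Set.ncard_image_of_injective _ (add_right_injective u), Mv_card hk m hm hmn]

lemma nbr_inter (hk : 4 ≤ k) {m : ℕ} (hmn : m ≤ n) (u v : V n k) :
    nbr n k m u ∩ nbr n k m v = (u + ·) '' Sol n k m (v - u) := by
  rw [nbr_eq hk hmn, nbr_eq hk hmn]
  ext w
  constructor
  · rintro ⟨⟨x, hx, rfl⟩, ⟨y, hy, hxy⟩⟩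
    refine ⟨x, ⟨hx, ?_⟩, rfl⟩
    have : x - (v - u) = y := by linear_combination -hxy
    rw [this]; exact hy
  · rintro ⟨x, ⟨hx1, hx2⟩, rfl⟩
    exact ⟨⟨x, hx1, rfl⟩, ⟨x - (v - u), hx2, by ring⟩⟩

lemma ncard_diff_ge {α : Type*} [Finite α] (A B : Set α) :
    A.ncard - B.ncard ≤ (A \ B).ncard := by
  have hsub : A ⊆ (A \ B) ∪ B := by
    intro x hx
    by_cases hB : x ∈ B
    · exact Or.inr hB
    · exact Or.inl ⟨hx, hB⟩
  have h1 := Set.ncard_le_ncard hsub (Set.toFinite _)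
  have h2 := Set.ncard_union_le (A \ B) B
  omega

/-- The pair lemma: any two distinct vertices have ≥ 8m-10 neighbours outside the pair. -/
lemma pair_boundary (hk : 4 ≤ k) {m : ℕ} (hm : 1 ≤ m) (hmn : m ≤ n) {u v : V n k}
    (huv : u ≠ v) :
    8 * m - 10 ≤ ((nbr n k m u ∪ nbr n k m v) \ {u, v}).ncard := by
  haveI : NeZero k := ⟨by omega⟩
  have hu := nbr_card hk hm hmn u
  have hv := nbr_card hk hm hmn v
  have hsol : (Sol n k m (v - u)).ncard ≤ 4 :=
    (sol_card hk m hm hmn (v - u) (fun h => huv (by linear_combination -h))).1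
  have hint : (nbr n k m u ∩ nbr n k m v).ncard ≤ 4 := by
    rw [nbr_inter hk hmn, Set.ncard_image_of_injective _ (add_right_injective u)]
    exact hsol
  have hie := Set.ncard_union_add_ncard_inter (nbr n k m u) (nbr n k m v)
  have hdiff := ncard_diff_ge (nbr n k m u ∪ nbr n k m v) ({u, v} : Set (V n k))
  have hpair := ncard_pair_le u v
  omega

end Card
section Blk

variable {n k : ℕ}

lemma blk_refl (m : ℕ) (u : V n k) : u ∈ blk n k m u := fun _ _ => rfl

lemma blk_symm {m : ℕ} {u w : V n k} (h : w ∈ blk n k m u) : u ∈ blk n k m w :=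
  fun j hj => (h j hj).symm

lemma blk_trans {m : ℕ} {u w z : V n k} (h1 : z ∈ blk n k m w) (h2 : w ∈ blk n k m u) :
    z ∈ blk n k m u := fun j hj => (h1 j hj).trans (h2 j hj)

lemma blk_of_adj {m : ℕ} {u₀ u v : V n k} (hu : u ∈ blk n k m u₀)
    (h : (Gr n k m).Adj u v) : v ∈ blk n k m u₀ := by
  intro j hj
  have h1 : (v - u) j = 0 := mv_coord_zero h.1 hj
  have : v j = u j := by
    have := h1; rw [Pi.sub_apply] at this; linear_combination this
  rw [this]; exact hu j hj

lemma blk_mono {m m' : ℕ} (h : m ≤ m') {u w : V n k} (hw : w ∈ blk n k m u) :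
    w ∈ blk n k m' u := fun j hj => hw j (by omega)

lemma blk_card (hk : 4 ≤ k) {m : ℕ} (hmn : m ≤ n) (u : V n k) :
    (blk n k m u).ncard = k ^ m := by
  haveI : NeZero k := ⟨by omega⟩
  set f : (Fin m → ZMod k) → V n k :=
    fun a => fun j => if h : (j : ℕ) < m then a ⟨j, h⟩ else u j with hf
  have hrange : blk n k m u = Set.range f := by
    ext w
    constructor
    · intro hw
      refine ⟨fun i => w ⟨(i : ℕ), by omega⟩, funext fun j => ?_⟩
      by_cases h : (j : ℕ) < m
      · simp only [hf, dif_pos h]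
      · simp only [hf, dif_neg h]
        exact (hw j (by omega)).symm
    · rintro ⟨a, rfl⟩ j hj
      simp only [hf, dif_neg (by omega : ¬ (j : ℕ) < m)]
  have hinj : Function.Injective f := by
    intro a b hab
    funext i
    have := congrFun hab ⟨(i : ℕ), by omega⟩
    simpa only [hf, dif_pos i.isLt] using this
  rw [hrange, ← Set.image_univ, Set.ncard_image_of_injective _ hinj, Set.ncard_univ,
    Nat.card_eq_fintype_card, Fintype.card_fun, ZMod.card, Fintype.card_fin]

/-- the layer of an `m`-block with last-coordinate value `c` -/
def lay (n k m : ℕ) (h : m - 1 < n) (u₀ : V n k) (c : ZMod k) : Set (V n k) :=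
  {w | w ∈ blk n k m u₀ ∧ w ⟨m - 1, h⟩ = c}

lemma lay_sub {m : ℕ} (h : m - 1 < n) (u₀ : V n k) (c : ZMod k) :
    lay n k m h u₀ c ⊆ blk n k m u₀ := fun _ hw => hw.1

lemma lay_disjoint {m : ℕ} (h : m - 1 < n) (u₀ : V n k) {c c' : ZMod k} (hcc : c ≠ c') :
    Disjoint (lay n k m h u₀ c) (lay n k m h u₀ c') := by
  rw [Set.disjoint_left]
  rintro w ⟨_, h1⟩ ⟨_, h2⟩
  exact hcc (h1 ▸ h2 ▸ rfl)

lemma lay_eq_blk {m : ℕ} (hm : 1 ≤ m) (h : m - 1 < n) (u₀ : V n k) (c : ZMod k)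
    {w : V n k} (hw : w ∈ lay n k m h u₀ c) :
    lay n k m h u₀ c = blk n k (m - 1) w := by
  obtain ⟨hwb, hwc⟩ := hw
  ext z
  constructor
  · rintro ⟨hzb, hzc⟩ j hj
    rcases Nat.eq_or_lt_of_le hj with hj1 | hj2
    · have : j = ⟨m - 1, h⟩ := Fin.ext hj1.symm
      rw [this, hzc, hwc]
    · rw [hzb j (by omega), hwb j (by omega)]
  · intro hz
    have hzc : z ⟨m - 1, h⟩ = c := by rw [hz ⟨m - 1, h⟩ (by simp), hwc]
    exact ⟨fun j hj => by rw [hz j (by omega), hwb j hj], hzc⟩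

lemma lay_nonempty {m : ℕ} (hm : 1 ≤ m) (h : m - 1 < n) (u₀ : V n k) (c : ZMod k) :
    (fun j : Fin n => if (j : ℕ) = m - 1 then c else u₀ j) ∈ lay n k m h u₀ c := by
  constructor
  · intro j hj
    simp only [if_neg (by omega : ¬ (j : ℕ) = m - 1)]
  · simp

lemma lay_card (hk : 4 ≤ k) {m : ℕ} (hm : 1 ≤ m) (hmn : m ≤ n) (h : m - 1 < n)
    (u₀ : V n k) (c : ZMod k) : (lay n k m h u₀ c).ncard = k ^ (m - 1) := by
  rw [lay_eq_blk hm h u₀ c (lay_nonempty hm h u₀ c), blk_card hk (by omega)]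

/-- vertices of a block within a layer given by an already-known member -/
lemma mem_lay_iff {m : ℕ} (h : m - 1 < n) {u₀ : V n k} {w : V n k} {c : ZMod k} :
    w ∈ lay n k m h u₀ c ↔ w ∈ blk n k m u₀ ∧ w ⟨m - 1, h⟩ = c := Iff.rfl

end Blk

section Counting

variable {n k : ℕ}

lemma ncard_two_disj_le {α : Type*} [Finite α] {A B S : Set α} (hA : A ⊆ S) (hB : B ⊆ S)
    (hAB : Disjoint A B) : A.ncard + B.ncard ≤ S.ncard := by
  rw [← Set.ncard_union_eq hAB (Set.toFinite _) (Set.toFinite _)]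
  exact Set.ncard_le_ncard (Set.union_subset hA hB) (Set.toFinite _)

lemma ncard_three_disj_le {α : Type*} [Finite α] {A B C S : Set α} (hA : A ⊆ S) (hB : B ⊆ S)
    (hC : C ⊆ S) (hAB : Disjoint A B) (hAC : Disjoint A C) (hBC : Disjoint B C) :
    A.ncard + B.ncard + C.ncard ≤ S.ncard := by
  have h1 : A.ncard + B.ncard = (A ∪ B).ncard :=
    (Set.ncard_union_eq hAB (Set.toFinite _) (Set.toFinite _)).symm
  rw [h1]
  exact ncard_two_disj_le (Set.union_subset hA hB) hC (Set.disjoint_union_left.mpr ⟨hAC, hBC⟩)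

lemma ncard_four_disj_le {α : Type*} [Finite α] {A B C D S : Set α} (hA : A ⊆ S) (hB : B ⊆ S)
    (hC : C ⊆ S) (hD : D ⊆ S) (hAB : Disjoint A B) (hAC : Disjoint A C) (hAD : Disjoint A D)
    (hBC : Disjoint B C) (hBD : Disjoint B D) (hCD : Disjoint C D) :
    A.ncard + B.ncard + C.ncard + D.ncard ≤ S.ncard := by
  have h1 : A.ncard + B.ncard = (A ∪ B).ncard :=
    (Set.ncard_union_eq hAB (Set.toFinite _) (Set.toFinite _)).symm
  rw [h1]
  exact ncard_three_disj_le (Set.union_subset hA hB) hC hD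
    (Set.disjoint_union_left.mpr ⟨hAC, hBC⟩) (Set.disjoint_union_left.mpr ⟨hAD, hBD⟩) hCD

lemma ncard_translate {α : Type*} [AddGroup α] (x : α) (S : Set α) :
    ((fun w => w + x) '' S).ncard = S.ncard :=
  Set.ncard_image_of_injective _ (fun a b h => by simpa using h)

/-- either a translate of S is S itself, or S ∪ translate gains an element -/
lemma translate_grow {α : Type*} [Finite α] [AddGroup α] (x : α) (S : Set α) :
    (fun w => w + x) '' S = S ∨ S.ncard + 1 ≤ (S ∪ (fun w => w + x) '' S).ncard := by
  by_cases h : (fun w => w + x) '' S ⊆ S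
  · left
    exact Set.eq_of_subset_of_ncard_le h (by rw [ncard_translate]) (Set.toFinite _)
  · right
    rw [Set.not_subset] at h
    obtain ⟨y, hy1, hy2⟩ := h
    have hsub : insert y S ⊆ S ∪ (fun w => w + x) '' S := by
      intro z hz
      rcases hz with rfl | hz
      · exact Or.inr hy1
      · exact Or.inl hz
    calc S.ncard + 1 = (insert y S).ncard := (Set.ncard_insert_of_notMem hy2 (Set.toFinite _)).symm
    _ ≤ _ := Set.ncard_le_ncard hsub (Set.toFinite _)

/-- if S is invariant under translation by a vector with some coordinate ±1, then S is big -/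
lemma invariant_big (hk : 4 ≤ k) {δ : V n k} {j : Fin n} (hδ : δ j = 1 ∨ δ j = -1)
    {S : Set (V n k)} (hS : S.Nonempty) (hinv : (fun w => w + δ) '' S = S) :
    k ≤ S.ncard := by
  haveI : NeZero k := ⟨by omega⟩
  obtain ⟨w, hw⟩ := hS
  have horb : ∀ t : ℕ, w + (t : ZMod k) • δ ∈ S := by
    intro t
    induction t with
    | zero => simpa using hw
    | succ s ihs =>
      have h1 : w + ((s + 1 : ℕ) : ZMod k) • δ = (w + (s : ZMod k) • δ) + δ := by
        push_cast
        rw [add_smul, one_smul]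
        ring
      rw [h1, ← hinv]
      exact ⟨w + (s : ZMod k) • δ, ihs, rfl⟩
  set f : ℕ → V n k := fun t => w + (t : ZMod k) • δ with hfdef
  have hinj : ∀ a < k, ∀ b < k, f a = f b → a = b := by
    intro a ha b hb hab
    have hcoord := congrFun hab j
    simp only [hfdef, Pi.add_apply, Pi.smul_apply, smul_eq_mul] at hcoord
    have h2 : (a : ZMod k) * δ j = (b : ZMod k) * δ j := by linear_combination hcoord
    have h3 : (a : ZMod k) = (b : ZMod k) := by
      rcases hδ with h | h <;> rw [h] at h2
      · simpa using h2
      · linear_combination -h2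
    have := congrArg ZMod.val h3
    rwa [ZMod.val_cast_of_lt ha, ZMod.val_cast_of_lt hb] at this
  have hsub : ↑((Finset.range k).image f) ⊆ S := by
    intro z hz
    simp only [Finset.coe_image, Set.mem_image, Finset.coe_range, Set.mem_Iio] at hz
    obtain ⟨t, _, rfl⟩ := hz
    exact horb t
  have hcard : ((Finset.range k).image f).card = k := by
    rw [Finset.card_image_of_injOn, Finset.card_range]
    intro a ha b hb
    simp only [Finset.coe_range, Set.mem_Iio] at ha hb
    exact hinj a ha b hb
  calc k = (↑((Finset.range k).image f) : Set (V n k)).ncard := by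
        rw [Set.ncard_coe_finset, hcard]
  _ ≤ S.ncard := Set.ncard_le_ncard hsub (Set.toFinite _)

end Counting
section Rch

variable {n k : ℕ}

/-- reachability in `Gr n k m` avoiding the fault set `F` -/
def Rch (n k m : ℕ) (F : Set (V n k)) (u v : V n k) : Prop :=
  ∃ w : (Gr n k m).Walk u v, ∀ x ∈ w.support, x ∉ F

lemma rch_refl {m : ℕ} {F : Set (V n k)} {u : V n k} (hu : u ∉ F) : Rch n k m F u u :=
  ⟨SimpleGraph.Walk.nil, by simpa using hu⟩

lemma rch_symm {m : ℕ} {F : Set (V n k)} {u v : V n k} (h : Rch n k m F u v) :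
    Rch n k m F v u := by
  obtain ⟨w, hw⟩ := h
  exact ⟨w.reverse, fun x hx => hw x (by simpa using hx)⟩

lemma rch_trans {m : ℕ} {F : Set (V n k)} {u v z : V n k} (h1 : Rch n k m F u v)
    (h2 : Rch n k m F v z) : Rch n k m F u z := by
  obtain ⟨w1, hw1⟩ := h1
  obtain ⟨w2, hw2⟩ := h2
  refine ⟨w1.append w2, fun x hx => ?_⟩
  rcases (SimpleGraph.Walk.mem_support_append_iff _ _).mp hx with h | h
  · exact hw1 x h
  · exact hw2 x h

lemma rch_step {m : ℕ} {F : Set (V n k)} {u v : V n k} (hu : u ∉ F) (hv : v ∉ F)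
    (h : (Gr n k m).Adj u v) : Rch n k m F u v := by
  refine ⟨SimpleGraph.Walk.cons h SimpleGraph.Walk.nil, fun x hx => ?_⟩
  have : x = u ∨ x = v := by simpa using hx
  rcases this with rfl | rfl
  · exact hu
  · exact hv

lemma rch_start_not_mem {m : ℕ} {F : Set (V n k)} {u v : V n k} (h : Rch n k m F u v) :
    u ∉ F := by
  obtain ⟨w, hw⟩ := h
  exact hw u w.start_mem_support

lemma rch_end_not_mem {m : ℕ} {F : Set (V n k)} {u v : V n k} (h : Rch n k m F u v) :
    v ∉ F := by
  obtain ⟨w, hw⟩ := h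
  exact hw v w.end_mem_support

lemma gr_mono {m m' : ℕ} (h : m ≤ m') : (Gr n k m) ≤ (Gr n k m') :=
  fun _ _ ha => ⟨Mv_mono h ha.1, ha.2⟩

lemma rch_mono {m m' : ℕ} (h : m ≤ m') {F : Set (V n k)} {u v : V n k}
    (hr : Rch n k m F u v) : Rch n k m' F u v := by
  obtain ⟨w, hw⟩ := hr
  refine ⟨w.transfer (Gr n k m') (fun e he => ?_), fun x hx => hw x ?_⟩
  · exact SimpleGraph.edgeSet_mono (gr_mono h) (w.edges_subset_edgeSet he)
  · rwa [SimpleGraph.Walk.support_transfer] at hx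

lemma rch_blk {m : ℕ} {F : Set (V n k)} {u v : V n k} (h : Rch n k m F u v) :
    v ∈ blk n k m u := by
  obtain ⟨w, hw⟩ := h

  induction w with
  | nil => exact blk_refl _ _
  | @cons a b c hab p ih =>
    exact blk_trans (ih (fun x hx => hw x (by simp [hx]))) (blk_of_adj (blk_refl _ _) hab)

/-- reachable vertices stay on their side of an edge-free split -/
lemma rch_side {m : ℕ} {u₀ : V n k} {F S T : Set (V n k)}
    (hST : S ∪ T = blk n k m u₀ \ F)
    (hno : ∀ s ∈ S, ∀ t ∈ T, ¬ (Gr n k m).Adj s t)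
    {u v : V n k} (hu : u ∈ S) (h : Rch n k m F u v) : v ∈ S := by
  obtain ⟨w, hw⟩ := h
  induction w with
  | nil => exact hu
  | @cons a b c hab p ih =>
    have hbF : b ∉ F := hw b (by simp)
    have hab2 : a ∈ blk n k m u₀ := by
      have : a ∈ S ∪ T := Or.inl hu
      rw [hST] at this
      exact this.1
    have hbblk : b ∈ blk n k m u₀ := blk_of_adj hab2 hab
    have hbST : b ∈ S ∪ T := by rw [hST]; exact ⟨hbblk, hbF⟩
    have hbS : b ∈ S := by
      rcases hbST with h | h
      · exact h
      · exact absurd hab (hno a hu b h)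
    exact ih hbS (fun x hx => hw x (by simp [hx]))

end Rch
section Props

variable {n k : ℕ}

/-- the key splitting property in dimension m -/
def SplitP (n k m : ℕ) : Prop := ∀ u₀ F S T : _,
    S ∪ T = blk n k m u₀ \ F → Disjoint S T →
    (∀ s ∈ S, ∀ t ∈ T, ¬ (Gr n k m).Adj s t) →
    (F ∩ blk n k m u₀).ncard ≤ 8 * m - 11 →
    S.ncard ≤ 1 ∨ T.ncard ≤ 1

/-- fault-tolerant connectivity in dimension m -/
def ConnP (n k m : ℕ) : Prop := ∀ (u₀ : V n k) (F : Set (V n k)) (u v : V n k),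
    (F ∩ blk n k m u₀).ncard ≤ 4 * m - 3 → u ∈ blk n k m u₀ \ F → v ∈ blk n k m u₀ \ F →
    Rch n k m F u v

lemma pow_lin : ∀ m, 4 ≤ m → 16 * m ≤ 2 * 4 ^ (m - 1) := by
  intro m
  induction m with
  | zero => omega
  | succ p ih =>
    intro h
    rcases Nat.lt_or_ge p 4 with hp | hp
    · have : p = 3 := by omega
      subst this
      norm_num
    · have h1 := ih hp
      have h2 : p + 1 - 1 = (p - 1) + 1 := by omega
      rw [h2, pow_succ]
      omega

lemma pow_facts {m : ℕ} (hm : 2 ≤ m) :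
    2 * (4 * m - 7) < 4 ^ (m - 1) ∧ 4 * m - 5 < 4 ^ (m - 1) ∧ 4 * m - 7 < 4 ^ (m - 1) ∧
    16 * m ≤ 2 * 4 ^ (m - 1) + 27 ∧ (3 ≤ m → 8 * m - 11 < 4 ^ (m - 1)) := by
  rcases Nat.lt_or_ge m 4 with h4 | h4
  · rcases Nat.lt_or_ge m 3 with h3 | h3
    · have : m = 2 := by omega
      subst this
      norm_num
    · have : m = 3 := by omega
      subst this
      norm_num
  · have h1 := pow_lin m h4
    refine ⟨by omega, by omega, by omega, by omega, fun _ => by omega⟩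

lemma kpow_ge {m : ℕ} (hk : 4 ≤ k) : 4 ^ m ≤ k ^ m := Nat.pow_le_pow_left hk m

lemma ev_mem_Mv {m : ℕ} {i : Fin n} (h : (i : ℕ) < m) : ev n k i ∈ Mv n k m :=
  Or.inl ⟨i, h, Or.inl rfl⟩

lemma pre_mem_Mv {m : ℕ} (h2 : 2 ≤ m) : pre n k m ∈ Mv n k m :=
  Or.inr ⟨m, h2, le_rfl, Or.inl rfl⟩

lemma mv_ne_zero (hk : 4 ≤ k) {m : ℕ} (hmn : m ≤ n) {x : V n k} (hx : x ∈ Mv n k m) :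
    x ≠ 0 := fun h => zero_not_mem_Mv hk hmn (h ▸ hx)

lemma adj_add_mv (hk : 4 ≤ k) {m : ℕ} (hmn : m ≤ n) {x : V n k} (hx : x ∈ Mv n k m)
    (u : V n k) : (Gr n k m).Adj u (u + x) := by
  refine ⟨by simpa using hx, fun h => mv_ne_zero hk hmn hx ?_⟩
  have := congrArg (fun z => z - u) h
  simpa using this.symm

lemma adj_sub_mv (hk : 4 ≤ k) {m : ℕ} (hmn : m ≤ n) {x : V n k} (hx : x ∈ Mv n k m)
    (u : V n k) : (Gr n k m).Adj u (u - x) := by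
  have h := adj_add_mv hk hmn (Mv_neg hx) u
  rwa [← sub_eq_add_neg] at h

lemma blk_add_mv {m : ℕ} {u₀ u : V n k} (hu : u ∈ blk n k m u₀) {x : V n k}
    (hx : ∀ j : Fin n, m ≤ (j : ℕ) → x j = 0) : u + x ∈ blk n k m u₀ := by
  intro j hj
  rw [Pi.add_apply, hx j hj, add_zero]
  exact hu j hj

lemma rch_line (hk : 4 ≤ k) {m : ℕ} (hmn : m ≤ n) {F : Set (V n k)} {x : V n k}
    (hx : x ∈ Mv n k m) (u : V n k) :
    ∀ t : ℕ, u ∉ F → (∀ s : ℕ, 1 ≤ s → s ≤ t → u + ((s : ℕ) : ZMod k) • x ∉ F) →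
    Rch n k m F u (u + ((t : ℕ) : ZMod k) • x) := by
  intro t
  induction t with
  | zero => intro hu _; simpa using rch_refl (m := m) hu
  | succ p ih =>
    intro hu hcond
    have h1 : Rch n k m F u (u + ((p : ℕ) : ZMod k) • x) :=
      ih hu (fun s hs1 hs2 => hcond s hs1 (by omega))
    have h2 : u + (((p + 1 : ℕ)) : ZMod k) • x = (u + ((p : ℕ) : ZMod k) • x) + x := by
      push_cast
      rw [add_smul, one_smul]
      ring
    have hlast : u + (((p + 1 : ℕ)) : ZMod k) • x ∉ F := hcond (p + 1) (by omega) le_rfl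
    have hprev : u + ((p : ℕ) : ZMod k) • x ∉ F := by
      rcases Nat.eq_zero_or_pos p with rfl | hp
      · simpa using hu
      · exact hcond p hp (by omega)
    refine rch_trans h1 ?_
    rw [h2]
    exact rch_step hprev (h2 ▸ hlast) (adj_add_mv hk hmn hx _)

end Props
section Conn1

variable {n k : ℕ}

lemma conn1 (hk : 4 ≤ k) (h1n : 1 ≤ n) : ConnP n k 1 := by
  intro u₀ F u v hF hu hv
  haveI : NeZero k := ⟨by omega⟩
  obtain ⟨hub, huF⟩ := hu
  obtain ⟨hvb, hvF⟩ := hv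
  set i0 : Fin n := ⟨0, by omega⟩ with hi0
  set e0 : V n k := ev n k i0 with he0
  have he0mem : e0 ∈ Mv n k 1 := ev_mem_Mv (show ((i0 : ℕ)) < 1 by simp [hi0])
  set a : ZMod k := v i0 - u i0 with ha
  have hsm : ∀ (c : ZMod k) (j : Fin n), j ≠ i0 → (c • e0) j = 0 := by
    intro c j hj
    rw [Pi.smul_apply, he0, ev_ne hj, smul_zero]
  have hsm0 : ∀ c : ZMod k, (c • e0) i0 = c := by
    intro c
    rw [Pi.smul_apply, he0, ev_self, smul_eq_mul, mul_one]
  have hva : v = u + a • e0 := by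
    funext j
    by_cases hj : j = i0
    · subst hj
      rw [Pi.add_apply, hsm0, ha]; ring
    · have hjv : 1 ≤ (j : ℕ) := by
        rcases Nat.eq_zero_or_pos (j : ℕ) with h | h
        · exact absurd (Fin.ext (by simp [hi0, h]) : j = i0) hj
        · omega
      rw [Pi.add_apply, hsm _ _ hj, add_zero, hvb j hjv, hub j hjv]
  have hpos_blk : ∀ c : ZMod k, u + c • e0 ∈ blk n k 1 u₀ := by
    intro c
    refine blk_add_mv hub (fun j hj => hsm c j ?_)
    intro h; subst h; simp [hi0] at hj
  by_cases hav : a = 0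
  · have : v = u := by rw [hva, hav]; simp
    subst this
    exact rch_refl huF
  · set t1 : ℕ := a.val with ht1
    have ht1k : t1 < k := ZMod.val_lt a
    have ht11 : 1 ≤ t1 := by
      rcases Nat.eq_zero_or_pos t1 with h | h
      · exact absurd (by rwa [← ZMod.val_eq_zero]) hav
      · exact h
    have hc1 : ((t1 : ℕ) : ZMod k) = a := by rw [ht1, ZMod.natCast_val, ZMod.cast_id]
    by_cases hup : ∀ s : ℕ, 1 ≤ s → s ≤ t1 → u + ((s : ℕ) : ZMod k) • e0 ∉ F
    · have hr := rch_line hk h1n he0mem u t1 huF hup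
      rw [hc1, ← hva] at hr
      exact hr
    · push_neg at hup
      obtain ⟨s₁, hs₁1, hs₁t, hs₁F⟩ := hup
      by_cases hdn : ∀ s : ℕ, 1 ≤ s → s ≤ k - t1 → u + ((s : ℕ) : ZMod k) • (-e0) ∉ F
      · have hr := rch_line hk h1n (Mv_neg he0mem) u (k - t1) huF hdn
        have hcast : (((k - t1 : ℕ)) : ZMod k) • (-e0) = a • e0 := by
          have h1 : (((k - t1 : ℕ)) : ZMod k) = - a := by
            rw [Nat.cast_sub (by omega), ZMod.natCast_self, hc1]; ring
          rw [h1, neg_smul, smul_neg, neg_neg]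
        rw [hcast, ← hva] at hr
        exact hr
      · push_neg at hdn
        obtain ⟨s₂', hs₂'1, hs₂'le, hs₂'F⟩ := hdn
        exfalso
        set s₂ : ℕ := k - s₂' with hs₂def
        have hcast2 : ((s₂' : ℕ) : ZMod k) • (-e0) = ((s₂ : ℕ) : ZMod k) • e0 := by
          have h1 : ((s₂ : ℕ) : ZMod k) = - ((s₂' : ℕ) : ZMod k) := by
            rw [hs₂def, Nat.cast_sub (by omega), ZMod.natCast_self]; ring
          rw [h1, neg_smul, smul_neg]
        rw [hcast2] at hs₂'F
        have hs₁lt : s₁ < t1 := by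
          rcases Nat.lt_or_ge s₁ t1 with h | h
          · exact h
          · exfalso
            have : s₁ = t1 := by omega
            subst this
            rw [hc1, ← hva] at hs₁F
            exact hvF hs₁F
        have hs₂gt : t1 < s₂ := by
          have hge : t1 ≤ s₂ := by omega
          rcases Nat.lt_or_ge t1 s₂ with h | h
          · exact h
          · exfalso
            have heq : s₂ = t1 := by omega
            rw [heq, hc1, ← hva] at hs₂'F
            exact hvF hs₂'F
        have hne : u + ((s₁ : ℕ) : ZMod k) • e0 ≠ u + ((s₂ : ℕ) : ZMod k) • e0 := by
          intro h
          have := congrFun h i0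
          rw [Pi.add_apply, Pi.add_apply, hsm0, hsm0] at this
          have h2 : ((s₁ : ℕ) : ZMod k) = ((s₂ : ℕ) : ZMod k) := by linear_combination this
          have h3 := congrArg ZMod.val h2
          rw [ZMod.val_cast_of_lt (by omega), ZMod.val_cast_of_lt (by omega)] at h3
          omega
        have h2card : 1 < (F ∩ blk n k 1 u₀).ncard := by
          rw [Set.one_lt_ncard (Set.toFinite _)]
          exact ⟨_, ⟨hs₁F, hpos_blk _⟩, _, ⟨hs₂'F, hpos_blk _⟩, hne⟩
        omega

lemma split_one (hk : 4 ≤ k) (h1n : 1 ≤ n) : SplitP n k 1 := by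
  intro u₀ F S T hST hdisj hno hF
  haveI : NeZero k := ⟨by omega⟩
  by_contra hcon
  push_neg at hcon
  obtain ⟨hS1, hT1⟩ := hcon
  obtain ⟨s, hs⟩ : S.Nonempty := by
    rw [← Set.ncard_pos (Set.toFinite _)]; omega
  obtain ⟨t, ht⟩ : T.Nonempty := by
    rw [← Set.ncard_pos (Set.toFinite _)]; omega
  have hsb : s ∈ blk n k 1 u₀ \ F := by rw [← hST]; exact Or.inl hs
  have htb : t ∈ blk n k 1 u₀ \ F := by rw [← hST]; exact Or.inr ht
  have hr := conn1 hk h1n u₀ F s t (by omega) hsb htb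
  exact Set.disjoint_left.mp hdisj (rch_side hST hno hs hr) ht

lemma blk_eq_of_mem {m : ℕ} {u₀ w : V n k} (h : w ∈ blk n k m u₀) :
    blk n k m w = blk n k m u₀ := by
  ext z
  exact ⟨fun hz => blk_trans hz h, fun hz => blk_trans hz (blk_symm h)⟩

lemma nbr_sub_blk {m : ℕ} {u₀ u : V n k} (hu : u ∈ blk n k m u₀) :
    nbr n k m u ⊆ blk n k m u₀ := by
  intro z hz
  exact blk_of_adj hu hz

lemma conn_of_split (hk : 4 ≤ k) {m : ℕ} (hm : 2 ≤ m) (hmn : m ≤ n)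
    (hs : SplitP n k m) : ConnP n k m := by
  intro u₀ F u v hF hu hv
  haveI : NeZero k := ⟨by omega⟩
  by_contra hnr
  set S : Set (V n k) := {z | z ∈ blk n k m u₀ \ F ∧ Rch n k m F u z} with hSdef
  set T : Set (V n k) := (blk n k m u₀ \ F) \ S with hTdef
  have hSsub : S ⊆ blk n k m u₀ \ F := fun z hz => hz.1
  have hST : S ∪ T = blk n k m u₀ \ F := Set.union_diff_cancel hSsub
  have hdisj : Disjoint S T := disjoint_sdiff_self_right
  have hno : ∀ s ∈ S, ∀ t ∈ T, ¬ (Gr n k m).Adj s t := by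
    rintro s hsS t ⟨htb, htS⟩ hadj
    exact htS ⟨htb, rch_trans hsS.2 (rch_step hsS.1.2 htb.2 hadj)⟩
  have huS : u ∈ S := ⟨hu, rch_refl hu.2⟩
  have hvT : v ∈ T := ⟨hv, fun hS => hnr hS.2⟩
  have hiso : ∀ w ∈ blk n k m u₀ \ F, (∀ z ∈ nbr n k m w, z ∈ F) → False := by
    intro w hwb hz
    have hsub : nbr n k m w ⊆ F ∩ blk n k m u₀ := fun z hzn =>
      ⟨hz z hzn, nbr_sub_blk hwb.1 hzn⟩
    have h1 := Set.ncard_le_ncard hsub (Set.toFinite _)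
    rw [nbr_card hk (by omega) hmn] at h1
    omega
  rcases hs u₀ F S T hST hdisj hno (by omega) with h1 | h1
  · refine hiso u hu ?_
    intro z hzn
    by_contra hzF
    have hzb : z ∈ blk n k m u₀ := nbr_sub_blk hu.1 hzn
    have : z ∈ S ∪ T := by rw [hST]; exact ⟨hzb, hzF⟩
    rcases this with h | h
    · have : z = u := by
        by_contra hne
        have : 1 < S.ncard := by
          rw [Set.one_lt_ncard (Set.toFinite _)]
          exact ⟨z, h, u, huS, hne⟩
        omega
      subst this
      exact (Gr n k m).loopless.irrefl z hzn
    · exact hno u huS z h hzn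
  · refine hiso v hv ?_
    intro z hzn
    by_contra hzF
    have hzb : z ∈ blk n k m u₀ := nbr_sub_blk hv.1 hzn
    have : z ∈ S ∪ T := by rw [hST]; exact ⟨hzb, hzF⟩
    rcases this with h | h
    · exact hno z h v hvT ((Gr n k m).adj_symm hzn)
    · have : z = v := by
        by_contra hne
        have : 1 < T.ncard := by
          rw [Set.one_lt_ncard (Set.toFinite _)]
          exact ⟨z, h, v, hvT, hne⟩
        omega
      subst this
      exact (Gr n k m).loopless.irrefl z hzn
end Conn1
section Layers

variable {n k : ℕ}

lemma zmod_shift_ne (hk : 4 ≤ k) {c : ZMod k} {a b : ℕ} (ha : a < k) (hb : b < k)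
    (hne : a ≠ b) : c + (a : ZMod k) ≠ c + (b : ZMod k) := by
  haveI : NeZero k := ⟨by omega⟩
  intro h
  have h1 : ((a : ℕ) : ZMod k) = ((b : ℕ) : ZMod k) := by linear_combination h
  have h2 := congrArg ZMod.val h1
  rw [ZMod.val_cast_of_lt ha, ZMod.val_cast_of_lt hb] at h2
  exact hne h2

lemma zmod_cast_km1 (hk : 4 ≤ k) : (((k - 1 : ℕ)) : ZMod k) = -1 := by
  haveI : NeZero k := ⟨by omega⟩
  rw [Nat.cast_sub (by omega), ZMod.natCast_self]
  simp

/-- the top coordinate evaluation data for the two "up" moves -/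
lemma ev_top_facts {m : ℕ} (hm : 2 ≤ m) (hmn : m ≤ n) (him1 : m - 1 < n) :
    (∀ j : Fin n, m ≤ (j : ℕ) → ev n k ⟨m - 1, him1⟩ j = 0) ∧
    ev n k ⟨m - 1, him1⟩ ⟨m - 1, him1⟩ = 1 ∧
    (∀ j : Fin n, m ≤ (j : ℕ) → pre n k m j = 0) ∧
    pre n k m ⟨m - 1, him1⟩ = 1 := by
  refine ⟨fun j hj => ev_ne ?_, ev_self _, fun j hj => pre_ge (by omega),
    pre_lt (show m - 1 < m by omega)⟩
  intro h
  subst h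
  rw [show ((⟨m - 1, him1⟩ : Fin n) : ℕ) = m - 1 from rfl] at hj
  omega

/-- adding a "vertical" vector moves between layers -/
lemma lay_shift {m : ℕ} (him1 : m - 1 < n) {u₀ : V n k} {c : ZMod k} {x : V n k}
    (hx : x ∈ lay n k m him1 u₀ c) {w : V n k} (hw : ∀ j : Fin n, m ≤ (j : ℕ) → w j = 0) :
    x + w ∈ lay n k m him1 u₀ (c + w ⟨m - 1, him1⟩) := by
  refine ⟨blk_add_mv hx.1 hw, ?_⟩
  rw [Pi.add_apply, hx.2]

lemma lay_nonfault_card (hk : 4 ≤ k) {m : ℕ} (hm : 1 ≤ m) (hmn : m ≤ n) (him1 : m - 1 < n)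
    (u₀ : V n k) (F : Set (V n k)) (c : ZMod k) :
    (lay n k m him1 u₀ c \ F).ncard = k ^ (m - 1) - (F ∩ lay n k m him1 u₀ c).ncard := by
  haveI : NeZero k := ⟨by omega⟩
  have h1 : lay n k m him1 u₀ c \ F = lay n k m him1 u₀ c \ (F ∩ lay n k m him1 u₀ c) := by
    ext z
    simp only [Set.mem_diff, Set.mem_inter_iff]
    tauto
  rw [h1, Set.ncard_diff Set.inter_subset_right (Set.toFinite _),
    lay_card hk hm hmn him1 u₀ c]

lemma lay_nonfault_nonempty (hk : 4 ≤ k) {m : ℕ} (hm : 1 ≤ m) (hmn : m ≤ n)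
    (him1 : m - 1 < n) (u₀ : V n k) (F : Set (V n k)) (c : ZMod k)
    (h : (F ∩ lay n k m him1 u₀ c).ncard < k ^ (m - 1)) :
    (lay n k m him1 u₀ c \ F).Nonempty := by
  haveI : NeZero k := ⟨by omega⟩
  rw [← Set.ncard_pos (Set.toFinite _), lay_nonfault_card hk hm hmn him1]
  omega

/-- fault counts of two distinct layers add up inside the block -/
lemma flay2 (hk : 4 ≤ k) {m : ℕ} (him1 : m - 1 < n) (u₀ : V n k) (F : Set (V n k))
    {c₁ c₂ : ZMod k} (h12 : c₁ ≠ c₂) :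
    (F ∩ lay n k m him1 u₀ c₁).ncard + (F ∩ lay n k m him1 u₀ c₂).ncard ≤
      (F ∩ blk n k m u₀).ncard := by
  haveI : NeZero k := ⟨by omega⟩
  exact ncard_two_disj_le
    (Set.inter_subset_inter_right F (lay_sub him1 u₀ c₁))
    (Set.inter_subset_inter_right F (lay_sub him1 u₀ c₂))
    (Set.disjoint_of_subset Set.inter_subset_right Set.inter_subset_right
      (lay_disjoint him1 u₀ h12))

lemma flay3 (hk : 4 ≤ k) {m : ℕ} (him1 : m - 1 < n) (u₀ : V n k) (F : Set (V n k))
    {c₁ c₂ c₃ : ZMod k} (h12 : c₁ ≠ c₂) (h13 : c₁ ≠ c₃) (h23 : c₂ ≠ c₃) :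
    (F ∩ lay n k m him1 u₀ c₁).ncard + (F ∩ lay n k m him1 u₀ c₂).ncard +
      (F ∩ lay n k m him1 u₀ c₃).ncard ≤ (F ∩ blk n k m u₀).ncard := by
  haveI : NeZero k := ⟨by omega⟩
  exact ncard_three_disj_le
    (Set.inter_subset_inter_right F (lay_sub him1 u₀ c₁))
    (Set.inter_subset_inter_right F (lay_sub him1 u₀ c₂))
    (Set.inter_subset_inter_right F (lay_sub him1 u₀ c₃))
    (Set.disjoint_of_subset Set.inter_subset_right Set.inter_subset_right
      (lay_disjoint him1 u₀ h12))
    (Set.disjoint_of_subset Set.inter_subset_right Set.inter_subset_right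
      (lay_disjoint him1 u₀ h13))
    (Set.disjoint_of_subset Set.inter_subset_right Set.inter_subset_right
      (lay_disjoint him1 u₀ h23))

/-- a surviving edge between two consecutive layers with few total faults -/
lemma dist1 (hk : 4 ≤ k) {m : ℕ} (hm : 2 ≤ m) (hmn : m ≤ n) (him1 : m - 1 < n)
    (u₀ : V n k) (F : Set (V n k)) (c : ZMod k)
    (hcnt : (F ∩ lay n k m him1 u₀ c).ncard + (F ∩ lay n k m him1 u₀ (c + 1)).ncard
      < k ^ (m - 1)) :
    ∃ x ∈ lay n k m him1 u₀ c \ F, ∃ y ∈ lay n k m him1 u₀ (c + 1) \ F,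
      (Gr n k m).Adj x y := by
  haveI : NeZero k := ⟨by omega⟩
  obtain ⟨hehi, hetop, -, -⟩ := ev_top_facts (k := k) hm hmn him1
  by_contra hno
  push_neg at hno
  have hsub : (fun z => z + ev n k ⟨m - 1, him1⟩) '' (lay n k m him1 u₀ c \ F) ⊆
      F ∩ lay n k m him1 u₀ (c + 1) := by
    rintro z ⟨x, hx, rfl⟩
    have hlay : x + ev n k ⟨m - 1, him1⟩ ∈ lay n k m him1 u₀ (c + 1) := by
      have := lay_shift him1 hx.1 hehi
      rwa [hetop] at this
    refine ⟨?_, hlay⟩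
    by_contra hF
    exact hno x hx _ ⟨hlay, hF⟩ (adj_add_mv hk hmn (ev_mem_Mv (by simp; omega)) x)
  have h1 := Set.ncard_le_ncard hsub (Set.toFinite _)
  rw [ncard_translate, lay_nonfault_card hk (by omega) hmn him1] at h1
  omega

/-- crossing a single (possibly bad) layer whose two neighbouring layers have ≤ 1 fault -/
lemma crossA (hk : 4 ≤ k) {m : ℕ} (hm : 2 ≤ m) (hmn : m ≤ n) (him1 : m - 1 < n)
    (u₀ : V n k) (F : Set (V n k)) (h : ZMod k)
    (hfh : (F ∩ lay n k m him1 u₀ h).ncard < k ^ (m - 1))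
    (hfd : (F ∩ lay n k m him1 u₀ (h - 1)).ncard ≤ 1)
    (hfu : (F ∩ lay n k m him1 u₀ (h + 1)).ncard ≤ 1) :
    ∃ w ∈ lay n k m him1 u₀ h \ F, ∃ xd ∈ lay n k m him1 u₀ (h - 1) \ F,
      ∃ xu ∈ lay n k m him1 u₀ (h + 1) \ F, (Gr n k m).Adj xd w ∧ (Gr n k m).Adj w xu := by
  haveI : NeZero k := ⟨by omega⟩
  obtain ⟨hehi, hetop, hdhi, hdtop⟩ := ev_top_facts (k := k) hm hmn him1
  obtain ⟨w, hw⟩ := lay_nonfault_nonempty hk (by omega) hmn him1 u₀ F h hfh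
  set e := ev n k ⟨m - 1, him1⟩ with he
  set d := pre n k m with hd
  have hed : e ≠ d := by
    intro hcontra
    have := congrFun hcontra ⟨0, by omega⟩
    rw [he, hd, ev_ne (by intro hh; have := congrArg Fin.val hh; simp at this; omega),
      pre_lt (by simp; omega)] at this
    exact z10 hk this.symm
  have hnehi : ∀ j : Fin n, m ≤ (j : ℕ) → (-e) j = 0 := by
    intro j hj; rw [Pi.neg_apply, hehi j hj, neg_zero]
  have hndhi : ∀ j : Fin n, m ≤ (j : ℕ) → (-d) j = 0 := by
    intro j hj; rw [Pi.neg_apply, hdhi j hj, neg_zero]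
  have hwd1 : w - e ∈ lay n k m him1 u₀ (h - 1) := by
    have := lay_shift him1 hw.1 hnehi
    rw [Pi.neg_apply, hetop] at this
    rwa [show w + -e = w - e from (sub_eq_add_neg w e).symm,
      show h + -(1 : ZMod k) = h - 1 from by ring] at this
  have hwd2 : w - d ∈ lay n k m him1 u₀ (h - 1) := by
    have := lay_shift him1 hw.1 hndhi
    rw [Pi.neg_apply, hdtop] at this
    rwa [show w + -d = w - d from (sub_eq_add_neg w d).symm,
      show h + -(1 : ZMod k) = h - 1 from by ring] at this
  have hwu1 : w + e ∈ lay n k m him1 u₀ (h + 1) := by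
    have := lay_shift him1 hw.1 hehi
    rwa [hetop] at this
  have hwu2 : w + d ∈ lay n k m him1 u₀ (h + 1) := by
    have := lay_shift him1 hw.1 hdhi
    rwa [hdtop] at this
  have hdistinct_d : w - e ≠ w - d := by
    intro hcontra
    exact hed (by linear_combination -hcontra)
  have hdistinct_u : w + e ≠ w + d := by
    intro hcontra
    exact hed (by linear_combination hcontra)
  have hdown : w - e ∉ F ∨ w - d ∉ F := by
    by_contra hcontra
    push_neg at hcontra
    have : 1 < (F ∩ lay n k m him1 u₀ (h - 1)).ncard := by
      rw [Set.one_lt_ncard (Set.toFinite _)]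
      exact ⟨w - e, ⟨hcontra.1, hwd1⟩, w - d, ⟨hcontra.2, hwd2⟩, hdistinct_d⟩
    omega
  have hup : w + e ∉ F ∨ w + d ∉ F := by
    by_contra hcontra
    push_neg at hcontra
    have : 1 < (F ∩ lay n k m him1 u₀ (h + 1)).ncard := by
      rw [Set.one_lt_ncard (Set.toFinite _)]
      exact ⟨w + e, ⟨hcontra.1, hwu1⟩, w + d, ⟨hcontra.2, hwu2⟩, hdistinct_u⟩
    omega
  have hemem : e ∈ Mv n k m := ev_mem_Mv (by simp; omega)
  have hdmem : d ∈ Mv n k m := pre_mem_Mv hm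
  rcases hdown with hc | hc <;> rcases hup with hc2 | hc2
  · exact ⟨w, hw, w - e, ⟨hwd1, hc⟩, w + e, ⟨hwu1, hc2⟩,
      (Gr n k m).adj_symm (adj_sub_mv hk hmn hemem w), adj_add_mv hk hmn hemem w⟩
  · exact ⟨w, hw, w - e, ⟨hwd1, hc⟩, w + d, ⟨hwu2, hc2⟩,
      (Gr n k m).adj_symm (adj_sub_mv hk hmn hemem w), adj_add_mv hk hmn hdmem w⟩
  · exact ⟨w, hw, w - d, ⟨hwd2, hc⟩, w + e, ⟨hwu1, hc2⟩,
      (Gr n k m).adj_symm (adj_sub_mv hk hmn hdmem w), adj_add_mv hk hmn hemem w⟩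
  · exact ⟨w, hw, w - d, ⟨hwd2, hc⟩, w + d, ⟨hwu2, hc2⟩,
      (Gr n k m).adj_symm (adj_sub_mv hk hmn hdmem w), adj_add_mv hk hmn hdmem w⟩

end Layers
section Chain

variable {n k : ℕ}

lemma layconn (hk : 4 ≤ k) {m : ℕ} (hm : 2 ≤ m) (hmn : m ≤ n) (him1 : m - 1 < n)
    (hc : ConnP n k (m - 1)) {u₀ : V n k} {F : Set (V n k)} {c : ZMod k}
    (hfc : (F ∩ lay n k m him1 u₀ c).ncard ≤ 4 * m - 7) :
    ∀ x ∈ lay n k m him1 u₀ c \ F, ∀ y ∈ lay n k m him1 u₀ c \ F, Rch n k m F x y := by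
  rintro x ⟨hxl, hxF⟩ y ⟨hyl, hyF⟩
  have hlay := lay_eq_blk (show 1 ≤ m by omega) him1 u₀ c hxl
  have hxb : x ∈ blk n k (m - 1) x \ F := ⟨blk_refl _ _, hxF⟩
  have hyb : y ∈ blk n k (m - 1) x \ F := ⟨by rw [← hlay]; exact hyl, hyF⟩
  have hFc : (F ∩ blk n k (m - 1) x).ncard ≤ 4 * (m - 1) - 3 := by
    rw [← hlay]
    have : (4 : ℕ) * (m - 1) - 3 = 4 * m - 7 := by omega
    omega
  exact rch_mono (by omega) (hc x F x y hFc hxb hyb)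

lemma chain (hk : 4 ≤ k) {m : ℕ} (hm : 2 ≤ m) (hmn : m ≤ n) (him1 : m - 1 < n)
    {u₀ : V n k} {F : Set (V n k)}
    (hconn : ∀ c : ZMod k, (F ∩ lay n k m him1 u₀ c).ncard ≤ 4 * m - 7 →
      ∀ x ∈ lay n k m him1 u₀ c \ F, ∀ y ∈ lay n k m him1 u₀ c \ F, Rch n k m F x y) :
    ∀ (t : ℕ) (c : ZMod k),
    (∀ i : ℕ, i ≤ t → (F ∩ lay n k m him1 u₀ (c + (i : ZMod k))).ncard ≤ 4 * m - 7) →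
    ∀ x ∈ lay n k m him1 u₀ c \ F, ∀ y ∈ lay n k m him1 u₀ (c + ((t : ℕ) : ZMod k)) \ F,
      Rch n k m F x y := by
  intro t
  induction t with
  | zero =>
    intro c hgood x hx y hy
    have h0 := hgood 0 le_rfl
    rw [Nat.cast_zero, add_zero] at h0 hy
    exact hconn c h0 x hx y hy
  | succ p ih =>
    intro c hgood x hx y hy
    have hcast : (((p + 1 : ℕ)) : ZMod k) = ((p : ℕ) : ZMod k) + 1 := by push_cast; ring
    rw [hcast, ← add_assoc] at hy
    have h1 := hgood p (by omega)
    have h2 := hgood (p + 1) le_rfl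
    rw [hcast, ← add_assoc] at h2
    have hd1 : (F ∩ lay n k m him1 u₀ (c + ((p : ℕ) : ZMod k))).ncard +
        (F ∩ lay n k m him1 u₀ (c + ((p : ℕ) : ZMod k) + 1)).ncard < k ^ (m - 1) := by
      have hp := (pow_facts hm).1
      have hkp := kpow_ge (m := m - 1) hk
      omega
    obtain ⟨x', hx', y', hy', hadj⟩ := dist1 hk hm hmn him1 u₀ F (c + ((p : ℕ) : ZMod k)) hd1
    have hr1 : Rch n k m F x x' := ih c (fun i hi => hgood i (by omega)) x hx x' hx'
    have hstep := rch_step hx'.2 hy'.2 hadj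
    have hr3 : Rch n k m F y' y := hconn _ h2 y' hy' y hy
    exact rch_trans (rch_trans hr1 hstep) hr3

end Chain
section GoodConn

variable {n k : ℕ}

lemma val_cast_zmod (hk : 4 ≤ k) (z : ZMod k) : ((z.val : ℕ) : ZMod k) = z := by
  haveI : NeZero k := ⟨by omega⟩
  rw [ZMod.natCast_val, ZMod.cast_id]

lemma val_pos_of_ne (hk : 4 ≤ k) {z : ZMod k} (h : z ≠ 0) : 1 ≤ z.val := by
  haveI : NeZero k := ⟨by omega⟩
  rcases Nat.eq_zero_or_pos z.val with h0 | h1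
  · exact absurd ((ZMod.val_eq_zero z).mp h0) h
  · exact h1

lemma val_lt_k (hk : 4 ≤ k) (z : ZMod k) : z.val < k := by
  haveI : NeZero k := ⟨by omega⟩
  exact ZMod.val_lt z

lemma cast_eq_zero_iff_val (hk : 4 ≤ k) {s : ℕ} (hs : s < k) :
    ((s : ℕ) : ZMod k) = 0 ↔ s = 0 := by
  haveI : NeZero k := ⟨by omega⟩
  constructor
  · intro h
    have := congrArg ZMod.val h
    rwa [ZMod.val_cast_of_lt hs, ZMod.val_zero] at this
  · rintro rfl; simp

lemma chain_between (hk : 4 ≤ k) {m : ℕ} (hm : 2 ≤ m) (hmn : m ≤ n) (him1 : m - 1 < n)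
    {u₀ : V n k} {F : Set (V n k)}
    (hconn : ∀ c : ZMod k, (F ∩ lay n k m him1 u₀ c).ncard ≤ 4 * m - 7 →
      ∀ x ∈ lay n k m him1 u₀ c \ F, ∀ y ∈ lay n k m him1 u₀ c \ F, Rch n k m F x y)
    {cb : ZMod k} {i j : ℕ} (hij : i ≤ j)
    (hgood : ∀ s : ℕ, i ≤ s → s ≤ j →
      (F ∩ lay n k m him1 u₀ (cb + (s : ZMod k))).ncard ≤ 4 * m - 7)
    {x y : V n k} (hx : x ∈ lay n k m him1 u₀ (cb + (i : ZMod k)) \ F)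
    (hy : y ∈ lay n k m him1 u₀ (cb + (j : ZMod k)) \ F) :
    Rch n k m F x y := by
  have hcast : cb + (j : ZMod k) = (cb + (i : ZMod k)) + ((j - i : ℕ) : ZMod k) := by
    rw [Nat.cast_sub hij]; ring
  rw [hcast] at hy
  refine chain hk hm hmn him1 hconn (j - i) (cb + (i : ZMod k)) (fun s hs => ?_) x hx y hy
  have heq : cb + (i : ZMod k) + (s : ZMod k) = cb + ((i + s : ℕ) : ZMod k) := by
    push_cast; ring
  rw [heq]
  exact hgood (i + s) (by omega) (by omega)

lemma goodconn (hk : 4 ≤ k) {m : ℕ} (hm : 2 ≤ m) (hmn : m ≤ n) (him1 : m - 1 < n)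
    {u₀ : V n k} {F : Set (V n k)}
    (hFtot : (F ∩ blk n k m u₀).ncard ≤ 8 * m - 11)
    (hconn : ∀ c : ZMod k, (F ∩ lay n k m him1 u₀ c).ncard ≤ 4 * m - 7 →
      ∀ x ∈ lay n k m him1 u₀ c \ F, ∀ y ∈ lay n k m him1 u₀ c \ F, Rch n k m F x y)
    {c c' : ZMod k}
    (hgc : (F ∩ lay n k m him1 u₀ c).ncard ≤ 4 * m - 7)
    (hgc' : (F ∩ lay n k m him1 u₀ c').ncard ≤ 4 * m - 7)
    {x y : V n k} (hx : x ∈ lay n k m him1 u₀ c \ F) (hy : y ∈ lay n k m him1 u₀ c' \ F) :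
    Rch n k m F x y := by
  haveI : NeZero k := ⟨by omega⟩
  by_cases hH : ∃ h : ZMod k, ¬ (F ∩ lay n k m him1 u₀ h).ncard ≤ 4 * m - 7
  case neg =>
    push_neg at hH
    set t := (c' - c).val with ht
    have hceq : c' = c + ((t : ℕ) : ZMod k) := by rw [ht, val_cast_zmod hk]; ring
    rw [hceq] at hy
    rw [show c = c + ((0 : ℕ) : ZMod k) by simp] at hx
    exact chain_between hk hm hmn him1 hconn (by omega) (fun s _ _ => hH _) hx hy
  case pos =>
  obtain ⟨h₁, hh₁⟩ := hH
  by_cases hH2 : ∃ h₂ : ZMod k, ¬ (F ∩ lay n k m him1 u₀ h₂).ncard ≤ 4 * m - 7 ∧ h₂ ≠ h₁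
  case neg =>
    -- exactly one heavy layer h₁
    have huniq : ∀ z : ZMod k, ¬ (F ∩ lay n k m him1 u₀ z).ncard ≤ 4 * m - 7 → z = h₁ := by
      intro z hz
      by_contra hne
      exact hH2 ⟨z, hz, hne⟩
    have hgood_off : ∀ s : ℕ, 1 ≤ s → s < k →
        (F ∩ lay n k m him1 u₀ (h₁ + (s : ZMod k))).ncard ≤ 4 * m - 7 := by
      intro s hs1 hsk
      by_contra hbad
      have hz := huniq _ hbad
      have : ((s : ℕ) : ZMod k) = 0 := by linear_combination hz
      rw [cast_eq_zero_iff_val hk hsk] at this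
      omega
    set i := (c - h₁).val with hi
    set j := (c' - h₁).val with hj
    have hceq : c = h₁ + ((i : ℕ) : ZMod k) := by rw [hi, val_cast_zmod hk]; ring
    have hceq' : c' = h₁ + ((j : ℕ) : ZMod k) := by rw [hj, val_cast_zmod hk]; ring
    have hine : c ≠ h₁ := fun h => hh₁ (h ▸ hgc)
    have hjne : c' ≠ h₁ := fun h => hh₁ (h ▸ hgc')
    have hi1 : 1 ≤ i := val_pos_of_ne hk (fun h => hine (by linear_combination h))
    have hj1 : 1 ≤ j := val_pos_of_ne hk (fun h => hjne (by linear_combination h))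
    have hik : i < k := val_lt_k hk _
    have hjk : j < k := val_lt_k hk _
    rw [hceq] at hx
    rw [hceq'] at hy
    rcases le_total i j with hij | hij
    · exact chain_between hk hm hmn him1 hconn hij
        (fun s hs1 hs2 => hgood_off s (by omega) (by omega)) hx hy
    · exact rch_symm (chain_between hk hm hmn him1 hconn hij
        (fun s hs1 hs2 => hgood_off s (by omega) (by omega)) hy hx)
  case pos =>
  obtain ⟨h₂, hh₂, hne21⟩ := hH2
  have hfc1 : 4 * m - 6 ≤ (F ∩ lay n k m him1 u₀ h₁).ncard := by omega
  have hfc2 : 4 * m - 6 ≤ (F ∩ lay n k m him1 u₀ h₂).ncard := by omega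
  have huniq2 : ∀ z : ZMod k, ¬ (F ∩ lay n k m him1 u₀ z).ncard ≤ 4 * m - 7 →
      z = h₁ ∨ z = h₂ := by
    intro z hz
    by_contra hcon
    push_neg at hcon
    have h3 := flay3 hk him1 u₀ F hne21.symm (Ne.symm hcon.1) (Ne.symm hcon.2)
    omega
  have hgood_rest : ∀ z : ZMod k, z ≠ h₁ → z ≠ h₂ → (F ∩ lay n k m him1 u₀ z).ncard ≤ 1 := by
    intro z hz1 hz2
    have h3 := flay3 hk him1 u₀ F hne21.symm (Ne.symm hz1) (Ne.symm hz2)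
    omega
  set g := (h₂ - h₁).val with hg
  have hgeq : h₂ = h₁ + ((g : ℕ) : ZMod k) := by rw [hg, val_cast_zmod hk]; ring
  have hg1 : 1 ≤ g := val_pos_of_ne hk (fun h => hne21 (by linear_combination h))
  have hgk : g < k := val_lt_k hk _
  by_cases hadjacent : g = 1 ∨ g = k - 1
  case pos =>
    -- the two heavy layers are adjacent
    obtain ⟨hA, hB, hBA, hAheavy, hBheavy, hset⟩ :
        ∃ hA hB : ZMod k, hB = hA + 1 ∧
          (¬ (F ∩ lay n k m him1 u₀ hA).ncard ≤ 4 * m - 7) ∧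
          (¬ (F ∩ lay n k m him1 u₀ hB).ncard ≤ 4 * m - 7) ∧
          (∀ z : ZMod k, (z = h₁ ∨ z = h₂) → (z = hA ∨ z = hB)) := by
      rcases hadjacent with h | h
      · exact ⟨h₁, h₂, by rw [hgeq, h]; push_cast; ring, hh₁, hh₂, fun z hz => hz⟩
      · refine ⟨h₂, h₁, ?_, hh₂, hh₁, fun z hz => hz.symm⟩
        rw [hgeq, h, zmod_cast_km1 hk]; ring
    have huniqAB : ∀ z : ZMod k, ¬ (F ∩ lay n k m him1 u₀ z).ncard ≤ 4 * m - 7 →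
        z = hA ∨ z = hB := fun z hz => hset z (huniq2 z hz)
    have hgood_off : ∀ s : ℕ, 2 ≤ s → s < k →
        (F ∩ lay n k m him1 u₀ (hA + (s : ZMod k))).ncard ≤ 4 * m - 7 := by
      intro s hs2 hsk
      by_contra hbad
      rcases huniqAB _ hbad with hz | hz
      · have : ((s : ℕ) : ZMod k) = 0 := by linear_combination hz
        rw [cast_eq_zero_iff_val hk hsk] at this
        omega
      · rw [hBA] at hz
        have : ((s : ℕ) : ZMod k) = ((1 : ℕ) : ZMod k) := by push_cast; linear_combination hz
        have h2 := congrArg ZMod.val this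
        rw [ZMod.val_cast_of_lt hsk, ZMod.val_cast_of_lt (by omega)] at h2
        omega
    set i := (c - hA).val with hi
    set j := (c' - hA).val with hj
    have hceq : c = hA + ((i : ℕ) : ZMod k) := by rw [hi, val_cast_zmod hk]; ring
    have hceq' : c' = hA + ((j : ℕ) : ZMod k) := by rw [hj, val_cast_zmod hk]; ring
    have hik : i < k := val_lt_k hk _
    have hjk : j < k := val_lt_k hk _
    have hi2 : 2 ≤ i := by
      rcases Nat.lt_or_ge i 2 with h | h
      · exfalso
        interval_cases i
        · exact hAheavy (by
            have : c = hA := by rw [hceq]; simp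
            rwa [this] at hgc)
        · exact hBheavy (by
            have : c = hB := by rw [hceq, hBA]; push_cast; ring
            rwa [this] at hgc)
      · exact h
    have hj2 : 2 ≤ j := by
      rcases Nat.lt_or_ge j 2 with h | h
      · exfalso
        interval_cases j
        · exact hAheavy (by
            have : c' = hA := by rw [hceq']; simp
            rwa [this] at hgc')
        · exact hBheavy (by
            have : c' = hB := by rw [hceq', hBA]; push_cast; ring
            rwa [this] at hgc')
      · exact h
    rw [hceq] at hx
    rw [hceq'] at hy
    rcases le_total i j with hij | hij
    · exact chain_between hk hm hmn him1 hconn hij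
        (fun s hs1 hs2 => hgood_off s (by omega) (by omega)) hx hy
    · exact rch_symm (chain_between hk hm hmn him1 hconn hij
        (fun s hs1 hs2 => hgood_off s (by omega) (by omega)) hy hx)
  case neg =>
  -- two non-adjacent heavy layers h₁ and h₂ = h₁ + g, 2 ≤ g ≤ k - 2
  push_neg at hadjacent
  have hg2 : 2 ≤ g := by
    rcases Nat.lt_or_ge g 2 with h | h
    · exfalso; omega
    · exact h
  have hgk2 : g ≤ k - 2 := by omega
  have hgood_off : ∀ s : ℕ, 1 ≤ s → s < k → s ≠ g →
      (F ∩ lay n k m him1 u₀ (h₁ + (s : ZMod k))).ncard ≤ 4 * m - 7 := by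
    intro s hs1 hsk hsg
    by_contra hbad
    rcases huniq2 _ hbad with hz | hz
    · have : ((s : ℕ) : ZMod k) = 0 := by linear_combination hz
      rw [cast_eq_zero_iff_val hk hsk] at this
      omega
    · rw [hgeq] at hz
      have : ((s : ℕ) : ZMod k) = ((g : ℕ) : ZMod k) := by linear_combination hz
      have h2 := congrArg ZMod.val this
      rw [ZMod.val_cast_of_lt hsk, ZMod.val_cast_of_lt hgk] at h2
      omega
  set i := (c - h₁).val with hi
  set j := (c' - h₁).val with hj
  have hceq : c = h₁ + ((i : ℕ) : ZMod k) := by rw [hi, val_cast_zmod hk]; ring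
  have hceq' : c' = h₁ + ((j : ℕ) : ZMod k) := by rw [hj, val_cast_zmod hk]; ring
  have hik : i < k := val_lt_k hk _
  have hjk : j < k := val_lt_k hk _
  have hi1 : 1 ≤ i := val_pos_of_ne hk (fun h => hh₁ (by
    have : c = h₁ := by linear_combination h
    rwa [this] at hgc))
  have hj1 : 1 ≤ j := val_pos_of_ne hk (fun h => hh₁ (by
    have : c' = h₁ := by linear_combination h
    rwa [this] at hgc'))
  have hig : i ≠ g := by
    intro h
    apply hh₂
    have : c = h₂ := by rw [hceq, h, ← hgeq]
    rwa [this] at hgc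
  have hjg : j ≠ g := by
    intro h
    apply hh₂
    have : c' = h₂ := by rw [hceq', h, ← hgeq]
    rwa [this] at hgc'
  rw [hceq] at hx
  rw [hceq'] at hy
  -- helper for the mixed case: connect from the low arc to the high arc through h₂
  have hmixed : ∀ (iA iB : ℕ), 1 ≤ iA → iA < g → g < iB → iB < k →
      ∀ xA ∈ lay n k m him1 u₀ (h₁ + ((iA : ℕ) : ZMod k)) \ F,
      ∀ yB ∈ lay n k m him1 u₀ (h₁ + ((iB : ℕ) : ZMod k)) \ F, Rch n k m F xA yB := by
    intro iA iB hiA1 hiAg hgiB hiBk xA hxA yB hyB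
    have hfh2 : (F ∩ lay n k m him1 u₀ h₂).ncard < k ^ (m - 1) := by
      have h2 := flay2 hk him1 u₀ F hne21.symm
      have hp := (pow_facts hm).2.1
      have hkp := kpow_ge (m := m - 1) hk
      omega
    have hd : (F ∩ lay n k m him1 u₀ (h₂ - 1)).ncard ≤ 1 := by
      refine hgood_rest _ ?_ ?_
      · rw [hgeq]
        intro h
        have : ((g - 1 : ℕ) : ZMod k) = 0 := by
          rw [Nat.cast_sub (by omega)]
          push_cast
          linear_combination h
        rw [cast_eq_zero_iff_val hk (by omega)] at this
        omega
      · intro h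
        have : (1 : ZMod k) = 0 := by linear_combination -h
        exact z10 hk this
    have hu : (F ∩ lay n k m him1 u₀ (h₂ + 1)).ncard ≤ 1 := by
      refine hgood_rest _ ?_ ?_
      · rw [hgeq]
        intro h
        have : ((g + 1 : ℕ) : ZMod k) = 0 := by
          push_cast
          linear_combination h
        rw [cast_eq_zero_iff_val hk (by omega)] at this
        omega
      · intro h
        have : (1 : ZMod k) = 0 := by linear_combination h
        exact z10 hk this
    obtain ⟨w, hw, xd, hxd, xu, hxu, hadjd, hadju⟩ :=
      crossA hk hm hmn him1 u₀ F h₂ hfh2 hd hu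
    have hd_eq : h₂ - 1 = h₁ + ((g - 1 : ℕ) : ZMod k) := by
      rw [hgeq, Nat.cast_sub (by omega)]
      push_cast
      ring
    have hu_eq : h₂ + 1 = h₁ + ((g + 1 : ℕ) : ZMod k) := by
      rw [hgeq]
      push_cast
      ring
    rw [hd_eq] at hxd
    rw [hu_eq] at hxu
    have hr1 : Rch n k m F xA xd :=
      chain_between hk hm hmn him1 hconn (show iA ≤ g - 1 by omega)
        (fun s hs1 hs2 => hgood_off s (by omega) (by omega) (by omega)) hxA hxd
    have hr2 : Rch n k m F xu yB :=
      chain_between hk hm hmn him1 hconn (show g + 1 ≤ iB by omega)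
        (fun s hs1 hs2 => hgood_off s (by omega) (by omega) (by omega)) hxu hyB
    exact rch_trans (rch_trans (rch_trans hr1 (rch_step hxd.2 hw.2 hadjd))
      (rch_step hw.2 hxu.2 hadju)) hr2
  rcases Nat.lt_or_ge i g with hilo | hihi
  · rcases Nat.lt_or_ge j g with hjlo | hjhi
    · -- both on the low arc
      rcases le_total i j with hij | hij
      · exact chain_between hk hm hmn him1 hconn hij
          (fun s hs1 hs2 => hgood_off s (by omega) (by omega) (by omega)) hx hy
      · exact rch_symm (chain_between hk hm hmn him1 hconn hij
          (fun s hs1 hs2 => hgood_off s (by omega) (by omega) (by omega)) hy hx)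
    · -- i low, j high
      exact hmixed i j hi1 hilo (by omega) hjk x hx y hy
  · rcases Nat.lt_or_ge j g with hjlo | hjhi
    · -- j low, i high
      exact rch_symm (hmixed j i hj1 hjlo (by omega) hik y hy x hx)
    · -- both high
      rcases le_total i j with hij | hij
      · exact chain_between hk hm hmn him1 hconn hij
          (fun s hs1 hs2 => hgood_off s (by omega) (by omega) (by omega)) hx hy
      · exact rch_symm (chain_between hk hm hmn him1 hconn hij
          (fun s hs1 hs2 => hgood_off s (by omega) (by omega) (by omega)) hy hx)

end GoodConn
section Core

variable {n k : ℕ}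

lemma z30 {k : ℕ} (hk : 4 ≤ k) : (1 + 1 + 1 : ZMod k) ≠ 0 := by
  have := zmod_intCast_ne hk (a := 3) (b := 0) (by norm_num) (by norm_num)
  push_cast at this
  intro h; exact this (by linear_combination h)

/-- The heart of the induction step: if every vertex in a light layer belongs to `T`,
then `S` cannot have ≥ 2 vertices. -/
lemma split_core (hk : 4 ≤ k) {m : ℕ} (hm : 2 ≤ m) (hmn : m ≤ n) (him1 : m - 1 < n)
    (IHs : SplitP n k (m - 1)) (IHc : ConnP n k (m - 1))
    (u₀ : V n k) (F S T : Set (V n k))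
    (hST : S ∪ T = blk n k m u₀ \ F) (hdisj : Disjoint S T)
    (hno : ∀ s ∈ S, ∀ t ∈ T, ¬ (Gr n k m).Adj s t)
    (hF : (F ∩ blk n k m u₀).ncard ≤ 8 * m - 11)
    (hS2 : 1 < S.ncard)
    (hwT : ∀ c : ZMod k, (F ∩ lay n k m him1 u₀ c).ncard ≤ 4 * m - 7 →
      ∀ x ∈ lay n k m him1 u₀ c \ F, x ∈ T) : False := by
  haveI : NeZero k := ⟨by omega⟩
  have hSblk : S ⊆ blk n k m u₀ \ F := by
    intro x hx
    rw [← hST]; exact Or.inl hx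
  -- membership of S-vertices in their layers
  have hSlay : ∀ x ∈ S, x ∈ lay n k m him1 u₀ (x ⟨m - 1, him1⟩) \ F :=
    fun x hx => ⟨⟨(hSblk hx).1, rfl⟩, (hSblk hx).2⟩
  -- S-vertices live in heavy layers
  have hSheavy : ∀ x ∈ S, 4 * m - 6 ≤ (F ∩ lay n k m him1 u₀ (x ⟨m - 1, him1⟩)).ncard := by
    intro x hx
    by_contra hlight
    have hgood : (F ∩ lay n k m him1 u₀ (x ⟨m - 1, him1⟩)).ncard ≤ 4 * m - 7 := by omega
    exact Set.disjoint_left.mp hdisj hx (hwT _ hgood x (hSlay x hx))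
  -- neighbours of S-vertices are in S or F
  have hSnbr : ∀ x ∈ S, ∀ z, (Gr n k m).Adj x z → z ∈ S ∨ z ∈ F := by
    intro x hx z hadj
    by_contra hcon
    push_neg at hcon
    have hz : z ∈ S ∪ T := by
      rw [hST]
      exact ⟨blk_of_adj (hSblk hx).1 hadj, hcon.2⟩
    rcases hz with h | h
    · exact hcon.1 h
    · exact hno x hx z h hadj
  -- case |S| = 2: use the pair boundary lemma
  rcases eq_or_lt_of_le (Nat.succ_le_of_lt hS2) with hSpair | hS3
  · obtain ⟨a, b, hab, hSab⟩ := Set.ncard_eq_two.mp hSpair.symm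
    have haS : a ∈ S := by rw [hSab]; exact Or.inl rfl
    have hbS : b ∈ S := by rw [hSab]; exact Or.inr rfl
    have hbound : (nbr n k m a ∪ nbr n k m b) \ {a, b} ⊆ F ∩ blk n k m u₀ := by
      rintro z ⟨hz1, hz2⟩
      simp only [Set.mem_insert_iff, Set.mem_singleton_iff] at hz2
      push_neg at hz2
      rcases hz1 with h | h
      · rcases hSnbr a haS z h with hs | hf
        · exfalso
          rw [hSab] at hs
          rcases hs with rfl | rfl
          · exact hz2.1 rfl
          · exact hz2.2 rfl
        · exact ⟨hf, nbr_sub_blk (hSblk haS).1 h⟩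
      · rcases hSnbr b hbS z h with hs | hf
        · exfalso
          rw [hSab] at hs
          rcases hs with rfl | rfl
          · exact hz2.1 rfl
          · exact hz2.2 rfl
        · exact ⟨hf, nbr_sub_blk (hSblk hbS).1 h⟩
    have h1 := Set.ncard_le_ncard hbound (Set.toFinite _)
    have h2 := pair_boundary hk (show 1 ≤ m by omega) hmn hab
    omega
  -- now |S| ≥ 3
  obtain ⟨x₀, hx₀⟩ : S.Nonempty := by
    rw [← Set.ncard_pos (Set.toFinite _)]; omega
  set c₀ : ZMod k := x₀ ⟨m - 1, him1⟩ with hc₀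
  obtain ⟨hehi, hetop, hdhi, hdtop⟩ := ev_top_facts (k := k) hm hmn him1
  set e : V n k := ev n k ⟨m - 1, him1⟩ with he
  set d : V n k := pre n k m with hd
  have hps : d = pre n k (m - 1) + e := by
    have h1 := pre_succ_eq (k := k) him1
    have h2 : m - 1 + 1 = m := by omega
    rw [h2] at h1
    exact h1
  set δ : V n k := pre n k (m - 1) with hδ
  have hδ0 : δ ⟨0, by omega⟩ = 1 := pre_lt (by simp; omega)
  -- generic: cross-neighbour of an S-vertex in a layer containing no S-vertices is a fault
  have hcross : ∀ x ∈ S, ∀ w : V n k, (∀ j : Fin n, m ≤ (j : ℕ) → w j = 0) →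
      (w ∈ Mv n k m) → (x + w) ⟨m - 1, him1⟩ ∉ (fun z => z ⟨m - 1, him1⟩) '' S →
      x + w ∈ F := by
    intro x hx w hwhi hwmv hwlay
    rcases hSnbr x hx (x + w) (adj_add_mv hk hmn hwmv x) with h | h
    · exact absurd ⟨x + w, h, rfl⟩ hwlay
    · exact h
  by_cases hSone : ∀ x ∈ S, x ⟨m - 1, him1⟩ = c₀
  · -- S is inside the single layer c₀
    have hSlay0 : S ⊆ lay n k m him1 u₀ c₀ \ F := by
      intro x hx
      have := hSlay x hx
      rwa [hSone x hx] at this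
    have hlayimg : (fun z => z ⟨m - 1, him1⟩) '' S ⊆ {c₀} := by
      rintro z ⟨x, hx, rfl⟩
      exact hSone x hx
    -- the up cross sets
    have hU : (fun z => z + e) '' (S ∪ (fun z => z + δ) '' S) ⊆
        F ∩ lay n k m him1 u₀ (c₀ + 1) := by
      rintro z ⟨w, hw, rfl⟩
      dsimp only
      have hne1 : c₀ + 1 ≠ c₀ := fun hcon => z10 hk (by linear_combination hcon)
      rcases hw with hw | ⟨v, hv, rfl⟩
      · refine ⟨?_, ?_⟩
        · refine hcross w hw e hehi (ev_mem_Mv (by simp; omega)) ?_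
          intro hmem
          have := hlayimg hmem
          simp only [Set.mem_singleton_iff] at this
          rw [Pi.add_apply, hetop, hSone w hw] at this
          exact hne1 this
        · have := lay_shift him1 (hSlay0 hw).1 hehi
          rwa [hetop] at this
      · have heq : v + δ + e = v + d := by rw [hps]; ring
        rw [heq]
        refine ⟨?_, ?_⟩
        · refine hcross v hv d hdhi (pre_mem_Mv hm) ?_
          intro hmem
          have := hlayimg hmem
          simp only [Set.mem_singleton_iff] at this
          rw [Pi.add_apply, hdtop, hSone v hv] at this
          exact hne1 this
        · have := lay_shift him1 (hSlay0 hv).1 hdhi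
          rwa [hdtop] at this
    -- the down cross sets
    have hD : (fun z => z + (-e)) '' (S ∪ (fun z => z + (-δ)) '' S) ⊆
        F ∩ lay n k m him1 u₀ (c₀ - 1) := by
      rintro z ⟨w, hw, rfl⟩
      dsimp only
      have hne1 : c₀ - 1 ≠ c₀ := fun hcon => z10 hk (by linear_combination -hcon)
      have hnehi : ∀ j : Fin n, m ≤ (j : ℕ) → (-e) j = 0 := by
        intro j hj; rw [Pi.neg_apply, hehi j hj, neg_zero]
      have hndhi : ∀ j : Fin n, m ≤ (j : ℕ) → (-d) j = 0 := by
        intro j hj; rw [Pi.neg_apply, hdhi j hj, neg_zero]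
      rcases hw with hw | ⟨v, hv, rfl⟩
      · refine ⟨?_, ?_⟩
        · refine hcross w hw (-e) hnehi (Mv_neg (ev_mem_Mv (by simp; omega))) ?_
          intro hmem
          have := hlayimg hmem
          simp only [Set.mem_singleton_iff] at this
          rw [Pi.add_apply, Pi.neg_apply, hetop, hSone w hw] at this
          exact hne1 (by linear_combination this)
        · have := lay_shift him1 (hSlay0 hw).1 hnehi
          rw [Pi.neg_apply, hetop] at this
          rwa [show c₀ + -1 = c₀ - 1 from by ring] at this
      · have heq : v + -δ + -e = v + (-d) := by rw [hps]; ring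
        rw [heq]
        refine ⟨?_, ?_⟩
        · refine hcross v hv (-d) hndhi (Mv_neg (pre_mem_Mv hm)) ?_
          intro hmem
          have := hlayimg hmem
          simp only [Set.mem_singleton_iff] at this
          rw [Pi.add_apply, Pi.neg_apply, hdtop, hSone v hv] at this
          exact hne1 (by linear_combination this)
        · have := lay_shift him1 (hSlay0 hv).1 hndhi
          rw [Pi.neg_apply, hdtop] at this
          rwa [show c₀ + -1 = c₀ - 1 from by ring] at this
    -- cardinalities of the cross sets
    have hUcard : (S ∪ (fun z => z + δ) '' S).ncard ≤
        ((fun z => z + e) '' (S ∪ (fun z => z + δ) '' S)).ncard := by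
      rw [ncard_translate]
    have hDcard : (S ∪ (fun z => z + (-δ)) '' S).ncard ≤
        ((fun z => z + (-e)) '' (S ∪ (fun z => z + (-δ)) '' S)).ncard := by
      rw [ncard_translate]
    have hgrow : ∀ ξ : V n k, (ξ ⟨0, by omega⟩ = 1 ∨ ξ ⟨0, by omega⟩ = -1) →
        4 ≤ (S ∪ (fun z => z + ξ) '' S).ncard ∧ S.ncard ≤ (S ∪ (fun z => z + ξ) '' S).ncard := by
      intro ξ hξ
      have hsub : S ⊆ S ∪ (fun z => z + ξ) '' S := Set.subset_union_left
      have hmono := Set.ncard_le_ncard hsub (Set.toFinite _)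
      rcases translate_grow ξ S with hinv | hgt
      · have := invariant_big hk hξ ⟨x₀, hx₀⟩ hinv
        exact ⟨by omega, hmono⟩
      · exact ⟨by omega, hmono⟩
    have hgrow1 := hgrow δ (Or.inl hδ0)
    have hgrow2 := hgrow (-δ) (Or.inr (by rw [Pi.neg_apply, hδ0]))
    -- three disjoint fault sets
    have hdisj3 := ncard_three_disj_le (S := F ∩ blk n k m u₀)
      (A := F ∩ lay n k m him1 u₀ c₀)
      (B := (fun z => z + e) '' (S ∪ (fun z => z + δ) '' S))
      (C := (fun z => z + (-e)) '' (S ∪ (fun z => z + (-δ)) '' S))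
      (Set.inter_subset_inter_right F (lay_sub him1 u₀ c₀))
      (fun z hz => ⟨(hU hz).1, lay_sub him1 u₀ _ (hU hz).2⟩)
      (fun z hz => ⟨(hD hz).1, lay_sub him1 u₀ _ (hD hz).2⟩)
      (Set.disjoint_of_subset Set.inter_subset_right (fun z hz => (hU hz).2)
        (lay_disjoint him1 u₀ (fun hcon => z10 hk (by linear_combination -hcon))))
      (Set.disjoint_of_subset Set.inter_subset_right (fun z hz => (hD hz).2)
        (lay_disjoint him1 u₀ (fun hcon => z10 hk (by linear_combination hcon))))
      (Set.disjoint_of_subset (fun z hz => (hU hz).2) (fun z hz => (hD hz).2)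
        (lay_disjoint him1 u₀ (fun hcon => z20 hk (by linear_combination hcon))))
    rcases Nat.lt_or_ge (F ∩ lay n k m him1 u₀ c₀).ncard (8 * m - 18) with hflow | hfhigh
    · -- few faults in the layer: use the induction hypothesis inside the layer
      set Y : Set (V n k) := (lay n k m him1 u₀ c₀ \ F) \ S with hY
      have hx₀lay : x₀ ∈ lay n k m him1 u₀ c₀ := (hSlay0 hx₀).1
      have hlayeq := lay_eq_blk (show 1 ≤ m by omega) him1 u₀ c₀ hx₀lay
      have hSsub' : S ⊆ lay n k m him1 u₀ c₀ \ F := hSlay0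
      have hSY : S ∪ Y = blk n k (m - 1) x₀ \ F := by
        rw [hY, Set.union_diff_cancel hSsub', ← hlayeq]
      have hdisjY : Disjoint S Y := disjoint_sdiff_self_right
      have hnoY : ∀ s ∈ S, ∀ t ∈ Y, ¬ (Gr n k (m - 1)).Adj s t := by
        intro s hs t ht hadj
        rcases hSnbr s hs t (gr_mono (by omega) hadj) with h | h
        · exact ht.2 h
        · exact ht.1.2 h
      have hFY : (F ∩ blk n k (m - 1) x₀).ncard ≤ 8 * (m - 1) - 11 := by
        rw [← hlayeq]
        have : (F ∩ lay n k m him1 u₀ c₀).ncard ≤ 8 * (m - 1) - 11 := by omega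
        exact this
      rcases IHs x₀ F S Y hSY hdisjY hnoY hFY with h | h
      · omega
      · -- Y has ≤ 1 vertex, so S fills almost all of the layer
        have hpart : S.ncard + Y.ncard = (lay n k m him1 u₀ c₀ \ F).ncard := by
          rw [← Set.ncard_union_eq hdisjY (Set.toFinite _) (Set.toFinite _),
            Set.union_diff_cancel hSsub']
        have hlaycard := lay_nonfault_card hk (show 1 ≤ m by omega) hmn him1 u₀ F c₀
        have hkp := kpow_ge (m := m - 1) hk
        have hpf := (pow_facts hm).2.2.2.1
        omega
    · -- many faults in the layer c₀ itself
      have hkk : 4 ≤ k := hk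
      omega
  · -- S meets two distinct (heavy) layers
    push_neg at hSone
    obtain ⟨x₁, hx₁S, hx₁ne⟩ := hSone
    set c₁ : ZMod k := x₁ ⟨m - 1, him1⟩ with hc₁
    have hc01 : c₁ ≠ c₀ := hx₁ne
    have hheavy0 : 4 * m - 6 ≤ (F ∩ lay n k m him1 u₀ c₀).ncard := hSheavy x₀ hx₀
    have hheavy1 : 4 * m - 6 ≤ (F ∩ lay n k m him1 u₀ c₁).ncard := hSheavy x₁ hx₁S
    have hSin : ∀ x ∈ S, x ⟨m - 1, him1⟩ = c₀ ∨ x ⟨m - 1, him1⟩ = c₁ := by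
      intro x hx
      by_contra hcon
      push_neg at hcon
      have h3 := flay3 hk him1 u₀ F (Ne.symm hc01) (Ne.symm hcon.1) (Ne.symm hcon.2)
      have := hSheavy x hx
      omega
    have hcross2 : ∀ x ∈ S, ∀ w : V n k, (∀ j : Fin n, m ≤ (j : ℕ) → w j = 0) →
        (w ∈ Mv n k m) → (x + w) ⟨m - 1, him1⟩ ≠ c₀ → (x + w) ⟨m - 1, him1⟩ ≠ c₁ →
        x + w ∈ F := by
      intro x hx w hwhi hwmv hw0 hw1
      rcases hSnbr x hx (x + w) (adj_add_mv hk hmn hwmv x) with h | h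
      · rcases hSin _ h with hcon | hcon
        · exact absurd hcon hw0
        · exact absurd hcon hw1
      · exact h
    have hnehi : ∀ j : Fin n, m ≤ (j : ℕ) → (-e) j = 0 := by
      intro j hj; rw [Pi.neg_apply, hehi j hj, neg_zero]
    have hemem : e ∈ Mv n k m := ev_mem_Mv (by simp; omega)
    have hld : ∀ (A B : Set (V n k)) (cA cB : ZMod k), A ⊆ lay n k m him1 u₀ cA →
        B ⊆ lay n k m him1 u₀ cB → cA ≠ cB → Disjoint A B :=
      fun A B cA cB hA hB hne => Set.disjoint_of_subset hA hB (lay_disjoint him1 u₀ hne)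
    have hcount : ∀ (z₁ z₂ : V n k) (d₁ d₂ : ZMod k), z₁ ∈ F → z₁ ∈ lay n k m him1 u₀ d₁ →
        z₂ ∈ F → z₂ ∈ lay n k m him1 u₀ d₂ → d₁ ≠ c₀ → d₁ ≠ c₁ → d₂ ≠ c₀ → d₂ ≠ c₁ →
        d₁ ≠ d₂ → False := by
      intro z₁ z₂ d₁ d₂ hz₁F hz₁l hz₂F hz₂l h10 h11 h20 h21 h12
      have h4 := ncard_four_disj_le (S := F ∩ blk n k m u₀)
        (A := F ∩ lay n k m him1 u₀ c₀) (B := F ∩ lay n k m him1 u₀ c₁)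
        (C := {z₁}) (D := {z₂})
        (Set.inter_subset_inter_right F (lay_sub him1 u₀ c₀))
        (Set.inter_subset_inter_right F (lay_sub him1 u₀ c₁))
        (by rintro z rfl; exact ⟨hz₁F, lay_sub him1 u₀ _ hz₁l⟩)
        (by rintro z rfl; exact ⟨hz₂F, lay_sub him1 u₀ _ hz₂l⟩)
        (hld _ _ _ _ Set.inter_subset_right Set.inter_subset_right (Ne.symm hc01))
        (hld _ _ _ _ Set.inter_subset_right (by rintro z rfl; exact hz₁l) (Ne.symm h10))
        (hld _ _ _ _ Set.inter_subset_right (by rintro z rfl; exact hz₂l) (Ne.symm h20))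
        (hld _ _ _ _ Set.inter_subset_right (by rintro z rfl; exact hz₁l) (Ne.symm h11))
        (hld _ _ _ _ Set.inter_subset_right (by rintro z rfl; exact hz₂l) (Ne.symm h21))
        (hld _ _ _ _ (by rintro z rfl; exact hz₁l) (by rintro z rfl; exact hz₂l) h12)
      rw [Set.ncard_singleton, Set.ncard_singleton] at h4
      omega
    have hupmem : ∀ x ∈ S, ∀ c : ZMod k, x ⟨m - 1, him1⟩ = c →
        x + e ∈ lay n k m him1 u₀ (c + 1) ∧ x + (-e) ∈ lay n k m him1 u₀ (c - 1) := by
      intro x hx c hc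
      constructor
      · have h1 := lay_shift him1 ⟨(hSblk hx).1, hc⟩ hehi
        rwa [hetop] at h1
      · have h1 := lay_shift him1 ⟨(hSblk hx).1, hc⟩ hnehi
        rw [Pi.neg_apply, hetop] at h1
        rwa [show c + -1 = c - 1 from by ring] at h1
    have htop : ∀ x ∈ S, ∀ c : ZMod k, x ⟨m - 1, him1⟩ = c →
        (x + e) ⟨m - 1, him1⟩ = c + 1 ∧ (x + (-e)) ⟨m - 1, him1⟩ = c - 1 := by
      intro x _ c hc
      constructor
      · rw [Pi.add_apply, hetop, hc]
      · rw [Pi.add_apply, Pi.neg_apply, hetop, hc]; ring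
    by_cases hadj1 : c₁ = c₀ + 1
    · -- adjacent with c₀ below: use x₀ - e and x₁ + e
      have ht0 := (htop x₀ hx₀ c₀ rfl).2
      have ht1 := (htop x₁ hx₁S c₁ rfl).1
      have hf1 : x₀ + (-e) ∈ F := by
        refine hcross2 x₀ hx₀ (-e) hnehi (Mv_neg hemem) ?_ ?_
        · rw [ht0]; intro hcon; exact z10 hk (by linear_combination -hcon)
        · rw [ht0, hadj1]; intro hcon; exact z20 hk (by linear_combination -hcon)
      have hf2 : x₁ + e ∈ F := by
        refine hcross2 x₁ hx₁S e hehi hemem ?_ ?_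
        · rw [ht1, hadj1]; intro hcon; exact z20 hk (by linear_combination hcon)
        · rw [ht1]; intro hcon; exact z10 hk (by linear_combination hcon)
      refine hcount (x₀ + (-e)) (x₁ + e) (c₀ - 1) (c₁ + 1) hf1
        ((hupmem x₀ hx₀ c₀ rfl).2) hf2 ((hupmem x₁ hx₁S c₁ rfl).1) ?_ ?_ ?_ ?_ ?_
      · intro hcon; exact z10 hk (by linear_combination -hcon)
      · rw [hadj1]; intro hcon; exact z20 hk (by linear_combination -hcon)
      · rw [hadj1]; intro hcon; exact z20 hk (by linear_combination hcon)
      · intro hcon; exact z10 hk (by linear_combination hcon)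
      · rw [hadj1]; intro hcon; exact z30 hk (by linear_combination -hcon)
    · by_cases hadj2 : c₀ = c₁ + 1
      · -- adjacent with c₁ below: use x₁ - e and x₀ + e
        have ht1 := (htop x₁ hx₁S c₁ rfl).2
        have ht0 := (htop x₀ hx₀ c₀ rfl).1
        have hf1 : x₁ + (-e) ∈ F := by
          refine hcross2 x₁ hx₁S (-e) hnehi (Mv_neg hemem) ?_ ?_
          · rw [ht1, hadj2]; intro hcon; exact z20 hk (by linear_combination -hcon)
          · rw [ht1]; intro hcon; exact z10 hk (by linear_combination -hcon)
        have hf2 : x₀ + e ∈ F := by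
          refine hcross2 x₀ hx₀ e hehi hemem ?_ ?_
          · rw [ht0]; intro hcon; exact z10 hk (by linear_combination hcon)
          · rw [ht0, hadj2]; intro hcon; exact z20 hk (by linear_combination hcon)
        refine hcount (x₁ + (-e)) (x₀ + e) (c₁ - 1) (c₀ + 1) hf1
          ((hupmem x₁ hx₁S c₁ rfl).2) hf2 ((hupmem x₀ hx₀ c₀ rfl).1) ?_ ?_ ?_ ?_ ?_
        · rw [hadj2]; intro hcon; exact z20 hk (by linear_combination -hcon)
        · intro hcon; exact z10 hk (by linear_combination -hcon)
        · intro hcon; exact z10 hk (by linear_combination hcon)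
        · rw [hadj2]; intro hcon; exact z20 hk (by linear_combination hcon)
        · rw [hadj2]; intro hcon; exact z30 hk (by linear_combination -hcon)
      · -- non-adjacent: use x₀ - e and x₀ + e
        have ht0d := (htop x₀ hx₀ c₀ rfl).2
        have ht0u := (htop x₀ hx₀ c₀ rfl).1
        have hc1ne : c₁ ≠ c₀ - 1 := by
          intro hcon; exact hadj2 (by linear_combination -hcon)
        have hc1ne' : c₁ ≠ c₀ + 1 := hadj1
        have hf1 : x₀ + (-e) ∈ F := by
          refine hcross2 x₀ hx₀ (-e) hnehi (Mv_neg hemem) ?_ ?_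
          · rw [ht0d]; intro hcon; exact z10 hk (by linear_combination -hcon)
          · rw [ht0d]; intro hcon; exact hc1ne hcon.symm
        have hf2 : x₀ + e ∈ F := by
          refine hcross2 x₀ hx₀ e hehi hemem ?_ ?_
          · rw [ht0u]; intro hcon; exact z10 hk (by linear_combination hcon)
          · rw [ht0u]; intro hcon; exact hc1ne' hcon.symm
        refine hcount (x₀ + (-e)) (x₀ + e) (c₀ - 1) (c₀ + 1) hf1
          ((hupmem x₀ hx₀ c₀ rfl).2) hf2 ((hupmem x₀ hx₀ c₀ rfl).1) ?_ ?_ ?_ ?_ ?_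
        · intro hcon; exact z10 hk (by linear_combination -hcon)
        · intro hcon; exact hc1ne hcon.symm
        · intro hcon; exact z10 hk (by linear_combination hcon)
        · intro hcon; exact hc1ne' hcon.symm
        · intro hcon; exact z20 hk (by linear_combination -hcon)

end Core
section Assemble

variable {n k : ℕ}

lemma split_step (hk : 4 ≤ k) {m : ℕ} (hm : 2 ≤ m) (hmn : m ≤ n)
    (IHs : SplitP n k (m - 1)) (IHc : ConnP n k (m - 1)) : SplitP n k m := by
  intro u₀ F S T hST hdisj hno hF
  haveI : NeZero k := ⟨by omega⟩
  have him1 : m - 1 < n := by omega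
  by_contra hcon
  push_neg at hcon
  obtain ⟨hS1, hT1⟩ := hcon
  have hconn : ∀ c : ZMod k, (F ∩ lay n k m him1 u₀ c).ncard ≤ 4 * m - 7 →
      ∀ x ∈ lay n k m him1 u₀ c \ F, ∀ y ∈ lay n k m him1 u₀ c \ F, Rch n k m F x y :=
    fun c hc => layconn hk hm hmn him1 IHc hc
  have hcg : ∃ c : ZMod k, (F ∩ lay n k m him1 u₀ c).ncard ≤ 4 * m - 7 := by
    by_contra hbad
    push_neg at hbad
    have h01 : (0 : ZMod k) ≠ 1 := fun h => z10 hk h.symm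
    have h02 : (0 : ZMod k) ≠ 1 + 1 := fun h => z20 hk h.symm
    have h12 : (1 : ZMod k) ≠ 1 + 1 := fun h => z21 hk h.symm
    have h3 := flay3 hk him1 u₀ F h01 h02 h12
    have b0 := hbad 0
    have b1 := hbad 1
    have b2 := hbad (1 + 1)
    omega
  obtain ⟨cg, hcgood⟩ := hcg
  obtain ⟨w₀, hw₀⟩ := lay_nonfault_nonempty hk (by omega) hmn him1 u₀ F cg (by
    have h1 := (pow_facts hm).2.2.1
    have h2 := kpow_ge (m := m - 1) hk
    omega)
  have hw₀ST : w₀ ∈ S ∪ T := by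
    rw [hST]; exact ⟨lay_sub him1 u₀ cg hw₀.1, hw₀.2⟩
  have hST' : T ∪ S = blk n k m u₀ \ F := by rw [Set.union_comm]; exact hST
  have hno' : ∀ t ∈ T, ∀ s ∈ S, ¬ (Gr n k m).Adj t s :=
    fun t ht s hs hadj => hno s hs t ht ((Gr n k m).adj_symm hadj)
  rcases hw₀ST with hwS | hwT
  · exact split_core hk hm hmn him1 IHs IHc u₀ F T S hST' hdisj.symm hno' hF (by omega)
      (fun c hc x hx => rch_side hST hno hwS
        (goodconn hk hm hmn him1 hF hconn hcgood hc hw₀ hx))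
  · exact split_core hk hm hmn him1 IHs IHc u₀ F S T hST hdisj hno hF (by omega)
      (fun c hc x hx => rch_side hST' hno' hwT
        (goodconn hk hm hmn him1 hF hconn hcgood hc hw₀ hx))

lemma split_all (hk : 4 ≤ k) : ∀ m, 1 ≤ m → m ≤ n → SplitP n k m := by
  intro m
  induction m with
  | zero => omega
  | succ p ih =>
    intro h1 hmn
    rcases Nat.eq_zero_or_pos p with rfl | hp
    · exact split_one hk (by omega)
    · have hsp : SplitP n k p := ih hp (by omega)
      have hcp : ConnP n k p := by
        rcases Nat.lt_or_ge p 2 with h2 | h2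
        · have : p = 1 := by omega
          subst this
          exact conn1 hk (by omega)
        · exact conn_of_split hk h2 (by omega) hsp
      exact split_step hk (show 2 ≤ p + 1 by omega) hmn hsp hcp

/-- THE KEY LEMMA: a small fault set in an `m`-block cannot split the
block's non-fault vertices into two edge-free parts of size ≥ 2 each. -/
theorem split {n k : ℕ} (hk : 4 ≤ k) :
    ∀ m, 2 ≤ m → m ≤ n → ∀ (u₀ : V n k) (F S T : Set (V n k)),
    S ∪ T = blk n k m u₀ \ F → Disjoint S T →
    (∀ s ∈ S, ∀ t ∈ T, ¬ (Gr n k m).Adj s t) →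
    (F ∩ blk n k m u₀).ncard ≤ 8 * m - 11 →
    S.ncard ≤ 1 ∨ T.ncard ≤ 1 := by
  intro m hm2 hmn u₀ F S T hST hdisj hno hF
  exact split_all hk m (by omega) hmn u₀ F S T hST hdisj hno hF

end Assemble
lemma four_pow_ge (m : ℕ) : 8 * m + 16 ≤ 4 ^ (m + 2) := by
  induction m with
  | zero => norm_num
  | succ p ih =>
    have h4 : 4 ^ (p + 1 + 2) = 4 * 4 ^ (p + 2) := by ring
    omega

end AQProof
/-- Let `n ≥ 2`, `k ≥ 4` and `F` a vertex set of `AQ_{n,k}` with `|F| ≤ 8n-11`.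
Then `AQ_{n,k} - F` has a connected component with at least `k^n - |F| - 1` vertices. -/
theorem AQ_vertex_fault_large_component (n k : ℕ) (hn : 2 ≤ n) (hk : 4 ≤ k)
    (F : Set (Fin n → ZMod k)) (hF : F.ncard ≤ 8 * n - 11) :
    ∃ C : ((AQ n k).induce Fᶜ).ConnectedComponent,
      k ^ n - F.ncard - 1 ≤ C.supp.ncard := by
  classical
  haveI : NeZero k := ⟨by omega⟩
  have hcardV : Nat.card (Fin n → ZMod k) = k ^ n := by
    simp [Nat.card_eq_fintype_card, ZMod.card]
  have hcompl : F.ncard + (Fᶜ : Set (Fin n → ZMod k)).ncard = k ^ n := by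
    rw [← hcardV]; exact Set.ncard_add_ncard_compl F
  set N := (Fᶜ : Set (Fin n → ZMod k)).ncard with hN
  have hpow : 8 * n ≤ 4 ^ n := by
    have h := AQProof.four_pow_ge (n - 2)
    have h2 : n - 2 + 2 = n := by omega
    rw [h2] at h; omega
  have hkn : 4 ^ n ≤ k ^ n := Nat.pow_le_pow_left hk n
  have hN4 : 4 ≤ N := by omega
  have hne : (Fᶜ : Set (Fin n → ZMod k)).Nonempty := by
    rw [← Set.ncard_pos (Set.toFinite _)]; omega
  haveI hne2 : Nonempty ↥(Fᶜ : Set (Fin n → ZMod k)) := hne.to_subtype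
  haveI : Nonempty ((AQ n k).induce Fᶜ).ConnectedComponent :=
    ⟨((AQ n k).induce Fᶜ).connectedComponentMk (Classical.choice hne2)⟩
  obtain ⟨C, hCmax⟩ := Finite.exists_max
    (fun C : ((AQ n k).induce Fᶜ).ConnectedComponent => C.supp.ncard)
  refine ⟨C, ?_⟩
  by_contra hcon
  push_neg at hcon
  set Sv : Set (Fin n → ZMod k) := Subtype.val '' C.supp with hSv
  have hSvF : Sv ⊆ Fᶜ := by rintro x ⟨y, _, rfl⟩; exact y.2
  have hSvcard : Sv.ncard = C.supp.ncard := Set.ncard_image_of_injective _ Subtype.val_injective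
  have hc2 : Sv.ncard + 2 ≤ N := by omega
  obtain ⟨v₀⟩ : Nonempty (Fin n → ZMod k) := ⟨fun _ => 0⟩
  -- helper: adjacency between non-faulty vertices puts them in the same component
  have hadj_comp : ∀ s t : Fin n → ZMod k, ∀ (hs : s ∈ (Fᶜ : Set (Fin n → ZMod k)))
      (ht : t ∈ (Fᶜ : Set (Fin n → ZMod k))), (AQ n k).Adj s t →
      ((AQ n k).induce Fᶜ).connectedComponentMk ⟨t, ht⟩
        = ((AQ n k).induce Fᶜ).connectedComponentMk ⟨s, hs⟩ := by
    intro s t hs ht hadj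
    have : ((AQ n k).induce Fᶜ).Adj ⟨s, hs⟩ ⟨t, ht⟩ := hadj
    exact SimpleGraph.ConnectedComponent.sound this.symm.reachable
  rcases le_or_gt 2 (Sv.ncard) with hc | hc
  · -- the largest component has ≥ 2 vertices: split it off from the rest
    have hsplit := AQProof.split hk n hn le_rfl v₀ F Sv (Fᶜ \ Sv) ?_ ?_ ?_ ?_
    · have hTcard : ((Fᶜ : Set (Fin n → ZMod k)) \ Sv).ncard = N - Sv.ncard :=
        Set.ncard_diff hSvF (Set.toFinite _)
      rcases hsplit with h1 | h1 <;> omega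
    · rw [AQProof.blk_univ, ← Set.compl_eq_univ_diff]
      exact Set.union_diff_cancel hSvF
    · exact disjoint_sdiff_self_right
    · rintro s hs t ⟨htF, htS⟩ hadj
      rw [← AQProof.AQ_eq] at hadj
      obtain ⟨sy, hsyC, rfl⟩ := hs
      have h1 : ((AQ n k).induce Fᶜ).connectedComponentMk ⟨t, htF⟩ = C := by
        rw [hadj_comp sy.1 t sy.2 htF hadj]
        exact hsyC
      exact htS ⟨⟨t, htF⟩, h1, rfl⟩
    · rw [AQProof.blk_univ]; simpa using hF
  · -- all components are singletons: split off two of them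
    have hall : ∀ D : ((AQ n k).induce Fᶜ).ConnectedComponent, D.supp.ncard ≤ 1 := by
      intro D; have := hCmax D; omega
    obtain ⟨x, hx, y, hy, hxy⟩ := (Set.one_lt_ncard (Set.toFinite _)).mp
      (show 1 < N by omega)
    have hpairF : ({x, y} : Set (Fin n → ZMod k)) ⊆ Fᶜ := by
      rintro z (rfl | rfl) <;> assumption
    have hsplit := AQProof.split hk n hn le_rfl v₀ F {x, y} (Fᶜ \ {x, y}) ?_ ?_ ?_ ?_
    · have hTcard : ((Fᶜ : Set (Fin n → ZMod k)) \ {x, y}).ncard = N - 2 := by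
        rw [Set.ncard_diff hpairF (Set.toFinite _), Set.ncard_pair hxy]
      rw [Set.ncard_pair hxy] at hsplit
      rcases hsplit with h1 | h1 <;> omega
    · rw [AQProof.blk_univ, ← Set.compl_eq_univ_diff]
      exact Set.union_diff_cancel hpairF
    · exact disjoint_sdiff_self_right
    · rintro s hs t ⟨htF, htS⟩ hadj
      rw [← AQProof.AQ_eq] at hadj
      have hsF : s ∈ (Fᶜ : Set (Fin n → ZMod k)) := hpairF hs
      have hst : s ≠ t := by rintro rfl; exact htS hs
      have h2 : 1 < (((AQ n k).induce Fᶜ).connectedComponentMk ⟨s, hsF⟩).supp.ncard := by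
        rw [Set.one_lt_ncard (Set.toFinite _)]
        refine ⟨⟨s, hsF⟩, rfl, ⟨t, htF⟩, hadj_comp s t hsF htF hadj, ?_⟩
        intro h; exact hst (congrArg Subtype.val h)
      have h3 := hall (((AQ n k).induce Fᶜ).connectedComponentMk ⟨s, hsF⟩)
      omega
    · rw [AQProof.blk_univ]; simpa using hF
end

section
/- Let n ≥ 2 and k ≥ 3 be integers and let S be a set of edges of the augmented k-ary n-cube AQ_{n,k} with |S| ≤ 8n−7. Then AQ_{n,k} − S has a connected component H with |V(H)| ≥ k^n − 1. -/
open SimpleGraph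

open Finset

set_option linter.unusedSectionVars false
set_option linter.unusedVariables false
set_option maxHeartbeats 1000000

noncomputable section
open Classical

variable {n k : ℕ}

def ones (n k : ℕ) : Fin n → ZMod k := fun _ => 1

lemma one_ne_zero_zmod (hk : 3 ≤ k) : (1 : ZMod k) ≠ 0 := by
  haveI : Fact (1 < k) := ⟨by omega⟩
  exact one_ne_zero

lemma two_ne_zero_zmod (hk : 3 ≤ k) : (2 : ZMod k) ≠ 0 := by
  haveI : NeZero k := ⟨by omega⟩
  intro h
  have h2 := congrArg ZMod.val h
  rw [show (2 : ZMod k) = ((2:ℕ) : ZMod k) by push_cast; ring] at h2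
  rw [ZMod.val_natCast_of_lt (by omega), ZMod.val_zero] at h2
  omega

lemma self_ne_add_one_zmod (hk : 3 ≤ k) (a : ZMod k) : a + 1 ≠ a := by
  intro h
  exact one_ne_zero_zmod hk (by rwa [add_eq_left] at h)

lemma add_one_ne_sub_one_zmod (hk : 3 ≤ k) (a : ZMod k) : a + 1 ≠ a - 1 := by
  intro h
  apply two_ne_zero_zmod hk
  have : a + 1 - (a - 1) = 0 := by rw [h]; ring
  calc (2 : ZMod k) = a + 1 - (a - 1) := by ring
    _ = 0 := this

lemma snoc_ne_snoc_of_ne {α : Type*} {x y : Fin n → α} (a b : α) (h : x ≠ y) :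
    (Fin.snoc x a : Fin (n+1) → α) ≠ Fin.snoc y b := by
  intro he
  apply h
  funext i
  have := congrFun he i.castSucc
  simpa [Fin.snoc_castSucc] using this

lemma snoc_ne_snoc_of_ne' {α : Type*} (x y : Fin n → α) {a b : α} (h : a ≠ b) :
    (Fin.snoc x a : Fin (n+1) → α) ≠ Fin.snoc y b := by
  intro he
  apply h
  have := congrFun he (Fin.last n)
  simpa [Fin.snoc_last] using this

lemma aq_adj_within_mpr {x y : Fin n → ZMod k} {a : ZMod k}
    (h : (AQ n k).Adj x y) :
    (AQ (n+1) k).Adj (Fin.snoc x a) (Fin.snoc y a) := by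
  change _ ∧ _ at h
  change _ ∧ _
  obtain ⟨hne, h | h⟩ := h
  · refine ⟨snoc_ne_snoc_of_ne _ _ hne, Or.inl ?_⟩
    obtain ⟨i, hi, hj⟩ := h
    refine ⟨i.castSucc, by simpa [Fin.snoc_castSucc] using hi, ?_⟩
    intro j hj'
    rcases Fin.eq_castSucc_or_eq_last j with ⟨j', rfl⟩ | rfl
    · have : j' ≠ i := fun h' => hj' (by rw [h'])
      simpa [Fin.snoc_castSucc] using hj j' this
    · simp [Fin.snoc_last]
  · refine ⟨snoc_ne_snoc_of_ne _ _ hne, Or.inr ?_⟩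
    obtain ⟨i, hi1, hpm, hj⟩ := h
    refine ⟨i.castSucc, by simpa using hi1, ?_, ?_⟩
    · rcases hpm with h | h
      · left
        intro j hj'
        rcases Fin.eq_castSucc_or_eq_last j with ⟨j', rfl⟩ | rfl
        · simpa [Fin.snoc_castSucc] using h j' (by rwa [Fin.castSucc_le_castSucc_iff] at hj')
        · exact absurd hj' (Fin.castSucc_lt_last i).not_ge
      · right
        intro j hj'
        rcases Fin.eq_castSucc_or_eq_last j with ⟨j', rfl⟩ | rfl
        · simpa [Fin.snoc_castSucc] using h j' (by rwa [Fin.castSucc_le_castSucc_iff] at hj')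
        · exact absurd hj' (Fin.castSucc_lt_last i).not_ge
    · intro j hj'
      rcases Fin.eq_castSucc_or_eq_last j with ⟨j', rfl⟩ | rfl
      · simpa [Fin.snoc_castSucc] using hj j' (by rwa [Fin.castSucc_lt_castSucc_iff] at hj')
      · simp [Fin.snoc_last]

lemma aq_adj_cross_id (hk : 3 ≤ k) (x : Fin n → ZMod k) (a : ZMod k) :
    (AQ (n+1) k).Adj (Fin.snoc x a) (Fin.snoc x (a+1)) := by
  change _ ∧ _
  refine ⟨fun h => self_ne_add_one_zmod hk a ?_, Or.inl ?_⟩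
  · have := congrFun h (Fin.last n)
    simpa [Fin.snoc_last] using this.symm
  · refine ⟨Fin.last n, Or.inl (by simp [Fin.snoc_last]), ?_⟩
    intro j hj
    rcases Fin.eq_castSucc_or_eq_last j with ⟨j', rfl⟩ | rfl
    · simp [Fin.snoc_castSucc]
    · exact absurd rfl hj

lemma aq_adj_cross_ones (hk : 3 ≤ k) (hn : 1 ≤ n) (x : Fin n → ZMod k) (a : ZMod k) :
    (AQ (n+1) k).Adj (Fin.snoc x a) (Fin.snoc (x + ones n k) (a+1)) := by
  change _ ∧ _
  refine ⟨fun h => self_ne_add_one_zmod hk a ?_, Or.inr ?_⟩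
  · have := congrFun h (Fin.last n)
    simpa [Fin.snoc_last] using this.symm
  · refine ⟨Fin.last n, by simpa using hn, Or.inl ?_, ?_⟩
    · intro j _
      rcases Fin.eq_castSucc_or_eq_last j with ⟨j', rfl⟩ | rfl
      · simp [Fin.snoc_castSucc, ones, Pi.add_apply]
      · simp [Fin.snoc_last]
    · intro j hj
      exact absurd (Fin.le_last j) hj.not_ge

lemma aq1_adj (hk : 3 ≤ k) (x : Fin 1 → ZMod k) : (AQ 1 k).Adj x (x + ones 1 k) := by
  change _ ∧ _
  refine ⟨fun h => ?_, Or.inl ⟨0, Or.inl (by simp [ones, Pi.add_apply]), ?_⟩⟩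
  · have := congrFun h 0
    simp only [Pi.add_apply, ones] at this
    exact one_ne_zero_zmod hk (by rwa [left_eq_add] at this)
  · intro j hj
    exact absurd (Subsingleton.elim j 0) hj
end


noncomputable section
open Classical

variable {V : Type*} [Fintype V] [DecidableEq V]

/-- ordered boundary pairs -/
def obd (G : SimpleGraph V) (C : Finset V) : Finset (V × V) :=
  Finset.univ.filter (fun p : V × V => p.1 ∈ C ∧ p.2 ∉ C ∧ G.Adj p.1 p.2)

def ordB (G : SimpleGraph V) (C : Finset V) : ℕ := (obd G C).card

lemma mem_obd {G : SimpleGraph V} {C : Finset V} {p : V × V} :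
    p ∈ obd G C ↔ p.1 ∈ C ∧ p.2 ∉ C ∧ G.Adj p.1 p.2 := by
  simp [obd]

lemma ordB_compl (G : SimpleGraph V) (C : Finset V) : ordB G Cᶜ = ordB G C := by
  unfold ordB
  apply Finset.card_bij (fun p _ => (p.2, p.1))
  · rintro ⟨a, b⟩ hp
    rw [mem_obd] at hp ⊢
    simp only [Finset.mem_compl, not_not] at hp
    exact ⟨by simpa using hp.2.1, by simpa using hp.1, hp.2.2.symm⟩
  · rintro ⟨a,b⟩ _ ⟨c,d⟩ _ h
    simp only [Prod.mk.injEq] at h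
    simp [Prod.ext_iff, h.1, h.2]
  · rintro ⟨a, b⟩ hp
    rw [mem_obd] at hp
    refine ⟨(b, a), ?_, rfl⟩
    rw [mem_obd]
    simp only [Finset.mem_compl]
    exact ⟨by simpa using hp.2.1, by simpa using hp.1, hp.2.2.symm⟩

/-- symmetric difference card -/
def sd (A B : Finset V) : ℕ := (A \ B).card + (B \ A).card

lemma sd_comm (A B : Finset V) : sd A B = sd B A := by unfold sd; omega

lemma card_inter_le_left (A B : Finset V) : (A ∩ B).card ≤ A.card :=
  Finset.card_le_card (Finset.inter_subset_left)

lemma sd_ge_dist (A B : Finset V) : Nat.dist A.card B.card ≤ sd A B := by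
  have h1 : A.card ≤ (A \ B).card + B.card := by
    have := Finset.card_le_card (show A ⊆ (A \ B) ∪ B by
      intro x hx; by_cases h : x ∈ B <;> simp [h, hx])
    calc A.card ≤ ((A \ B) ∪ B).card := this
      _ ≤ _ := Finset.card_union_le _ _
  have h2 : B.card ≤ (B \ A).card + A.card := by
    have := Finset.card_le_card (show B ⊆ (B \ A) ∪ A by
      intro x hx; by_cases h : x ∈ A <;> simp [h, hx])
    calc B.card ≤ ((B \ A) ∪ A).card := this
      _ ≤ _ := Finset.card_union_le _ _
  unfold sd
  rcases Nat.le_total A.card B.card with h | h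
  · rw [Nat.dist_eq_sub_of_le h]; omega
  · rw [Nat.dist_eq_sub_of_le_right h]; omega

lemma sd_even (A B : Finset V) (h : A.card % 2 = B.card % 2) : sd A B % 2 = 0 := by
  have h1 : (A \ B).card + (A ∩ B).card = A.card := by
    rw [Finset.card_sdiff_add_card_inter]
  have h2 : (B \ A).card + (B ∩ A).card = B.card := by
    rw [Finset.card_sdiff_add_card_inter]
  have h3 : (A ∩ B).card = (B ∩ A).card := by rw [Finset.inter_comm]
  unfold sd; omega

lemma sd_eq_zero_iff (A B : Finset V) : sd A B = 0 ↔ A = B := by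
  unfold sd
  constructor
  · intro h
    have h1 : A \ B = ∅ := Finset.card_eq_zero.mp (by omega)
    have h2 : B \ A = ∅ := Finset.card_eq_zero.mp (by omega)
    apply Finset.Subset.antisymm
    · intro x hx
      by_contra hb
      exact absurd (Finset.mem_sdiff.mpr ⟨hx, hb⟩) (by simp [h1])
    · intro x hx
      by_contra hb
      exact absurd (Finset.mem_sdiff.mpr ⟨hx, hb⟩) (by simp [h2])
  · rintro rfl; simp
end

noncomputable section
open Classical

lemma dist_le_sum_consec (F : ℕ → ℕ) (i l : ℕ) (h : i ≤ l) :
    Nat.dist (F i) (F l) ≤ ∑ j ∈ Finset.Ico i l, Nat.dist (F j) (F (j+1)) := by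
  induction l with
  | zero => interval_cases i; simp
  | succ m ih =>
    rcases Nat.eq_or_lt_of_le h with rfl | h'
    · simp
    · have hi : i ≤ m := Nat.lt_succ_iff.mp h'
      rw [Finset.sum_Ico_succ_top hi]
      calc Nat.dist (F i) (F (m+1)) ≤ Nat.dist (F i) (F m) + Nat.dist (F m) (F (m+1)) :=
            Nat.dist.triangle_inequality _ _ _
        _ ≤ _ := by have := ih hi; omega

variable {k : ℕ} [NeZero k]

lemma zmod_reindex (f : ZMod k → ℕ) (a₀ : ZMod k) :
    ∑ a : ZMod k, f a = ∑ j ∈ Finset.range k, f (a₀ + (j : ℕ)) := by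
  refine Finset.sum_nbij' (fun (a : ZMod k) => (a - a₀).val) (fun j => a₀ + (j : ℕ)) ?_ ?_ ?_ ?_ ?_
  · intro a _; exact Finset.mem_range.mpr (ZMod.val_lt _)
  · intro j _; exact Finset.mem_univ _
  · intro a _; simp [ZMod.natCast_val, ZMod.cast_id]
  · intro j hj; simp only [Finset.mem_range] at hj
    show ((a₀ + (j : ZMod k)) - a₀).val = j
    rw [add_sub_cancel_left]; exact ZMod.val_natCast_of_lt hj
  · intro a _; rw [ZMod.natCast_val, ZMod.cast_id]; ring_nf

/-- cyclic isoperimetric: sum of consecutive distances ≥ 2 |s a₀ - s a₁| -/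
lemma cyclic_sum_dist (s : ZMod k → ℕ) (a₀ a₁ : ZMod k) :
    2 * (s a₀ - s a₁) ≤ ∑ a : ZMod k, Nat.dist (s a) (s (a+1)) := by
  set F : ℕ → ℕ := fun j => s (a₀ + (j : ℕ)) with hF
  have hsum : ∑ a : ZMod k, Nat.dist (s a) (s (a+1)) = ∑ j ∈ Finset.range k, Nat.dist (F j) (F (j+1)) := by
    rw [zmod_reindex (fun a => Nat.dist (s a) (s (a+1))) a₀]
    apply Finset.sum_congr rfl
    intro j _
    have : a₀ + (j : ℕ) + 1 = a₀ + ((j+1 : ℕ) : ZMod k) := by push_cast; ring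
    simp only [hF, this]
  set m := (a₁ - a₀).val with hm
  have hmlt : m < k := ZMod.val_lt _
  have hFm : F m = s a₁ := by
    simp only [hF, hm, ZMod.natCast_val, ZMod.cast_id]
    congr 1; ring
  have hF0 : F 0 = s a₀ := by simp [hF]
  have hFk : F k = s a₀ := by
    simp only [hF, ZMod.natCast_self, add_zero]
  have h1 : Nat.dist (F 0) (F m) ≤ ∑ j ∈ Finset.Ico 0 m, Nat.dist (F j) (F (j+1)) :=
    dist_le_sum_consec F 0 m (Nat.zero_le _)
  have h2 : Nat.dist (F m) (F k) ≤ ∑ j ∈ Finset.Ico m k, Nat.dist (F j) (F (j+1)) :=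
    dist_le_sum_consec F m k hmlt.le
  have hsplit : ∑ j ∈ Finset.range k, Nat.dist (F j) (F (j+1)) =
      (∑ j ∈ Finset.Ico 0 m, Nat.dist (F j) (F (j+1))) + ∑ j ∈ Finset.Ico m k, Nat.dist (F j) (F (j+1)) := by
    rw [Finset.range_eq_Ico, ← Finset.sum_Ico_consecutive _ (Nat.zero_le m) hmlt.le]
  have d1 : Nat.dist (F 0) (F m) ≥ s a₀ - s a₁ := by rw [hF0, hFm, Nat.dist]; omega
  have d2 : Nat.dist (F m) (F k) ≥ s a₀ - s a₁ := by
    rw [hFk, hFm, Nat.dist]; omega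
  omega

lemma zmod_const {α : Type*} (g : ZMod k → α) (h : ∀ a, g (a + 1) = g a) :
    ∀ a b, g a = g b := by
  have key : ∀ (j : ℕ) (a : ZMod k), g (a + (j : ℕ)) = g a := by
    intro j
    induction j with
    | zero => simp
    | succ m ih => intro a
                   have : a + ((m+1 : ℕ) : ZMod k) = (a + 1) + (m : ℕ) := by push_cast; ring
                   rw [this, ih, h]
  intro a b
  have : g a = g (b + ((a - b).val : ℕ)) := by
    rw [ZMod.natCast_val, ZMod.cast_id]; congr 1; ring
  rw [this, key]
end

noncomputable section
open Classical

variable {n k : ℕ} [NeZero k]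

lemma card_V (n k : ℕ) [NeZero k] : Fintype.card (Fin n → ZMod k) = k ^ n := by
  rw [Fintype.card_fun, ZMod.card, Fintype.card_fin]

def layer (C : Finset (Fin (n+1) → ZMod k)) (a : ZMod k) : Finset (Fin n → ZMod k) :=
  Finset.univ.filter (fun x => Fin.snoc x a ∈ C)

lemma mem_layer {C : Finset (Fin (n+1) → ZMod k)} {a : ZMod k} {x : Fin n → ZMod k} :
    x ∈ layer C a ↔ Fin.snoc x a ∈ C := by simp [layer]

lemma layer_compl (C : Finset (Fin (n+1) → ZMod k)) (a : ZMod k) :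
    layer Cᶜ a = (layer C a)ᶜ := by
  ext x; simp [layer]

lemma snoc_right_injective (a : ZMod k) :
    Function.Injective (fun x : Fin n → ZMod k => (Fin.snoc x a : Fin (n+1) → ZMod k)) := by
  intro x y h
  have := congrArg Fin.init h
  simpa [Fin.init_snoc] using this

lemma card_eq_sum_layer (C : Finset (Fin (n+1) → ZMod k)) :
    C.card = ∑ a : ZMod k, (layer C a).card := by
  rw [Finset.card_eq_sum_card_fiberwise
    (f := fun u : Fin (n+1) → ZMod k => u (Fin.last n)) (t := Finset.univ)
    (fun x _ => Finset.mem_univ _)]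
  apply Finset.sum_congr rfl
  intro a _
  apply Finset.card_nbij' (fun u => Fin.init u) (fun x => Fin.snoc x a)
  · intro u hu
    simp only [Finset.mem_coe, Finset.mem_filter] at hu
    rw [Finset.mem_coe, mem_layer, ← hu.2, Fin.snoc_init_self]
    exact hu.1
  · intro x hx
    rw [Finset.mem_coe, mem_layer] at hx
    simp [hx, Fin.snoc_last]
  · intro u hu
    simp only [Finset.mem_coe, Finset.mem_filter] at hu
    beta_reduce
    rw [← hu.2, Fin.snoc_init_self]
  · intro x _
    simp [Fin.init_snoc]

lemma card_two_images_le {α β : Type*} [DecidableEq β] (A1 A2 : Finset α) (f1 f2 : α → β)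
    (F : Finset β)
    (h1 : ∀ x ∈ A1, f1 x ∈ F) (h2 : ∀ x ∈ A2, f2 x ∈ F)
    (i1 : Set.InjOn f1 A1) (i2 : Set.InjOn f2 A2)
    (hd : ∀ x ∈ A1, ∀ y ∈ A2, f1 x ≠ f2 y) :
    A1.card + A2.card ≤ F.card := by
  have hsub : A1.image f1 ∪ A2.image f2 ⊆ F := by
    intro z hz
    rcases Finset.mem_union.mp hz with hz | hz <;> obtain ⟨x, hx, rfl⟩ := Finset.mem_image.mp hz
    · exact h1 x hx
    · exact h2 x hx
  have hdisj : Disjoint (A1.image f1) (A2.image f2) := by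
    rw [Finset.disjoint_left]
    rintro z hz1 hz2
    obtain ⟨x, hx, rfl⟩ := Finset.mem_image.mp hz1
    obtain ⟨y, hy, he⟩ := Finset.mem_image.mp hz2
    exact hd x hx y hy he.symm
  calc A1.card + A2.card = (A1.image f1).card + (A2.image f2).card := by
        rw [Finset.card_image_of_injOn i1, Finset.card_image_of_injOn i2]
    _ = (A1.image f1 ∪ A2.image f2).card := (Finset.card_union_of_disjoint hdisj).symm
    _ ≤ F.card := Finset.card_le_card hsub

def trl (A : Finset (Fin n → ZMod k)) : Finset (Fin n → ZMod k) := A.image (· + ones n k)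

lemma mem_trl {A : Finset (Fin n → ZMod k)} {y : Fin n → ZMod k} :
    y ∈ trl A ↔ y - ones n k ∈ A := by
  simp only [trl, Finset.mem_image]
  constructor
  · rintro ⟨x, hx, rfl⟩; simpa using hx
  · intro h; exact ⟨y - ones n k, h, by ring⟩

lemma card_trl (A : Finset (Fin n → ZMod k)) : (trl A).card = A.card :=
  Finset.card_image_of_injective _ (add_left_injective _)

lemma master (hk : 3 ≤ k) (hn : 1 ≤ n) (C : Finset (Fin (n+1) → ZMod k)) :
    (∑ a : ZMod k, ordB (AQ n k) (layer C a))
      + ∑ a : ZMod k, (sd (layer C a) (layer C (a+1)) + sd (trl (layer C a)) (layer C (a+1)))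
      ≤ ordB (AQ (n+1) k) C := by
  classical
  set B := obd (AQ (n+1) k) C with hB
  set cls : ((Fin (n+1) → ZMod k) × (Fin (n+1) → ZMod k)) → ZMod k × ZMod k :=
    fun p => (p.1 (Fin.last n), p.2 (Fin.last n)) with hcls
  have htot : ordB (AQ (n+1) k) C = ∑ t : ZMod k × ZMod k, (B.filter (fun p => cls p = t)).card := by
    exact Finset.card_eq_sum_card_fiberwise (fun x _ => Finset.mem_univ _)
  set T1 : Finset (ZMod k × ZMod k) := Finset.univ.image (fun a : ZMod k => (a, a)) with hT1
  set T2 : Finset (ZMod k × ZMod k) := Finset.univ.image (fun a : ZMod k => (a, a+1)) with hT2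
  set T3 : Finset (ZMod k × ZMod k) := Finset.univ.image (fun a : ZMod k => (a+1, a)) with hT3
  have h12 : Disjoint T1 T2 := by
    rw [Finset.disjoint_left]
    rintro ⟨u, v⟩ h1 h2
    simp only [hT1, hT2, Finset.mem_image, Finset.mem_univ, true_and, Prod.mk.injEq] at h1 h2
    obtain ⟨a, rfl, rfl⟩ := h1
    obtain ⟨b, rfl, hb⟩ := h2
    exact self_ne_add_one_zmod hk b hb
  have h13 : Disjoint T1 T3 := by
    rw [Finset.disjoint_left]
    rintro ⟨u, v⟩ h1 h2
    simp only [hT1, hT3, Finset.mem_image, Finset.mem_univ, true_and, Prod.mk.injEq] at h1 h2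
    obtain ⟨a, rfl, rfl⟩ := h1
    obtain ⟨b, hb, rfl⟩ := h2
    exact self_ne_add_one_zmod hk b hb
  have h23 : Disjoint T2 T3 := by
    rw [Finset.disjoint_left]
    rintro ⟨u, v⟩ h1 h2
    simp only [hT2, hT3, Finset.mem_image, Finset.mem_univ, true_and, Prod.mk.injEq] at h1 h2
    obtain ⟨a, rfl, rfl⟩ := h1
    obtain ⟨b, hb, hb2⟩ := h2
    apply two_ne_zero_zmod hk
    calc (2 : ZMod k) = (b + 1 + 1) - b := by ring
      _ = 0 := by rw [hb, hb2]; ring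
  have hsplit : ∑ t ∈ T1 ∪ T2 ∪ T3, (B.filter (fun p => cls p = t)).card
      = (∑ t ∈ T1, (B.filter (fun p => cls p = t)).card)
        + (∑ t ∈ T2, (B.filter (fun p => cls p = t)).card)
        + (∑ t ∈ T3, (B.filter (fun p => cls p = t)).card) := by
    rw [Finset.sum_union (by
      rw [Finset.disjoint_union_left]; exact ⟨h13, h23⟩),
      Finset.sum_union h12]
  have hmain : ∑ t ∈ T1 ∪ T2 ∪ T3, (B.filter (fun p => cls p = t)).card
      ≤ ordB (AQ (n+1) k) C := by
    rw [htot]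
    exact Finset.sum_le_sum_of_subset (Finset.subset_univ _)
  have hinj1 : ∀ a ∈ Finset.univ, ∀ b ∈ Finset.univ,
      ((a : ZMod k), a) = ((b : ZMod k), b) → a = b := by
    intro a _ b _ h; exact (Prod.mk.injEq _ _ _ _ ▸ h : _ ∧ _).1
  have hT1sum : ∑ t ∈ T1, (B.filter (fun p => cls p = t)).card
      = ∑ a : ZMod k, (B.filter (fun p => cls p = (a, a))).card := by
    rw [hT1, Finset.sum_image hinj1]
  have hT2sum : ∑ t ∈ T2, (B.filter (fun p => cls p = t)).card
      = ∑ a : ZMod k, (B.filter (fun p => cls p = (a, a+1))).card := by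
    rw [hT2, Finset.sum_image (by
      intro a _ b _ h; exact (Prod.mk.injEq _ _ _ _ ▸ h : _ ∧ _).1)]
  have hT3sum : ∑ t ∈ T3, (B.filter (fun p => cls p = t)).card
      = ∑ a : ZMod k, (B.filter (fun p => cls p = (a+1, a))).card := by
    rw [hT3, Finset.sum_image (by
      intro a _ b _ h; exact (Prod.mk.injEq _ _ _ _ ▸ h : _ ∧ _).2)]
  have hwithin : ∀ a : ZMod k, ordB (AQ n k) (layer C a)
      ≤ (B.filter (fun p => cls p = (a, a))).card := by
    intro a
    apply Finset.card_le_card_of_injOn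
      (fun q => ((Fin.snoc q.1 a : Fin (n+1) → ZMod k), (Fin.snoc q.2 a : Fin (n+1) → ZMod k)))
    · rintro ⟨x, y⟩ hq
      rw [Finset.mem_coe, mem_obd] at hq
      rw [Finset.mem_coe, Finset.mem_filter]
      constructor
      · rw [hB, mem_obd]
        exact ⟨mem_layer.mp hq.1, fun hc => hq.2.1 (mem_layer.mpr hc), aq_adj_within_mpr hq.2.2⟩
      · simp [hcls, Fin.snoc_last]
    · rintro ⟨x, y⟩ _ ⟨x', y'⟩ _ h
      simp only [Prod.mk.injEq] at h
      have h1 := snoc_right_injective a h.1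
      have h2 := snoc_right_injective a h.2
      simp [Prod.ext_iff, h1, h2]
  have hup : ∀ a : ZMod k,
      (layer C a \ layer C (a+1)).card
        + ((layer C a).filter (fun x => x + ones n k ∉ layer C (a+1))).card
      ≤ (B.filter (fun p => cls p = (a, a+1))).card := by
    intro a
    apply card_two_images_le _ _
      (fun x => ((Fin.snoc x a : Fin (n+1) → ZMod k), (Fin.snoc x (a+1) : Fin (n+1) → ZMod k)))
      (fun x => ((Fin.snoc x a : Fin (n+1) → ZMod k),
        (Fin.snoc (x + ones n k) (a+1) : Fin (n+1) → ZMod k)))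
    · intro x hx
      rw [Finset.mem_sdiff] at hx
      rw [Finset.mem_filter]
      refine ⟨?_, by simp [hcls, Fin.snoc_last]⟩
      rw [hB, mem_obd]
      exact ⟨mem_layer.mp hx.1, fun hc => hx.2 (mem_layer.mpr hc), aq_adj_cross_id hk x a⟩
    · intro x hx
      rw [Finset.mem_filter] at hx
      rw [Finset.mem_filter]
      refine ⟨?_, by simp [hcls, Fin.snoc_last]⟩
      rw [hB, mem_obd]
      exact ⟨mem_layer.mp hx.1, fun hc => hx.2 (mem_layer.mpr hc), aq_adj_cross_ones hk hn x a⟩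
    · intro x _ y _ h
      simp only [Prod.mk.injEq] at h
      exact snoc_right_injective a h.1
    · intro x _ y _ h
      simp only [Prod.mk.injEq] at h
      exact snoc_right_injective a h.1
    · intro x _ y _ h
      simp only [Prod.mk.injEq] at h
      have h1 := snoc_right_injective a h.1
      have h2 := snoc_right_injective (a+1) h.2
      rw [h1] at h2
      have := congrFun h2 (⟨0, by omega⟩ : Fin n)
      simp only [Pi.add_apply, ones] at this
      exact one_ne_zero_zmod hk (by rwa [left_eq_add] at this)
  have hdown : ∀ a : ZMod k,
      (layer C (a+1) \ layer C a).card
        + ((layer C (a+1)).filter (fun y => y - ones n k ∉ layer C a)).card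
      ≤ (B.filter (fun p => cls p = (a+1, a))).card := by
    intro a
    apply card_two_images_le _ _
      (fun y => ((Fin.snoc y (a+1) : Fin (n+1) → ZMod k), (Fin.snoc y a : Fin (n+1) → ZMod k)))
      (fun y => ((Fin.snoc y (a+1) : Fin (n+1) → ZMod k),
        (Fin.snoc (y - ones n k) a : Fin (n+1) → ZMod k)))
    · intro y hy
      rw [Finset.mem_sdiff] at hy
      rw [Finset.mem_filter]
      refine ⟨?_, by simp [hcls, Fin.snoc_last]⟩
      rw [hB, mem_obd]
      exact ⟨mem_layer.mp hy.1, fun hc => hy.2 (mem_layer.mpr hc), (aq_adj_cross_id hk y a).symm⟩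
    · intro y hy
      rw [Finset.mem_filter] at hy
      rw [Finset.mem_filter]
      refine ⟨?_, by simp [hcls, Fin.snoc_last]⟩
      rw [hB, mem_obd]
      refine ⟨mem_layer.mp hy.1, fun hc => hy.2 (mem_layer.mpr hc), ?_⟩
      have h := (aq_adj_cross_ones hk hn (y - ones n k) a).symm
      rwa [show y - ones n k + ones n k = y by ring] at h
    · intro x _ y _ h
      simp only [Prod.mk.injEq] at h
      exact snoc_right_injective (a+1) h.1
    · intro x _ y _ h
      simp only [Prod.mk.injEq] at h
      exact snoc_right_injective (a+1) h.1
    · intro x _ y _ h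
      simp only [Prod.mk.injEq] at h
      have h1 := snoc_right_injective (a+1) h.1
      have h2 := snoc_right_injective a h.2
      rw [h1] at h2
      have h3 := congrFun h2 (⟨0, by omega⟩ : Fin n)
      simp only [Pi.sub_apply, ones] at h3
      apply one_ne_zero_zmod hk
      linear_combination h3
  have htr1 : ∀ a : ZMod k, ((layer C a).filter (fun x => x + ones n k ∉ layer C (a+1))).card
      = (trl (layer C a) \ layer C (a+1)).card := by
    intro a
    have himg : trl (layer C a) \ layer C (a+1)
        = ((layer C a).filter (fun x => x + ones n k ∉ layer C (a+1))).image (· + ones n k) := by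
      ext y
      rw [Finset.mem_sdiff, mem_trl, Finset.mem_image]
      constructor
      · intro hy
        refine ⟨y - ones n k, ?_, by ring⟩
        rw [Finset.mem_filter]
        exact ⟨hy.1, by rw [show y - ones n k + ones n k = y by ring]; exact hy.2⟩
      · rintro ⟨x, hx, rfl⟩
        rw [Finset.mem_filter] at hx
        exact ⟨by rw [show x + ones n k - ones n k = x by ring]; exact hx.1, hx.2⟩
    rw [himg, Finset.card_image_of_injective _ (add_left_injective _)]
  have htr2 : ∀ a : ZMod k, ((layer C (a+1)).filter (fun y => y - ones n k ∉ layer C a)).card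
      = (layer C (a+1) \ trl (layer C a)).card := by
    intro a
    congr 1
    ext y
    rw [Finset.mem_filter, Finset.mem_sdiff, mem_trl]
  calc (∑ a : ZMod k, ordB (AQ n k) (layer C a))
      + ∑ a : ZMod k, (sd (layer C a) (layer C (a+1)) + sd (trl (layer C a)) (layer C (a+1)))
      ≤ (∑ t ∈ T1, (B.filter (fun p => cls p = t)).card)
        + ((∑ t ∈ T2, (B.filter (fun p => cls p = t)).card)
          + (∑ t ∈ T3, (B.filter (fun p => cls p = t)).card)) := by
        gcongr ?_ + ?_
        · rw [hT1sum]
          exact Finset.sum_le_sum (fun a _ => hwithin a)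
        · rw [hT2sum, hT3sum, ← Finset.sum_add_distrib]
          apply Finset.sum_le_sum
          intro a _
          have e1 := htr1 a
          have e2 := htr2 a
          have u1 := hup a
          have u2 := hdown a
          unfold sd
          omega
    _ ≤ ordB (AQ (n+1) k) C := by
          calc _ = ∑ t ∈ T1 ∪ T2 ∪ T3, (B.filter (fun p => cls p = t)).card := by
                rw [hsplit]; ring
            _ ≤ _ := hmain

end

noncomputable section
open Classical

variable {k : ℕ}

lemma arith1 (n : ℕ) (hn : 1 ≤ n) : 4 * n + 2 ≤ 4 * 3 ^ n := by
  induction n with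
  | zero => omega
  | succ m ih =>
    rcases Nat.eq_or_lt_of_le hn with h | h
    · simp [← h]
    · have hm : 1 ≤ m := by omega
      have := ih hm
      have h3 : 3 ^ (m+1) = 3 * 3 ^ m := by ring
      omega

lemma arith2 (n : ℕ) (hn : 2 ≤ n) : 8 * n + 10 ≤ 4 * 3 ^ n := by
  induction n with
  | zero => omega
  | succ m ih =>
    rcases Nat.eq_or_lt_of_le hn with h | h
    · rw [← h]; norm_num
    · have hm : 2 ≤ m := by omega
      have := ih hm
      have h3 : 3 ^ (m+1) = 3 * 3 ^ m := by ring
      omega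

section dim

variable [NeZero k] {n : ℕ}

lemma layer_card_le (C : Finset (Fin (n+1) → ZMod k)) (a : ZMod k) :
    (layer C a).card ≤ k ^ n := by
  calc (layer C a).card ≤ (Finset.univ : Finset (Fin n → ZMod k)).card := Finset.card_le_univ _
    _ = k ^ n := by rw [Finset.card_univ, card_V]

lemma layer_card_eq_top {C : Finset (Fin (n+1) → ZMod k)} {a : ZMod k}
    (h : (layer C a).card = k ^ n) : layer C a = Finset.univ := by
  apply Finset.eq_univ_of_card
  rw [h, card_V]

lemma cross_ge (C : Finset (Fin (n+1) → ZMod k)) (a b : ZMod k) :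
    4 * ((layer C a).card - (layer C b).card)
      ≤ ∑ c : ZMod k, (sd (layer C c) (layer C (c+1)) + sd (trl (layer C c)) (layer C (c+1))) := by
  have h1 := cyclic_sum_dist (fun c => (layer C c).card) a b
  have h2 : ∑ c : ZMod k, 2 * Nat.dist ((layer C c).card) ((layer C (c+1)).card)
      ≤ ∑ c : ZMod k, (sd (layer C c) (layer C (c+1)) + sd (trl (layer C c)) (layer C (c+1))) := by
    apply Finset.sum_le_sum
    intro c _
    have e1 := sd_ge_dist (layer C c) (layer C (c+1))
    have e2 := sd_ge_dist (trl (layer C c)) (layer C (c+1))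
    rw [card_trl] at e2
    omega
  rw [← Finset.mul_sum] at h2
  omega

/-- dim-1: a finset closed under adding ones is trivial -/
lemma dim1_closed_add (C : Finset (Fin 1 → ZMod k)) (h : ∀ x ∈ C, x + ones 1 k ∈ C) :
    C = ∅ ∨ C = Finset.univ := by
  rcases C.eq_empty_or_nonempty with h0 | ⟨x, hx⟩
  · left; exact h0
  · right
    have key : ∀ (j : ℕ), x + ((j : ZMod k)) • ones 1 k ∈ C := by
      intro j
      induction j with
      | zero => simpa using hx
      | succ m ih =>
        have hmem := h _ ih
        have he : x + (((m+1 : ℕ) : ZMod k)) • ones 1 k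
            = x + ((m : ℕ) : ZMod k) • ones 1 k + ones 1 k := by
          push_cast
          module
        rw [he]
        exact hmem
    apply Finset.eq_univ_of_forall
    intro y
    have hy : y = x + (((y 0 - x 0).val : ℕ) : ZMod k) • ones 1 k := by
      funext i
      have h0 : i = 0 := Subsingleton.elim _ _
      subst h0
      simp only [Pi.add_apply, Pi.smul_apply, ones, smul_eq_mul, mul_one]
      rw [ZMod.natCast_val, ZMod.cast_id]
      ring
    rw [hy]
    exact key _

lemma dim1_closed_sub (C : Finset (Fin 1 → ZMod k)) (h : ∀ x ∈ C, x - ones 1 k ∈ C) :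
    C = ∅ ∨ C = Finset.univ := by
  rcases C.eq_empty_or_nonempty with h0 | ⟨x, hx⟩
  · left; exact h0
  · right
    have key : ∀ (j : ℕ), x - ((j : ZMod k)) • ones 1 k ∈ C := by
      intro j
      induction j with
      | zero => simpa using hx
      | succ m ih =>
        have hmem := h _ ih
        have he : x - (((m+1 : ℕ) : ZMod k)) • ones 1 k
            = x - ((m : ℕ) : ZMod k) • ones 1 k - ones 1 k := by
          push_cast
          module
        rw [he]
        exact hmem
    apply Finset.eq_univ_of_forall
    intro y
    have hy : y = x - (((x 0 - y 0).val : ℕ) : ZMod k) • ones 1 k := by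
      funext i
      have h0 : i = 0 := Subsingleton.elim _ _
      subst h0
      simp only [Pi.sub_apply, Pi.smul_apply, ones, smul_eq_mul, mul_one]
      rw [ZMod.natCast_val, ZMod.cast_id]
      ring
    rw [hy]
    exact key _

/-- dim-1 cycle: boundary of a proper nonempty set is at least 2 -/
lemma lam_dim1 (hk : 3 ≤ k) (C : Finset (Fin 1 → ZMod k))
    (h1 : 1 ≤ C.card) (h2 : C.card ≤ k ^ 1 - 1) :
    2 ≤ ordB (AQ 1 k) C := by
  have hk3 : 3 ≤ k ^ 1 := by simpa using hk
  have hCu : C ≠ Finset.univ := by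
    intro h
    rw [h, Finset.card_univ, card_V] at h2
    omega
  have hCe : C ≠ ∅ := by
    intro h
    rw [h] at h1
    simp at h1
  obtain ⟨x, hx, hx1⟩ : ∃ x ∈ C, x + ones 1 k ∉ C := by
    by_contra hno
    push_neg at hno
    rcases dim1_closed_add C hno with h | h
    · exact hCe h
    · exact hCu h
  obtain ⟨y, hy, hy1⟩ : ∃ y ∈ C, y - ones 1 k ∉ C := by
    by_contra hno
    push_neg at hno
    rcases dim1_closed_sub C hno with h | h
    · exact hCe h
    · exact hCu h
  have hp1 : (x, x + ones 1 k) ∈ obd (AQ 1 k) C := by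
    rw [mem_obd]
    exact ⟨hx, hx1, aq1_adj hk x⟩
  have hp2 : (y, y - ones 1 k) ∈ obd (AQ 1 k) C := by
    rw [mem_obd]
    refine ⟨hy, hy1, ?_⟩
    have h := (aq1_adj hk (y - ones 1 k)).symm
    rwa [show y - ones 1 k + ones 1 k = y by ring] at h
  have hne : (x, x + ones 1 k) ≠ (y, y - ones 1 k) := by
    intro h
    rw [Prod.ext_iff] at h
    obtain ⟨he1, he2⟩ := h
    simp only at he1 he2
    rw [he1] at he2
    have := congrFun he2 0
    simp only [Pi.add_apply, Pi.sub_apply, ones] at this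
    apply two_ne_zero_zmod hk
    linear_combination this
  calc 2 = ({(x, x + ones 1 k), (y, y - ones 1 k)} :
        Finset ((Fin 1 → ZMod k) × (Fin 1 → ZMod k))).card := (Finset.card_pair hne).symm
    _ ≤ ordB (AQ 1 k) C := by
        apply Finset.card_le_card
        intro p hp
        rcases Finset.mem_insert.mp hp with rfl | hp
        · exact hp1
        · rw [Finset.mem_singleton] at hp
          subst hp
          exact hp2

end dim
noncomputable section
open Classical

variable {k : ℕ} [NeZero k]

/-- Edge connectivity bound for AQ: boundary of proper nonempty set is ≥ 4n-2. -/
lemma lamA (hk : 3 ≤ k) : ∀ n, 1 ≤ n → ∀ C : Finset (Fin n → ZMod k),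
    1 ≤ C.card → C.card ≤ k ^ n - 1 → 4 * n - 2 ≤ ordB (AQ n k) C := by
  intro n hn
  induction n, hn using Nat.le_induction with
  | base =>
    intro C h1 h2
    have := lam_dim1 hk C h1 h2
    omega
  | succ n hn ih =>
    intro C h1 h2
    have hK1 : 1 ≤ k ^ n := Nat.one_le_pow _ _ (by omega)
    have hKn : k ^ (n+1) = k * k ^ n := by ring
    have hmas := master hk hn C
    have hsum := card_eq_sum_layer C
    by_cases hP : ∃ a : ZMod k, 1 ≤ (layer C a).card ∧ (layer C a).card ≤ k ^ n - 1
    · obtain ⟨a₀, ha₀1, ha₀2⟩ := hP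
      have hw0 : 4 * n - 2 ≤ ordB (AQ n k) (layer C a₀) := ih _ ha₀1 ha₀2
      have hW : 4 * n - 2 ≤ ∑ a : ZMod k, ordB (AQ n k) (layer C a) :=
        le_trans hw0 (Finset.single_le_sum (f := fun a => ordB (AQ n k) (layer C a)) (fun a _ => Nat.zero_le _) (Finset.mem_univ a₀))
      by_cases heq : ∀ a b : ZMod k, (layer C a).card = (layer C b).card
      · have hall : ∀ a ∈ (Finset.univ : Finset (ZMod k)),
            4 * n - 2 ≤ ordB (AQ n k) (layer C a) := by
          intro a _
          apply ih
          · rw [heq a a₀]; exact ha₀1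
          · rw [heq a a₀]; exact ha₀2
        have hWk : k * (4 * n - 2) ≤ ∑ a : ZMod k, ordB (AQ n k) (layer C a) := by
          calc k * (4 * n - 2) = ∑ _a : ZMod k, (4 * n - 2) := by
                rw [Finset.sum_const, Finset.card_univ, ZMod.card, smul_eq_mul]
            _ ≤ _ := Finset.sum_le_sum hall
        have h3k : 3 * (4 * n - 2) ≤ k * (4 * n - 2) := Nat.mul_le_mul_right _ hk
        omega
      · push_neg at heq
        obtain ⟨a, b, hab⟩ := heq
        have c1 := cross_ge C a b
        have c2 := cross_ge C b a
        have : 4 ≤ ∑ c : ZMod k, (sd (layer C c) (layer C (c+1)) + sd (trl (layer C c)) (layer C (c+1))) := by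
          omega
        omega
    · push_neg at hP
      have hdichot : ∀ a : ZMod k, (layer C a).card = 0 ∨ (layer C a).card = k ^ n := by
        intro a
        have h := hP a
        have hle := layer_card_le C a
        omega
      have hex_top : ∃ a : ZMod k, (layer C a).card = k ^ n := by
        by_contra hno
        push_neg at hno
        have hz : ∀ a : ZMod k, (layer C a).card = 0 := by
          intro a
          rcases hdichot a with h | h
          · exact h
          · exact absurd h (hno a)
        have : C.card = 0 := by
          rw [hsum]
          exact Finset.sum_eq_zero (fun a _ => hz a)
        omega
      have hex_bot : ∃ b : ZMod k, (layer C b).card = 0 := by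
        by_contra hno
        push_neg at hno
        have hz : ∀ a : ZMod k, (layer C a).card = k ^ n := by
          intro a
          rcases hdichot a with h | h
          · exact absurd h (hno a)
          · exact h
        have hCc : C.card = k ^ (n+1) := by
          rw [hsum, Finset.sum_congr rfl (fun a _ => hz a), Finset.sum_const,
            Finset.card_univ, ZMod.card, smul_eq_mul, hKn]
        have hkk : 1 ≤ k ^ (n+1) := Nat.one_le_pow _ _ (by omega)
        omega
      obtain ⟨a, ha⟩ := hex_top
      obtain ⟨b, hb⟩ := hex_bot
      have c1 := cross_ge C a b
      rw [ha, hb] at c1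
      have harith := arith1 n hn
      have hpow : 3 ^ n ≤ k ^ n := Nat.pow_le_pow_left hk n
      omega

end
noncomputable section
open Classical

variable {k : ℕ} [NeZero k]

lemma zmod_closed_sub (O : Finset (ZMod k)) (h : ∀ a ∈ O, a - 1 ∈ O) :
    O = ∅ ∨ O = Finset.univ := by
  rcases O.eq_empty_or_nonempty with h0 | ⟨x, hx⟩
  · left; exact h0
  · right
    have key : ∀ (j : ℕ), x - (j : ZMod k) ∈ O := by
      intro j
      induction j with
      | zero => simpa using hx
      | succ m ih =>
        have hmem := h _ ih
        have he : x - ((m+1 : ℕ) : ZMod k) = x - (m : ℕ) - 1 := by push_cast; ring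
        rw [he]
        exact hmem
    apply Finset.eq_univ_of_forall
    intro b
    have hb : b = x - (((x - b).val : ℕ) : ZMod k) := by
      rw [ZMod.natCast_val, ZMod.cast_id]; ring
    rw [hb]
    exact key _

lemma sd_singletons {α : Type*} [DecidableEq α] [Fintype α] {u v : α} (h : u ≠ v) :
    2 ≤ sd ({u} : Finset α) ({v} : Finset α) := by
  have h1 : u ∈ ({u} : Finset α) \ {v} := by
    rw [Finset.mem_sdiff, Finset.mem_singleton, Finset.mem_singleton]
    exact ⟨rfl, h⟩
  have h2 : v ∈ ({v} : Finset α) \ {u} := by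
    rw [Finset.mem_sdiff, Finset.mem_singleton, Finset.mem_singleton]
    exact ⟨rfl, h.symm⟩
  have c1 : 1 ≤ (({u} : Finset α) \ {v}).card := Finset.card_pos.mpr ⟨u, h1⟩
  have c2 : 1 ≤ (({v} : Finset α) \ {u}).card := Finset.card_pos.mpr ⟨v, h2⟩
  unfold sd
  omega

variable {n : ℕ}

lemma ones_ne_zero (hk : 3 ≤ k) (hn : 1 ≤ n) (x : Fin n → ZMod k) :
    x + ones n k ≠ x := by
  intro h
  have := congrFun h (⟨0, by omega⟩ : Fin n)
  simp only [Pi.add_apply, ones] at this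
  exact one_ne_zero_zmod hk (by rwa [add_eq_left] at this)


/-- The singleton-layers case of the restricted edge connectivity bound. -/
lemma singleton_case (hk : 3 ≤ k) (hn : 1 ≤ n) (C : Finset (Fin (n+1) → ZMod k))
    (hone : ∀ a : ZMod k, (layer C a).card ≤ 1) (h2 : 2 ≤ C.card) :
    8 * (n+1) - 6 ≤ ordB (AQ (n+1) k) C := by
  have hK3 : 3 ≤ k ^ n :=
    le_trans (le_trans (by norm_num) (Nat.pow_le_pow_right (by norm_num) hn))
      (Nat.pow_le_pow_left hk n)
  have hmas := master hk hn C
  have hsum := card_eq_sum_layer C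
  set O : Finset (ZMod k) := Finset.univ.filter (fun a => (layer C a).card = 1) with hO
  set t := O.card with ht
  -- C.card = t
  have htC : C.card = t := by
    rw [hsum]
    rw [← Finset.sum_filter_add_sum_filter_not Finset.univ (fun a => (layer C a).card = 1)]
    have hrest : ∑ a ∈ Finset.univ.filter (fun a => ¬ (layer C a).card = 1),
        (layer C a).card = 0 := by
      apply Finset.sum_eq_zero
      intro a ha
      rw [Finset.mem_filter] at ha
      have := hone a
      omega
    have hfirst : ∑ a ∈ O, (layer C a).card = t := by
      rw [ht]
      rw [Finset.card_eq_sum_ones O]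
      apply Finset.sum_congr rfl
      intro a ha
      rw [hO, Finset.mem_filter] at ha
      rw [ha.2]
    rw [hrest, hfirst]
    omega
  -- within bound
  have hW : t * (4 * n - 2) ≤ ∑ a : ZMod k, ordB (AQ n k) (layer C a) := by
    calc t * (4 * n - 2) = ∑ _a ∈ O, (4 * n - 2) := by rw [Finset.sum_const, smul_eq_mul]
      _ ≤ ∑ a ∈ O, ordB (AQ n k) (layer C a) := by
          apply Finset.sum_le_sum
          intro a ha
          rw [hO, Finset.mem_filter] at ha
          exact lamA hk n hn _ (by omega) (by omega)
      _ ≤ ∑ a : ZMod k, ordB (AQ n k) (layer C a) :=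
          Finset.sum_le_sum_of_subset (Finset.subset_univ _)
  -- cross bound
  set Q : Finset (ZMod k) := Finset.univ.filter
    (fun a => (layer C a).card = 1 ∨ (layer C (a+1)).card = 1) with hQ
  have hc : ∀ a ∈ Q, 2 ≤ sd (layer C a) (layer C (a+1)) + sd (trl (layer C a)) (layer C (a+1)) := by
    intro a ha
    rw [hQ, Finset.mem_filter] at ha
    have ha1 := hone a
    have ha2 := hone (a+1)
    by_cases hb : (layer C a).card = 1 ∧ (layer C (a+1)).card = 1
    · obtain ⟨x, hx⟩ := Finset.card_eq_one.mp hb.1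
      obtain ⟨y, hy⟩ := Finset.card_eq_one.mp hb.2
      rw [hx, hy]
      by_cases hxy : y = x
      · subst hxy
        have : trl ({y} : Finset (Fin n → ZMod k)) = {y + ones n k} := by
          rw [trl, Finset.image_singleton]
        rw [this]
        have h1 := sd_singletons (ones_ne_zero hk hn y)
        omega
      · have h1 := sd_singletons (fun h : x = y => hxy h.symm)
        omega
    · -- one of them is 0, the other is 1
      have hd : Nat.dist (layer C a).card ((layer C (a+1)).card) = 1 := by
        rcases ha.2 with h | h <;> rw [Nat.dist] <;> omega
      have e1 := sd_ge_dist (layer C a) (layer C (a+1))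
      have e2 := sd_ge_dist (trl (layer C a)) (layer C (a+1))
      rw [card_trl] at e2
      omega
  have hX : ∀ (QQ : Finset (ZMod k)), QQ ⊆ Q → 2 * QQ.card ≤
      ∑ c : ZMod k, (sd (layer C c) (layer C (c+1)) + sd (trl (layer C c)) (layer C (c+1))) := by
    intro QQ hsub
    calc 2 * QQ.card = ∑ _a ∈ QQ, 2 := by rw [Finset.sum_const, smul_eq_mul]; ring
      _ ≤ ∑ a ∈ QQ, (sd (layer C a) (layer C (a+1)) + sd (trl (layer C a)) (layer C (a+1))) :=
          Finset.sum_le_sum (fun a ha => hc a (hsub ha))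
      _ ≤ _ := Finset.sum_le_sum_of_subset (Finset.subset_univ _)
  have hOQ : O ⊆ Q := by
    intro a ha
    rw [hO, Finset.mem_filter] at ha
    rw [hQ, Finset.mem_filter]
    exact ⟨Finset.mem_univ _, Or.inl ha.2⟩
  by_cases hOu : O = Finset.univ
  · -- t = k
    have htk : t = k := by rw [ht, hOu, Finset.card_univ, ZMod.card]
    have hXk : 2 * k ≤ ∑ c : ZMod k, (sd (layer C c) (layer C (c+1)) + sd (trl (layer C c)) (layer C (c+1))) := by
      have := hX Q (le_refl _)
      have hQk : Q.card = k := by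
        have : O.card ≤ Q.card := Finset.card_le_card hOQ
        have hQu : Q.card ≤ k := by
          calc Q.card ≤ (Finset.univ : Finset (ZMod k)).card := Finset.card_le_univ _
            _ = k := by rw [Finset.card_univ, ZMod.card]
        omega
      omega
    have h3n : 3 * (4 * n - 2) ≤ k * (4 * n - 2) := Nat.mul_le_mul_right _ hk
    rw [htk] at hW
    omega
  · -- O proper: get an extra element of Q
    have hOne : O.Nonempty := by
      rw [← Finset.card_pos, ← ht]; omega
    obtain ⟨astar, hastar, hout⟩ : ∃ a ∈ O, a - 1 ∉ O := by
      by_contra hno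
      push_neg at hno
      rcases zmod_closed_sub O hno with h | h
      · rw [h] at hOne
        exact Finset.not_nonempty_empty hOne
      · exact hOu h
    have hq : astar - 1 ∈ Q := by
      rw [hQ, Finset.mem_filter]
      refine ⟨Finset.mem_univ _, Or.inr ?_⟩
      rw [sub_add_cancel]
      rw [hO, Finset.mem_filter] at hastar
      exact hastar.2
    have hins : insert (astar - 1) O ⊆ Q := by
      rw [Finset.insert_subset_iff]
      exact ⟨hq, hOQ⟩
    have hcard : (insert (astar - 1) O).card = t + 1 := by
      rw [Finset.card_insert_of_notMem hout]
    have hXt := hX _ hins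
    rw [hcard] at hXt
    have ht2 : 2 ≤ t := by omega
    have h2t : 2 * (4 * n - 2) ≤ t * (4 * n - 2) := Nat.mul_le_mul_right _ ht2
    omega

end
noncomputable section
open Classical

variable {k : ℕ} [NeZero k]

lemma sd_trl {n : ℕ} (A B : Finset (Fin n → ZMod k)) : sd (trl A) (trl B) = sd A B := by
  unfold sd trl
  rw [← Finset.image_sdiff _ _ (add_left_injective _), ← Finset.image_sdiff _ _ (add_left_injective _),
    Finset.card_image_of_injective _ (add_left_injective _),
    Finset.card_image_of_injective _ (add_left_injective _)]

lemma trl_fixed (D : Finset (Fin 1 → ZMod k)) (h : trl D = D) :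
    D = ∅ ∨ D = Finset.univ := by
  apply dim1_closed_add
  intro x hx
  rw [← h, trl, Finset.mem_image]
  exact ⟨x, hx, rfl⟩

/-- Base case: restricted edge connectivity of AQ(2,k) is at least 10. -/
lemma lamB_base (hk : 3 ≤ k) (C : Finset (Fin (1+1) → ZMod k))
    (h1 : 2 ≤ C.card) (h2 : C.card ≤ k ^ (1+1) - 2) :
    10 ≤ ordB (AQ (1+1) k) C := by
  have hK1 : 3 ≤ k ^ 1 := by simpa using hk
  have hK2 : 9 ≤ k ^ (1+1) := by
    calc (9:ℕ) = 3 ^ (1+1) := by norm_num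
      _ ≤ k ^ (1+1) := Nat.pow_le_pow_left hk _
  have hmas := master hk (le_refl 1) C
  have hsum := card_eq_sum_layer C
  have hcard_le : ∀ a : ZMod k, (layer C a).card ≤ k ^ 1 := fun a => layer_card_le C a
  by_cases hP : ∃ a : ZMod k, 1 ≤ (layer C a).card ∧ (layer C a).card ≤ k ^ 1 - 1
  · obtain ⟨a₀, ha₀1, ha₀2⟩ := hP
    by_cases hgap : ∃ a b : ZMod k, (layer C b).card + 2 ≤ (layer C a).card
    · -- big gap: cross ≥ 8, within ≥ 2
      obtain ⟨a, b, hab⟩ := hgap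
      have hX := cross_ge C a b
      have hw0 : 2 ≤ ordB (AQ 1 k) (layer C a₀) := lam_dim1 hk _ ha₀1 ha₀2
      have hW : 2 ≤ ∑ a : ZMod k, ordB (AQ 1 k) (layer C a) :=
        le_trans hw0 (Finset.single_le_sum (f := fun a => ordB (AQ 1 k) (layer C a))
          (fun a _ => Nat.zero_le _) (Finset.mem_univ a₀))
      omega
    · push_neg at hgap
      by_cases hm0 : ∃ b : ZMod k, (layer C b).card = 0
      · -- all layers ≤ 1: singleton case
        obtain ⟨b, hb⟩ := hm0
        have hone : ∀ a : ZMod k, (layer C a).card ≤ 1 := by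
          intro a
          have := hgap a b
          omega
        have := singleton_case hk (le_refl 1) C hone h1
        omega
      · push_neg at hm0
        by_cases hmk : ∃ a : ZMod k, (layer C a).card = k ^ 1
        · -- complement is singleton-layered
          obtain ⟨a', ha'⟩ := hmk
          have hbig : ∀ a : ZMod k, k ^ 1 - 1 ≤ (layer C a).card := by
            intro a
            have := hgap a' a
            omega
          have honec : ∀ a : ZMod k, (layer Cᶜ a).card ≤ 1 := by
            intro a
            rw [layer_compl, Finset.card_compl, card_V]
            have := hbig a
            omega
          have h2c : 2 ≤ Cᶜ.card := by
            rw [Finset.card_compl, card_V]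
            omega
          have := singleton_case hk (le_refl 1) Cᶜ honec h2c
          rw [ordB_compl] at this
          omega
        · -- all layers proper
          push_neg at hmk
          have hprop : ∀ a : ZMod k, 1 ≤ (layer C a).card ∧ (layer C a).card ≤ k ^ 1 - 1 := by
            intro a
            have h0 := hm0 a
            have hK := hcard_le a
            have hne := hmk a
            constructor
            · omega
            · omega
          have hW : 2 * k ≤ ∑ a : ZMod k, ordB (AQ 1 k) (layer C a) := by
            calc 2 * k = ∑ _a : ZMod k, 2 := by
                  rw [Finset.sum_const, Finset.card_univ, ZMod.card, smul_eq_mul]; ring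
              _ ≤ _ := Finset.sum_le_sum (fun a _ => lam_dim1 hk _ (hprop a).1 (hprop a).2)
          by_cases hk5 : 5 ≤ k
          · omega
          · -- k = 3 or 4: parity argument on the cross term
            by_cases hgap1 : ∃ a b : ZMod k, (layer C b).card + 1 ≤ (layer C a).card
            · obtain ⟨a, b, hab⟩ := hgap1
              have hX := cross_ge C a b
              omega
            · -- all layer cards equal
              push_neg at hgap1
              have heq : ∀ a b : ZMod k, (layer C a).card = (layer C b).card := by
                intro a b
                have h1 := hgap1 a b
                have h2 := hgap1 b a
                omega
              set X := ∑ c : ZMod k, (sd (layer C c) (layer C (c+1)) + sd (trl (layer C c)) (layer C (c+1))) with hXdef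
              have heven : X % 2 = 0 := by
                rw [hXdef, Finset.sum_nat_mod]
                have : ∀ c : ZMod k, (sd (layer C c) (layer C (c+1)) + sd (trl (layer C c)) (layer C (c+1))) % 2 = 0 := by
                  intro c
                  have e1 : sd (layer C c) (layer C (c+1)) % 2 = 0 :=
                    sd_even _ _ (by rw [heq c (c+1)])
                  have e2 : sd (trl (layer C c)) (layer C (c+1)) % 2 = 0 :=
                    sd_even _ _ (by rw [card_trl, heq c (c+1)])
                  omega
                rw [Finset.sum_congr rfl (fun c _ => this c)]
                simp
              have hne0 : X ≠ 0 := by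
                intro h0
                have hz : ∀ c ∈ (Finset.univ : Finset (ZMod k)),
                    (sd (layer C c) (layer C (c+1)) + sd (trl (layer C c)) (layer C (c+1))) = 0 :=
                  (Finset.sum_eq_zero_iff).mp (hXdef ▸ h0)
                have hz0 := hz a₀ (Finset.mem_univ _)
                have he : trl (layer C a₀) = layer C (a₀+1) := by
                  apply (sd_eq_zero_iff _ _).mp
                  omega
                have hd : layer C a₀ = layer C (a₀+1) := by
                  apply (sd_eq_zero_iff _ _).mp
                  omega
                have hfix : trl (layer C a₀) = layer C a₀ := by rw [he, ← hd]
                rcases trl_fixed _ hfix with h | h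
                · rw [h] at ha₀1
                  simp at ha₀1
                · rw [h, Finset.card_univ, card_V] at ha₀2
                  omega
              have hk34 : k = 3 ∨ k = 4 := by omega
              rcases hk34 with hk3 | hk4
              · -- k = 3 : need X ≥ 4, exclude X = 2
                have hX2 : X ≠ 2 := by
                  intro h2X
                  set d : ZMod k → ℕ := fun a => sd (layer C a) (layer C (a+1)) with hd
                  set e : ZMod k → ℕ := fun a => sd (trl (layer C a)) (layer C (a+1)) with he
                  by_cases hE : ∀ a : ZMod k, e a = 0
                  · -- layers shift: d is constant, 3 ∣ 2
                    have hshift : ∀ a : ZMod k, layer C (a+1) = trl (layer C a) := by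
                      intro a
                      exact ((sd_eq_zero_iff _ _).mp (hE a)).symm
                    have hconst : ∀ a : ZMod k, d (a+1) = d a := by
                      intro a
                      show sd (layer C (a+1)) (layer C (a+1+1)) = sd (layer C a) (layer C (a+1))
                      rw [hshift (a+1), hshift a, sd_trl]
                    have hdc := zmod_const d hconst
                    have hXd : X = ∑ a : ZMod k, d a := by
                      rw [hXdef]
                      apply Finset.sum_congr rfl
                      intro a _
                      have hEa : sd (trl (layer C a)) (layer C (a+1)) = 0 := hE a
                      show sd (layer C a) (layer C (a+1)) + sd (trl (layer C a)) (layer C (a+1))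
                        = sd (layer C a) (layer C (a+1))
                      omega
                    have : ∑ a : ZMod k, d a = k * d 0 := by
                      rw [Finset.sum_congr rfl (fun a _ => hdc a 0), Finset.sum_const,
                        Finset.card_univ, ZMod.card, smul_eq_mul]
                    rw [hXd, this] at h2X
                    have h32 : 3 * d 0 = 2 := by rw [← hk3]; exact h2X
                    omega
                  · push_neg at hE
                    obtain ⟨a₁, ha₁⟩ := hE
                    have hfa : ∀ a : ZMod k, d a + e a ≤ 2 := by
                      intro a
                      calc d a + e a ≤ X := by
                            rw [hXdef]
                            exact Finset.single_le_sum
                              (f := fun a => sd (layer C a) (layer C (a+1)) + sd (trl (layer C a)) (layer C (a+1)))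
                              (fun a _ => Nat.zero_le _) (Finset.mem_univ a)
                        _ = 2 := h2X
                    have hea₁ : e a₁ = 2 := by
                      have : e a₁ % 2 = 0 := sd_even _ _ (by rw [card_trl, heq a₁ (a₁+1)])
                      have := hfa a₁
                      omega
                    have hrest : ∀ a : ZMod k, a ≠ a₁ → d a = 0 ∧ e a = 0 := by
                      intro a ha
                      have hsplit : d a₁ + e a₁ + (d a + e a) ≤ X := by
                        rw [hXdef]
                        have : ({a₁, a} : Finset (ZMod k)) ⊆ Finset.univ := Finset.subset_univ _
                        calc d a₁ + e a₁ + (d a + e a)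
                            = ∑ c ∈ ({a₁, a} : Finset (ZMod k)),
                              (sd (layer C c) (layer C (c+1)) + sd (trl (layer C c)) (layer C (c+1))) := by
                              rw [Finset.sum_insert (by simpa using (Ne.symm ha)), Finset.sum_singleton]
                          _ ≤ _ := Finset.sum_le_sum_of_subset this
                      have := hea₁
                      rw [h2X] at hsplit
                      omega
                    -- all d vanish
                    have hdall : ∀ a : ZMod k, d a = 0 := by
                      intro a
                      by_cases ha : a = a₁
                      · subst ha
                        have := hfa a
                        omega
                      · exact (hrest a ha).1
                    have hlc : ∀ a : ZMod k, layer C (a+1) = layer C a := by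
                      intro a
                      exact ((sd_eq_zero_iff _ _).mp (hdall a)).symm
                    have hLconst := zmod_const (fun a => layer C a) hlc
                    have he2 : e (a₁ + 1) = e a₁ := by
                      have hL1 : layer C (a₁+1) = layer C a₁ := hLconst _ _
                      have hL2 : layer C (a₁+1+1) = layer C (a₁+1) := hLconst _ _
                      show sd (trl (layer C (a₁+1))) (layer C (a₁+1+1))
                        = sd (trl (layer C a₁)) (layer C (a₁+1))
                      rw [hL2, hL1]
                    have hne : a₁ + 1 ≠ a₁ := self_ne_add_one_zmod hk _
                    have := (hrest (a₁+1) hne).2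
                    omega
                omega
              · -- k = 4 : X ≥ 2 suffices
                omega
  · -- no proper layer
    push_neg at hP
    have hdichot : ∀ a : ZMod k, (layer C a).card = 0 ∨ (layer C a).card = k ^ 1 := by
      intro a
      have h := hP a
      have hle := hcard_le a
      omega
    have hex_top : ∃ a : ZMod k, (layer C a).card = k ^ 1 := by
      by_contra hno
      push_neg at hno
      have : C.card = 0 := by
        rw [hsum]
        apply Finset.sum_eq_zero
        intro a _
        rcases hdichot a with h | h
        · exact h
        · exact absurd h (hno a)
      omega
    have hex_bot : ∃ b : ZMod k, (layer C b).card = 0 := by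
      by_contra hno
      push_neg at hno
      have : C.card = k ^ (1+1) := by
        rw [hsum]
        rw [Finset.sum_congr rfl (fun a _ => by
          rcases hdichot a with h | h
          · exact absurd h (hno a)
          · exact h)]
        rw [Finset.sum_const, Finset.card_univ, ZMod.card, smul_eq_mul]
        ring
      omega
    obtain ⟨a, ha⟩ := hex_top
    obtain ⟨b, hb⟩ := hex_bot
    have hX := cross_ge C a b
    rw [ha, hb] at hX
    omega

end
noncomputable section
open Classical

variable {k : ℕ} [NeZero k]

/-- Restricted edge connectivity bound for AQ(n,k), n ≥ 2. -/
lemma lamB (hk : 3 ≤ k) : ∀ n, 2 ≤ n → ∀ C : Finset (Fin n → ZMod k),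
    2 ≤ C.card → C.card ≤ k ^ n - 2 → 8 * n - 6 ≤ ordB (AQ n k) C := by
  intro n hn
  induction n, hn using Nat.le_induction with
  | base =>
    intro C h1 h2
    have := lamB_base hk C h1 h2
    have he : ordB (AQ (1+1) k) C = ordB (AQ 2 k) C := rfl
    omega
  | succ n hn ih =>
    intro C h1 h2
    have hn1 : 1 ≤ n := by omega
    have hK9 : 9 ≤ k ^ n := by
      calc (9:ℕ) = 3 ^ 2 := by norm_num
        _ ≤ 3 ^ n := Nat.pow_le_pow_right (by norm_num) hn
        _ ≤ k ^ n := Nat.pow_le_pow_left hk n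
    have hmas := master hk hn1 C
    have hsum := card_eq_sum_layer C
    have hcard_le : ∀ a : ZMod k, (layer C a).card ≤ k ^ n := fun a => layer_card_le C a
    by_cases hgood : ∃ a : ZMod k, 2 ≤ (layer C a).card ∧ (layer C a).card ≤ k ^ n - 2
    · obtain ⟨a₀, ha₀1, ha₀2⟩ := hgood
      have hw0 : 8 * n - 6 ≤ ordB (AQ n k) (layer C a₀) := ih _ ha₀1 ha₀2
      by_cases hgap2 : ∃ a b : ZMod k, (layer C b).card + 2 ≤ (layer C a).card
      · obtain ⟨a, b, hab⟩ := hgap2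
        have hX := cross_ge C a b
        have hW : 8 * n - 6 ≤ ∑ a : ZMod k, ordB (AQ n k) (layer C a) :=
          le_trans hw0 (Finset.single_le_sum (f := fun a => ordB (AQ n k) (layer C a))
            (fun a _ => Nat.zero_le _) (Finset.mem_univ a₀))
        omega
      · push_neg at hgap2
        have hprop : ∀ a : ZMod k, 1 ≤ (layer C a).card ∧ (layer C a).card ≤ k ^ n - 1 := by
          intro a
          have g1 := hgap2 a a₀
          have g2 := hgap2 a₀ a
          omega
        have herase : ∀ a ∈ Finset.univ.erase a₀, 4 * n - 2 ≤ ordB (AQ n k) (layer C a) := by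
          intro a _
          exact lamA hk n hn1 _ (hprop a).1 (hprop a).2
        have hsum_er : (∑ a ∈ Finset.univ.erase a₀, ordB (AQ n k) (layer C a))
            + ordB (AQ n k) (layer C a₀) = ∑ a : ZMod k, ordB (AQ n k) (layer C a) :=
          Finset.sum_erase_add _ _ (Finset.mem_univ a₀)
        have hcard_er : (Finset.univ.erase a₀).card = k - 1 := by
          rw [Finset.card_erase_of_mem (Finset.mem_univ _), Finset.card_univ, ZMod.card]
        have her : (k - 1) * (4 * n - 2) ≤ ∑ a ∈ Finset.univ.erase a₀, ordB (AQ n k) (layer C a) := by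
          calc (k - 1) * (4 * n - 2) = ∑ _a ∈ Finset.univ.erase a₀, (4 * n - 2) := by
                rw [Finset.sum_const, hcard_er, smul_eq_mul]
            _ ≤ _ := Finset.sum_le_sum herase
        have hmul : 2 * (4 * n - 2) ≤ (k - 1) * (4 * n - 2) :=
          Nat.mul_le_mul_right _ (by omega)
        omega
    · push_neg at hgood
      have hdichot : ∀ a : ZMod k, (layer C a).card ≤ 1 ∨ k ^ n - 1 ≤ (layer C a).card := by
        intro a
        have := hgood a
        have := hcard_le a
        omega
      by_cases hsmall : ∀ a : ZMod k, (layer C a).card ≤ 1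
      · exact singleton_case hk hn1 C hsmall h1
      · push_neg at hsmall
        obtain ⟨astar, hstar⟩ := hsmall
        have hstar' : k ^ n - 1 ≤ (layer C astar).card := by
          rcases hdichot astar with h | h
          · omega
          · exact h
        by_cases hbig : ∀ a : ZMod k, k ^ n - 1 ≤ (layer C a).card
        · have honec : ∀ a : ZMod k, (layer Cᶜ a).card ≤ 1 := by
            intro a
            rw [layer_compl, Finset.card_compl, card_V]
            have := hbig a
            omega
          have h2c : 2 ≤ Cᶜ.card := by
            rw [Finset.card_compl, card_V]
            have hpow : k ^ (n+1) = k * k ^ n := by ring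
            omega
          have := singleton_case hk hn1 Cᶜ honec h2c
          rw [ordB_compl] at this
          exact this
        · push_neg at hbig
          obtain ⟨b, hb⟩ := hbig
          have hb' : (layer C b).card ≤ 1 := by
            rcases hdichot b with h | h
            · exact h
            · omega
          have hX := cross_ge C astar b
          have ha2 := arith2 n hn
          have hpow : 3 ^ n ≤ k ^ n := Nat.pow_le_pow_left hk n
          omega

end
noncomputable section
open Classical

lemma boundary_le_faults {V : Type*} [Fintype V] [DecidableEq V] (G : SimpleGraph V)
    (S : Set (Sym2 V)) (U : Finset V)
    (hcl : ∀ u ∈ U, ∀ v : V, v ∉ U → G.Adj u v → s(u, v) ∈ S) :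
    ordB G U ≤ S.ncard := by
  have hfin : S.Finite := Set.toFinite S
  rw [Set.ncard_eq_toFinset_card _ hfin]
  apply Finset.card_le_card_of_injOn (fun p => s(p.1, p.2))
  · intro p hp
    rw [Finset.mem_coe, mem_obd] at hp
    rw [Finset.mem_coe, Set.Finite.mem_toFinset]
    exact hcl p.1 hp.1 p.2 hp.2.1 hp.2.2
  · rintro ⟨u, v⟩ h1 ⟨u', v'⟩ h2 he
    rw [Finset.mem_coe, mem_obd] at h1 h2
    simp only at he
    rcases Sym2.eq_iff.mp he with ⟨rfl, rfl⟩ | ⟨rfl, rfl⟩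
    · rfl
    · exact absurd h1.1 h2.2.1

end

/-- Let `n ≥ 2`, `k ≥ 3` and `S` an edge set of `AQ_{n,k}` with `|S| ≤ 8n-7`.
Then `AQ_{n,k} - S` has a connected component with at least `k^n - 1` vertices. -/
theorem AQ_edge_fault_large_component (n k : ℕ) (hn : 2 ≤ n) (hk : 3 ≤ k)
    (S : Set (Sym2 (Fin n → ZMod k))) (hSsub : S ⊆ (AQ n k).edgeSet)
    (hS : S.ncard ≤ 8 * n - 7) :
    ∃ H : ((AQ n k).deleteEdges S).ConnectedComponent,
      k ^ n - 1 ≤ H.supp.ncard := by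

  classical
  haveI : NeZero k := ⟨by omega⟩
  set G' := (AQ n k).deleteEdges S with hG'
  haveI : Nonempty G'.ConnectedComponent := ⟨G'.connectedComponentMk (fun _ => 0)⟩
  obtain ⟨H, hHmax⟩ := Finite.exists_max (fun K : G'.ConnectedComponent => K.supp.ncard)
  refine ⟨H, ?_⟩
  have hK9 : 9 ≤ k ^ n := by
    calc (9:ℕ) = 3 ^ 2 := by norm_num
      _ ≤ 3 ^ n := Nat.pow_le_pow_right (by norm_num) hn
      _ ≤ k ^ n := Nat.pow_le_pow_left hk n
  -- complement cardinality identity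
  have hcompl : H.supp.ncard + (H.supp)ᶜ.ncard = k ^ n := by
    rw [Set.ncard_add_ncard_compl, Nat.card_eq_fintype_card, card_V]
  by_cases hU : (H.supp)ᶜ.ncard ≤ 1
  · omega
  · exfalso
    push_neg at hU
    -- support of any component meeting the complement stays in the complement
    have hsupp_sub : ∀ v : Fin n → ZMod k, v ∉ H.supp →
        ∀ w, w ∈ (G'.connectedComponentMk v).supp → w ∉ H.supp := by
      intro v hv w hw hwH
      rw [SimpleGraph.ConnectedComponent.mem_supp_iff] at hw hwH
      apply hv
      rw [SimpleGraph.ConnectedComponent.mem_supp_iff, ← hw, hwH]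
    -- closure of supports under reachability, as a fault bound
    have hfault : ∀ (C : Finset (Fin n → ZMod k)),
        (∀ u ∈ C, ∀ v : (Fin n → ZMod k), G'.Reachable u v → v ∈ C) →
        ordB (AQ n k) C ≤ S.ncard := by
      intro C hcl
      apply boundary_le_faults
      intro u hu v hv hadj
      by_contra hmem
      exact hv (hcl u hu v (SimpleGraph.Adj.reachable (by
        rw [hG', SimpleGraph.deleteEdges_adj]
        exact ⟨hadj, hmem⟩)))
    -- contradiction machinery given a reachability-closed set of the right size
    have hcontra : ∀ (C : Finset (Fin n → ZMod k)),
        (∀ u ∈ C, ∀ v : (Fin n → ZMod k), G'.Reachable u v → v ∈ C) →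
        2 ≤ C.card → C.card ≤ k ^ n - 2 → False := by
      intro C hcl hc1 hc2
      have hlb := lamB hk n hn C hc1 hc2
      have hub := hfault C hcl
      omega
    by_cases hall : ∀ v : (Fin n → ZMod k), v ∉ H.supp →
        (G'.connectedComponentMk v).supp.ncard ≤ 1
    · -- all components outside H are singletons; pick two of them
      obtain ⟨u1, hu1⟩ : ((H.supp)ᶜ).Nonempty := by
        apply Set.nonempty_of_ncard_ne_zero
        omega
      obtain ⟨u2, hu2, hne⟩ : ∃ u2 ∈ (H.supp)ᶜ, u2 ≠ u1 :=
        Set.exists_ne_of_one_lt_ncard hU u1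
      rw [Set.mem_compl_iff] at hu1 hu2
      have hsing : ∀ u : (Fin n → ZMod k), u ∉ H.supp →
          ∀ v, G'.Reachable u v → v = u := by
        intro u hu v hr
        have h1 : u ∈ (G'.connectedComponentMk u).supp := by
          rw [SimpleGraph.ConnectedComponent.mem_supp_iff]
        have h2 : v ∈ (G'.connectedComponentMk u).supp := by
          rw [SimpleGraph.ConnectedComponent.mem_supp_iff]
          exact SimpleGraph.ConnectedComponent.sound hr.symm
        have hle := hall u hu
        exact (Set.ncard_le_one (Set.toFinite _)).mp hle v h2 u h1
      have hcl : ∀ u ∈ ({u1, u2} : Finset (Fin n → ZMod k)),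
          ∀ v : (Fin n → ZMod k), G'.Reachable u v → v ∈ ({u1, u2} : Finset (Fin n → ZMod k)) := by
        intro u hu v hr
        rcases Finset.mem_insert.mp hu with rfl | hu
        · rw [hsing u hu1 v hr]
          exact Finset.mem_insert_self _ _
        · rw [Finset.mem_singleton] at hu
          subst hu
          rw [hsing u hu2 v hr]
          exact Finset.mem_insert_of_mem (Finset.mem_singleton_self _)
      have hcard : ({u1, u2} : Finset (Fin n → ZMod k)).card = 2 := by
        rw [Finset.card_insert_of_notMem (by simpa using hne.symm), Finset.card_singleton]
      exact hcontra _ hcl (by omega) (by omega)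
    · push_neg at hall
      obtain ⟨v, hv, hv2⟩ := hall
      set K := G'.connectedComponentMk v with hK
      set Kfin := (Set.toFinite K.supp).toFinset with hKfin
      have hKcard : Kfin.card = K.supp.ncard :=
        (Set.ncard_eq_toFinset_card _ _).symm
      have hclK : ∀ u ∈ Kfin, ∀ w : (Fin n → ZMod k), G'.Reachable u w → w ∈ Kfin := by
        intro u hu w hr
        rw [hKfin, Set.Finite.mem_toFinset] at hu ⊢
        rw [SimpleGraph.ConnectedComponent.mem_supp_iff] at hu ⊢
        rw [← hu]
        exact (SimpleGraph.ConnectedComponent.sound hr).symm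
      have hKH : K.supp.ncard ≤ H.supp.ncard := hHmax K
      have hKsub : K.supp ⊆ (H.supp)ᶜ := by
        intro w hw
        rw [Set.mem_compl_iff]
        exact hsupp_sub v hv w hw
      have hKle : K.supp.ncard ≤ (H.supp)ᶜ.ncard := Set.ncard_le_ncard hKsub
      exact hcontra Kfin hclK (by omega) (by omega)
end
end
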